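/- arXiv:2502.17471 — 11 statements merged into one kernel-verified Lean document; each statement's English description precedes it below -/
import Mathlib

section
/- If a function f : ℤ² → ℝ takes values in the interval [0,1] and satisfies the discrete mean value property, i.e. f(i,j) = (f(i-1,j) + f(i+1,j) + f(i,j-1) + f(i,j+1))/4 for all (i,j) ∈ ℤ², then f is constant. -/
private lemma mvp_aux_geom_le (n : ℕ) : ∑ k ∈ Finset.range n, (4:ℝ) ^ k ≤ 4 ^ n := by
  induction n with
  | zero => simp
  | succ n ih =>
    rw [Finset.sum_range_succ, pow_succ]
    have : (0:ℝ) < 4 ^ n := by positivity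
    linarith

private lemma shift_le (f : ℤ × ℤ → ℝ)
    (hrange : ∀ p : ℤ × ℤ, f p ∈ Set.Icc (0 : ℝ) 1)
    (hmvp : ∀ i j : ℤ, f (i, j) =
      (f (i - 1, j) + f (i + 1, j) + f (i, j - 1) + f (i, j + 1)) / 4) :
    ∀ p : ℤ × ℤ, f (p.1 + 1, p.2) ≤ f p := by
  set h : ℤ × ℤ → ℝ := fun p => f (p.1 + 1, p.2) - f p with hh
  have hbd : ∀ p, h p ≤ 1 := by
    intro p
    have h1 := (hrange (p.1 + 1, p.2)).2
    have h2 := (hrange p).1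
    simp only [hh]; linarith
  have hne : (Set.range h).Nonempty := Set.range_nonempty h
  have hbdd : BddAbove (Set.range h) := ⟨1, by rintro x ⟨p, rfl⟩; exact hbd p⟩
  set M := sSup (Set.range h) with hM
  have hle : ∀ p, h p ≤ M := fun p => le_csSup hbdd ⟨p, rfl⟩
  have hmvph : ∀ i j : ℤ, h (i, j) =
      (h (i - 1, j) + h (i + 1, j) + h (i, j - 1) + h (i, j + 1)) / 4 := by
    intro i j
    have e1 : (i - 1) + 1 = i := by ring
    simp only [hh, e1]
    have B := hmvp (i + 1) j
    rw [show (i + 1) - 1 = i from by ring] at B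
    have A := hmvp i j
    linarith
  have step : ∀ (a b : ℤ) (e : ℝ), M - e ≤ h (a, b) → M - 4 * e ≤ h (a + 1, b) := by
    intro a b e hp
    clear_value h M
    have E := hmvph a b
    have l1 := hle (a - 1, b)
    have l2 := hle (a, b - 1)
    have l3 := hle (a, b + 1)
    have E4 : h (a + 1, b) = 4 * h (a, b) - h (a - 1, b) - h (a, b - 1) - h (a, b + 1) := by
      linarith
    linarith
  have chain : ∀ (k : ℕ) (a b : ℤ) (e : ℝ), M - e ≤ h (a, b) →
      M - 4 ^ k * e ≤ h (a + k, b) := by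
    intro k
    induction k with
    | zero => intro a b e hp; simpa using hp
    | succ k ih =>
      intro a b e hp
      have hs := step (a + k) b (4 ^ k * e) (ih a b e hp)
      have hpt : (a + ((k : ℤ) + 1), b) = ((a + (k:ℤ)) + 1, b) := by
        rw [Prod.mk.injEq]; constructor <;> ring
      push_cast
      rw [hpt, pow_succ]
      linarith
  have tele : ∀ (n : ℕ) (a b : ℤ),
      f (a + n, b) - f (a, b) = ∑ k ∈ Finset.range n, h (a + k, b) := by
    intro n a b
    induction n with
    | zero => simp
    | succ n ih =>
      rw [Finset.sum_range_succ, ← ih]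
      have hv : h (a + (n:ℤ), b) = f (a + n + 1, b) - f (a + n, b) := by simp [hh]
      rw [hv, show a + ((n:ℕ):ℤ) + 1 = a + (((n+1:ℕ)):ℤ) from by push_cast; ring]
      ring
  intro p
  by_contra hcon
  push_neg at hcon
  have hppos : 0 < h p := by simp only [hh]; linarith
  have hMpos : 0 < M := lt_of_lt_of_le hppos (hle p)
  obtain ⟨n, hn⟩ := exists_nat_ge (3 / M)
  have hnM : 3 ≤ (n : ℝ) * M := by
    rw [div_le_iff₀ hMpos] at hn; linarith
  set e : ℝ := 1 / 4 ^ n with he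
  have hepos : 0 < e := by positivity
  obtain ⟨x, ⟨q, rfl⟩, hq⟩ := exists_lt_of_lt_csSup hne (show M - e < M by linarith)
  have hq' : M - e ≤ h (q.1, q.2) := by
    rw [Prod.mk.eta]; exact hq.le
  have hterm : ∀ k ∈ Finset.range n, M - 4 ^ k * e ≤ h (q.1 + k, q.2) :=
    fun k _ => chain k q.1 q.2 e hq'
  have h1 : ∑ k ∈ Finset.range n, (M - 4 ^ k * e) ≤ ∑ k ∈ Finset.range n, h (q.1 + k, q.2) :=
    Finset.sum_le_sum hterm
  have h2 : ∑ k ∈ Finset.range n, (M - 4 ^ k * e)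
      = (n : ℝ) * M - (∑ k ∈ Finset.range n, (4:ℝ) ^ k) * e := by
    rw [Finset.sum_sub_distrib, Finset.sum_const, Finset.card_range, ← Finset.sum_mul,
      nsmul_eq_mul]
  have h3 : (∑ k ∈ Finset.range n, (4:ℝ) ^ k) * e ≤ 1 := by
    have := mvp_aux_geom_le n
    rw [he]
    rw [mul_one_div, div_le_one (by positivity)]
    linarith
  have h4 : f (q.1 + n, q.2) - f (q.1, q.2) ≤ 1 := by
    have a1 := (hrange (q.1 + n, q.2)).2
    have a2 := (hrange (q.1, q.2)).1
    linarith
  rw [Prod.mk.eta] at h4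
  have h5 := tele n q.1 q.2
  rw [Prod.mk.eta] at h5
  linarith

/-- Problem 1: a function on the integer lattice with values in `[0,1]`
satisfying the discrete mean value property is constant. -/
theorem discrete_mvp_Icc_const (f : ℤ × ℤ → ℝ)
    (hrange : ∀ p : ℤ × ℤ, f p ∈ Set.Icc (0 : ℝ) 1)
    (hmvp : ∀ i j : ℤ, f (i, j) =
      (f (i - 1, j) + f (i + 1, j) + f (i, j - 1) + f (i, j + 1)) / 4) :
    ∀ p q : ℤ × ℤ, f p = f q := by
  -- the reflected function 1 - f satisfies the same hypotheses
  have hrange' : ∀ p : ℤ × ℤ, (fun p => 1 - f p) p ∈ Set.Icc (0:ℝ) 1 := by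
    intro p
    have := hrange p
    simp only [Set.mem_Icc] at this ⊢
    constructor <;> linarith [this.1, this.2]
  have hmvp' : ∀ i j : ℤ, (fun p => 1 - f p) (i, j) =
      ((fun p => 1 - f p) (i - 1, j) + (fun p => 1 - f p) (i + 1, j) +
        (fun p => 1 - f p) (i, j - 1) + (fun p => 1 - f p) (i, j + 1)) / 4 := by
    intro i j
    have := hmvp i j
    simp only
    linarith
  -- swapped function g(i,j) = f(j,i)
  have hrangeS : ∀ p : ℤ × ℤ, (fun p : ℤ × ℤ => f (p.2, p.1)) p ∈ Set.Icc (0:ℝ) 1 :=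
    fun p => hrange (p.2, p.1)
  have hmvpS : ∀ i j : ℤ, (fun p : ℤ × ℤ => f (p.2, p.1)) (i, j) =
      ((fun p : ℤ × ℤ => f (p.2, p.1)) (i - 1, j) + (fun p : ℤ × ℤ => f (p.2, p.1)) (i + 1, j) +
        (fun p : ℤ × ℤ => f (p.2, p.1)) (i, j - 1) +
        (fun p : ℤ × ℤ => f (p.2, p.1)) (i, j + 1)) / 4 := by
    intro i j
    have := hmvp j i
    simp only
    linarith
  have hrangeS' : ∀ p : ℤ × ℤ, (fun p : ℤ × ℤ => 1 - f (p.2, p.1)) p ∈ Set.Icc (0:ℝ) 1 := by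
    intro p
    have := hrange (p.2, p.1)
    simp only [Set.mem_Icc] at this ⊢
    constructor <;> linarith [this.1, this.2]
  have hmvpS' : ∀ i j : ℤ, (fun p : ℤ × ℤ => 1 - f (p.2, p.1)) (i, j) =
      ((fun p : ℤ × ℤ => 1 - f (p.2, p.1)) (i - 1, j) +
        (fun p : ℤ × ℤ => 1 - f (p.2, p.1)) (i + 1, j) +
        (fun p : ℤ × ℤ => 1 - f (p.2, p.1)) (i, j - 1) +
        (fun p : ℤ × ℤ => 1 - f (p.2, p.1)) (i, j + 1)) / 4 := by
    intro i j
    have := hmvp j i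
    simp only
    linarith
  have A := shift_le f hrange hmvp
  have A' := shift_le (fun p => 1 - f p) hrange' hmvp'
  have B := shift_le (fun p : ℤ × ℤ => f (p.2, p.1)) hrangeS hmvpS
  have B' := shift_le (fun p : ℤ × ℤ => 1 - f (p.2, p.1)) hrangeS' hmvpS'
  have hx : ∀ i j : ℤ, f (i + 1, j) = f (i, j) := by
    intro i j
    have a1 := A (i, j)
    have a2 := A' (i, j)
    simp only at a1 a2
    linarith
  have hy : ∀ i j : ℤ, f (i, j + 1) = f (i, j) := by
    intro i j
    have b1 := B (j, i)
    have b2 := B' (j, i)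
    simp only at b1 b2
    linarith
  have key : ∀ i j : ℤ, f (i, j) = f (0, 0) := by
    have col : ∀ j i : ℤ, f (i, j) = f (0, j) := by
      intro j
      intro i
      induction i using Int.induction_on with
      | zero => rfl
      | succ k ih => rw [hx k j]; exact ih
      | pred k ih =>
        have := hx (-(k:ℤ) - 1) j
        rw [show -(k:ℤ) - 1 + 1 = -(k:ℤ) from by ring] at this
        rw [← this]; exact ih
    have row : ∀ j : ℤ, f (0, j) = f (0, 0) := by
      intro j
      induction j using Int.induction_on with
      | zero => rfl
      | succ k ih => rw [hy 0 k]; exact ih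
      | pred k ih =>
        have := hy 0 (-(k:ℤ) - 1)
        rw [show -(k:ℤ) - 1 + 1 = -(k:ℤ) from by ring] at this
        rw [← this]; exact ih
    intro i j
    rw [col j i, row j]
  intro p q
  rw [← Prod.mk.eta (p := p), ← Prod.mk.eta (p := q), key p.1 p.2, key q.1 q.2]
end

section
/- If a function f : ℤ² → ℝ is nonnegative and satisfies the discrete mean value property, i.e. f(i,j) = (f(i-1,j) + f(i+1,j) + f(i,j-1) + f(i,j+1))/4 for all (i,j) ∈ ℤ², then f is constant. -/
open Filter Finset

namespace DMVP

abbrev V : Type := ℤ × ℤ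

/-- probability of hitting `t` within `n` steps of the simple random walk started at `x` -/
noncomputable def u (t : V) : ℕ → V → ℝ
  | 0 => fun x => if x = t then 1 else 0
  | n+1 => fun x => if x = t then 1 else
      (u t n (x + (1,0)) + u t n (x + (-1,0)) + u t n (x + (0,1)) + u t n (x + (0,-1))) / 4

lemma u_nonneg (t : V) : ∀ n x, 0 ≤ u t n x := by
  intro n
  induction n with
  | zero => intro x; simp only [u]; split <;> norm_num
  | succ n ih =>
      intro x; simp only [u]; split
      · norm_num
      · have h1 := ih (x + (1,0)); have h2 := ih (x + (-1,0))
        have h3 := ih (x + (0,1)); have h4 := ih (x + (0,-1))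
        linarith

lemma u_le_one (t : V) : ∀ n x, u t n x ≤ 1 := by
  intro n
  induction n with
  | zero => intro x; simp only [u]; split <;> norm_num
  | succ n ih =>
      intro x; simp only [u]; split
      · norm_num
      · have h1 := ih (x + (1,0)); have h2 := ih (x + (-1,0))
        have h3 := ih (x + (0,1)); have h4 := ih (x + (0,-1))
        linarith

lemma u_self (t : V) (n : ℕ) : u t n t = 1 := by
  cases n <;> simp [u]

lemma u_succ_eq (t : V) (n : ℕ) (x : V) (h : x ≠ t) :
    u t (n+1) x = (u t n (x + (1,0)) + u t n (x + (-1,0)) + u t n (x + (0,1))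
      + u t n (x + (0,-1))) / 4 := by
  simp only [u, if_neg h]

lemma u_succ_le (t : V) : ∀ n x, u t n x ≤ u t (n+1) x := by
  intro n
  induction n with
  | zero =>
      intro x
      by_cases h : x = t
      · simp [u, if_pos h]
      · rw [show u t 0 x = 0 by simp [u, if_neg h]]
        exact u_nonneg t 1 x
  | succ n ih =>
      intro x
      by_cases h : x = t
      · subst h; simp [u_self]
      · rw [u_succ_eq t n x h, u_succ_eq t (n+1) x h]
        have h1 := ih (x + (1,0)); have h2 := ih (x + (-1,0))
        have h3 := ih (x + (0,1)); have h4 := ih (x + (0,-1))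
        linarith

lemma u_mono (t : V) (x : V) : Monotone fun n => u t n x :=
  monotone_nat_of_le_succ fun n => u_succ_le t n x

/-- probability of ever hitting `t` from `x` -/
noncomputable def U (t : V) (x : V) : ℝ := ⨆ n, u t n x

lemma u_bdd (t x : V) : BddAbove (Set.range fun n => u t n x) :=
  ⟨1, by rintro y ⟨n, rfl⟩; exact u_le_one t n x⟩

lemma u_le_U (t x : V) (n : ℕ) : u t n x ≤ U t x := le_ciSup (u_bdd t x) n

lemma U_le_one (t x : V) : U t x ≤ 1 := ciSup_le fun n => u_le_one t n x

lemma U_nonneg (t x : V) : 0 ≤ U t x := le_trans (u_nonneg t 0 x) (u_le_U t x 0)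

lemma U_self (t : V) : U t t = 1 := by
  refine le_antisymm (U_le_one t t) ?_
  simpa [u_self] using u_le_U t t 0

lemma tendsto_u (t x : V) : Tendsto (fun n => u t n x) atTop (nhds (U t x)) :=
  tendsto_atTop_ciSup (u_mono t x) (u_bdd t x)

lemma U_harm (t x : V) (hx : x ≠ t) :
    U t x = (U t (x + (1,0)) + U t (x + (-1,0)) + U t (x + (0,1)) + U t (x + (0,-1))) / 4 := by
  have h1 : Tendsto (fun n => u t (n+1) x) atTop (nhds (U t x)) :=
    (tendsto_u t x).comp (Filter.tendsto_add_atTop_nat 1)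
  have h2 : Tendsto (fun n => (u t n (x + (1,0)) + u t n (x + (-1,0)) + u t n (x + (0,1))
      + u t n (x + (0,-1))) / 4) atTop
      (nhds ((U t (x + (1,0)) + U t (x + (-1,0)) + U t (x + (0,1)) + U t (x + (0,-1))) / 4)) :=
    ((((tendsto_u t _).add (tendsto_u t _)).add (tendsto_u t _)).add (tendsto_u t _)).div_const 4
  have : (fun n => u t (n+1) x) = fun n => (u t n (x + (1,0)) + u t n (x + (-1,0))
      + u t n (x + (0,1)) + u t n (x + (0,-1))) / 4 := by
    funext n; simp only [u, if_neg hx]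
  rw [this] at h1
  exact tendsto_nhds_unique h1 h2

lemma u_translate (t : V) : ∀ n x, u t n x = u 0 n (x - t) := by
  intro n
  induction n with
  | zero =>
      intro x
      have : x - t = 0 ↔ x = t := sub_eq_zero
      simp only [u]
      split <;> split <;> simp_all
  | succ n ih =>
      intro x
      have ht : x - t = 0 ↔ x = t := sub_eq_zero
      simp only [u, ih]
      have e : ∀ d : V, x + d - t = x - t + d := fun d => by ring
      rw [e, e, e, e]
      split <;> split <;> simp_all

lemma U_translate (t x : V) : U t x = U 0 (x - t) := by
  unfold U
  exact congrArg _ (funext fun n => u_translate t n x)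


/-- distribution of the simple random walk at time `n`, started at `0` -/
noncomputable def p : ℕ → V → ℝ
  | 0 => fun x => if x = 0 then 1 else 0
  | n+1 => fun x =>
      (p n (x + (1,0)) + p n (x + (-1,0)) + p n (x + (0,1)) + p n (x + (0,-1))) / 4

lemma p_nonneg : ∀ n x, 0 ≤ p n x := by
  intro n
  induction n with
  | zero => intro x; simp only [p]; split <;> norm_num
  | succ n ih =>
      intro x; simp only [p]
      have h1 := ih (x + (1,0)); have h2 := ih (x + (-1,0))
      have h3 := ih (x + (0,1)); have h4 := ih (x + (0,-1))
      linarith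

lemma p_fin : ∀ n, ∃ S : Finset V, ∀ x ∉ S, p n x = 0 := by
  intro n
  induction n with
  | zero => exact ⟨{0}, fun x hx => by simp only [p]; rw [if_neg (by simpa using hx)]⟩
  | succ n ih =>
      obtain ⟨S, hS⟩ := ih
      refine ⟨S.image (· + (-1,0)) ∪ S.image (· + (1,0)) ∪ S.image (· + (0,-1))
        ∪ S.image (· + (0,1)), fun x hx => ?_⟩
      simp only [Finset.mem_union, Finset.mem_image, not_or, not_exists, not_and] at hx
      obtain ⟨⟨⟨hx1, hx2⟩, hx3⟩, hx4⟩ := hx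
      have e1 : p n (x + (1,0)) = 0 := by
        by_contra h
        exact (hx1 _ (by by_contra hc; exact h (hS _ hc))) (by simp [Prod.ext_iff])
      have e2 : p n (x + (-1,0)) = 0 := by
        by_contra h
        exact (hx2 _ (by by_contra hc; exact h (hS _ hc))) (by simp [Prod.ext_iff])
      have e3 : p n (x + (0,1)) = 0 := by
        by_contra h
        exact (hx3 _ (by by_contra hc; exact h (hS _ hc))) (by simp [Prod.ext_iff])
      have e4 : p n (x + (0,-1)) = 0 := by
        by_contra h
        exact (hx4 _ (by by_contra hc; exact h (hS _ hc))) (by simp [Prod.ext_iff])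
      simp only [p, e1, e2, e3, e4]
      norm_num

lemma p_summable (n : ℕ) (h : V → ℝ) : Summable fun x => p n x * h x := by
  obtain ⟨S, hS⟩ := p_fin n
  exact summable_of_ne_finset_zero (s := S) fun x hx => by rw [hS x hx, zero_mul]

/-- the 1D simple random walk distribution -/
noncomputable def rho : ℕ → ℤ → ℝ
  | 0 => fun k => if k = 0 then 1 else 0
  | n+1 => fun k => (rho n (k-1) + rho n (k+1)) / 2

lemma p_prod : ∀ n (x : V), p n x = rho n (x.1 + x.2) * rho n (x.1 - x.2) := by
  intro n
  induction n with
  | zero =>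
      rintro ⟨i, j⟩
      simp only [p, rho]
      split_ifs with h1 h2 h3 h2 h3 <;>
        simp_all [Prod.ext_iff] <;> omega
  | succ n ih =>
      rintro ⟨i, j⟩
      have e1 : ((i,j) : V) + (1,0) = (i+1, j) := by simp [Prod.ext_iff]
      have e2 : ((i,j) : V) + (-1,0) = (i-1, j) := by simp [Prod.ext_iff]; ring
      have e3 : ((i,j) : V) + (0,1) = (i, j+1) := by simp [Prod.ext_iff]
      have e4 : ((i,j) : V) + (0,-1) = (i, j-1) := by simp [Prod.ext_iff]; ring
      simp only [p, rho, e1, e2, e3, e4, ih]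
      rw [show i+1+j = i+j+1 by ring, show i+1-j = i-j+1 by ring,
        show i-1+j = i+j-1 by ring, show i-1-j = i-j-1 by ring,
        show i+(j+1) = i+j+1 by ring, show i-(j+1) = i-j-1 by ring,
        show i+(j-1) = i+j-1 by ring, show i-(j-1) = i-j+1 by ring]
      ring

lemma rho_eq : ∀ n (k : ℤ), rho n k =
    (if ((n : ℤ) + k) % 2 = 0 ∧ 0 ≤ (n : ℤ) + k
      then ((n.choose (((n : ℤ) + k) / 2).toNat : ℕ) : ℝ) else 0) / 2 ^ n := by
  intro n
  induction n with
  | zero =>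
      intro k
      simp only [rho, Nat.cast_zero, zero_add, pow_zero, div_one]
      by_cases h : k = 0
      · subst h; norm_num
      · rw [if_neg h]
        by_cases h2 : (k : ℤ) % 2 = 0 ∧ 0 ≤ k
        · rw [if_pos h2]
          have hk : (k / 2).toNat ≠ 0 := by omega
          obtain ⟨j, hj⟩ := Nat.exists_eq_succ_of_ne_zero hk
          rw [hj, Nat.choose_zero_succ, Nat.cast_zero]
        · rw [if_neg h2]
  | succ n ih =>
      intro k
      have h1 := ih (k - 1)
      have h2 := ih (k + 1)
      simp only [rho, h1, h2]
      push_cast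
      rw [show (n : ℤ) + (k - 1) = (n : ℤ) + 1 + k - 2 by ring,
        show (n : ℤ) + (k + 1) = (n : ℤ) + 1 + k by ring]
      split_ifs with hm hp hp
      · -- main case : n+1+k ≥ 2, everything even
        set i := ((((n : ℤ) + 1 + k) - 2) / 2).toNat with hi
        have eA : (((n : ℤ) + 1 + k) / 2).toNat = i + 1 := by omega
        rw [eA, Nat.choose_succ_succ n i, pow_succ]
        push_cast
        ring
      · exfalso; omega
      · -- first-if false, second true : n+1+k = 0
        have hz : ((n : ℤ) + 1 + k) = 0 := by omega
        rw [show (((n : ℤ) + 1 + k) / 2).toNat = 0 by omega, Nat.choose_zero_right,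
          Nat.choose_zero_right, pow_succ]
        push_cast
        ring
      · rw [pow_succ]; ring
  
lemma rho_two_zero (k : ℕ) : rho (2 * k) 0 = (k.centralBinom : ℝ) / 4 ^ k := by
  rw [rho_eq (2 * k) 0]
  rw [if_pos ⟨by omega, by omega⟩]
  rw [show (((2 * k : ℕ) : ℤ) + 0) / 2 = (k : ℤ) by omega]
  rw [Int.toNat_natCast, Nat.centralBinom]
  rw [show (2:ℝ) ^ (2*k) = 4 ^ k by rw [pow_mul]; norm_num]

lemma p_two_zero (k : ℕ) : p (2 * k) 0 = ((k.centralBinom : ℝ) / 4 ^ k) ^ 2 := by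
  rw [p_prod (2 * k) 0]
  norm_num [rho_two_zero]
  ring

lemma centralBinom_sq : ∀ k : ℕ, 1 ≤ k → 16 ^ k ≤ 4 * k * k.centralBinom ^ 2 := by
  intro k hk
  induction k, hk using Nat.le_induction with
  | base => simp [Nat.centralBinom]
  | succ k hk ih =>
      have hrec := Nat.succ_mul_centralBinom_succ k
      have key : (k+1)^2 * (16 ^ (k+1)) ≤ (k+1)^2 * (4 * (k+1) * (k+1).centralBinom ^ 2) := by
        have expand : (k+1)^2 * (4 * (k+1) * (k+1).centralBinom ^ 2)
            = 4 * (k+1) * ((k+1) * (k+1).centralBinom) ^ 2 := by ring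
        rw [expand, hrec]
        calc (k+1)^2 * 16 ^ (k+1) = 16 * (k+1)^2 * 16^k := by ring
          _ ≤ 16 * (k+1)^2 * (4 * k * k.centralBinom ^ 2) := Nat.mul_le_mul_left _ ih
          _ ≤ 4 * (k+1) * (2 * (2*k+1) * k.centralBinom) ^ 2 := by nlinarith
      exact Nat.le_of_mul_le_mul_left key (by positivity)

lemma p_lower (k : ℕ) : 1 / (4 * ((k : ℝ) + 1)) ≤ p (2 * k) 0 := by
  rcases Nat.eq_zero_or_pos k with hk | hk
  · subst hk
    norm_num [p]
  · rw [p_two_zero k, div_pow]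
    have h16 : ((4:ℝ) ^ k) ^ 2 = 16 ^ k := by
      rw [← pow_mul, show k * 2 = 2 * k by ring, pow_mul]
      norm_num
    rw [h16]
    rw [div_le_div_iff₀ (by positivity) (by positivity)]
    have h := centralBinom_sq k hk
    have hc : (16 : ℝ) ^ k ≤ 4 * (k : ℝ) * (k.centralBinom : ℝ) ^ 2 := by exact_mod_cast h
    have hk1 : (4 : ℝ) * (k : ℝ) ≤ 4 * ((k : ℝ) + 1) := by linarith
    calc (1 : ℝ) * 16 ^ k = 16 ^ k := one_mul _
      _ ≤ 4 * (k : ℝ) * (k.centralBinom : ℝ) ^ 2 := hc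
      _ ≤ (k.centralBinom : ℝ) ^ 2 * (4 * ((k:ℝ) + 1)) := by nlinarith [sq_nonneg ((k.centralBinom : ℝ))]


noncomputable def delta : ℝ := 1 - (U 0 (1,0) + U 0 (-1,0) + U 0 (0,1) + U 0 (0,-1)) / 4

lemma delta_nonneg : 0 ≤ delta := by
  have h1 := U_le_one 0 (1,0); have h2 := U_le_one 0 (-1,0)
  have h3 := U_le_one 0 (0,1); have h4 := U_le_one 0 (0,-1)
  unfold delta; linarith

lemma U0_avg (y : V) :
    (U 0 (y + (1,0)) + U 0 (y + (-1,0)) + U 0 (y + (0,1)) + U 0 (y + (0,-1))) / 4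
      = U 0 y - (if y = 0 then delta else 0) := by
  by_cases h : y = 0
  · subst h
    rw [if_pos rfl, U_self, zero_add, zero_add, zero_add, zero_add]
    unfold delta; ring
  · rw [if_neg h, ← U_harm 0 y h]; ring

lemma tsum_shift (n : ℕ) (d : V) (h : V → ℝ) :
    ∑' x : V, p n (x + d) * h x = ∑' y : V, p n y * h (y - d) := by
  have e := Equiv.tsum_eq (Equiv.addRight d) (fun y => p n y * h (y - d))
  rw [← e]
  apply tsum_congr
  intro x
  simp [Equiv.coe_addRight, add_sub_cancel_right]

lemma p_summable' (n : ℕ) (d : V) (h : V → ℝ) : Summable fun x => p n (x + d) * h x := by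
  obtain ⟨S, hS⟩ := p_fin n
  refine summable_of_ne_finset_zero (s := S.image (· + (-d))) fun x hx => ?_
  have hz : p n (x + d) = 0 := by
    apply hS
    intro hc
    apply hx
    simp only [Finset.mem_image]
    exact ⟨x + d, hc, add_neg_cancel_right x d⟩
  rw [hz, zero_mul]

noncomputable def s (n : ℕ) : ℝ := ∑' x : V, p n x * U 0 x

lemma s_zero : s 0 = 1 := by
  unfold s
  rw [show (fun x : V => p 0 x * U 0 x) = fun x : V => if x = 0 then U 0 0 else 0 by
    funext x
    simp only [p]
    split_ifs with h
    · rw [h, one_mul]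
    · rw [zero_mul]]
  rw [tsum_ite_eq, U_self]

lemma s_succ (n : ℕ) : s (n + 1) = s n - delta * p n 0 := by
  have sum1 : Summable fun x : V => p n (x + (1,0)) * (U 0 x / 4) := p_summable' n _ _
  have sum2 : Summable fun x : V => p n (x + (-1,0)) * (U 0 x / 4) := p_summable' n _ _
  have sum3 : Summable fun x : V => p n (x + (0,1)) * (U 0 x / 4) := p_summable' n _ _
  have sum4 : Summable fun x : V => p n (x + (0,-1)) * (U 0 x / 4) := p_summable' n _ _
  have step1 : s (n+1) = (∑' x : V, p n (x + (1,0)) * (U 0 x / 4))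
      + (∑' x : V, p n (x + (-1,0)) * (U 0 x / 4))
      + (∑' x : V, p n (x + (0,1)) * (U 0 x / 4))
      + (∑' x : V, p n (x + (0,-1)) * (U 0 x / 4)) := by
    rw [← Summable.tsum_add sum1 sum2, ← Summable.tsum_add (sum1.add sum2) sum3,
      ← Summable.tsum_add ((sum1.add sum2).add sum3) sum4]
    apply tsum_congr
    intro x
    simp only [p]
    ring
  rw [step1, tsum_shift n (1,0) (fun x => U 0 x / 4), tsum_shift n (-1,0) (fun x => U 0 x / 4),
    tsum_shift n (0,1) (fun x => U 0 x / 4), tsum_shift n (0,-1) (fun x => U 0 x / 4)]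
  have psub : ∀ (y : V) (a b : ℤ), y - (a,b) = y + (-a,-b) := fun y a b => by
    obtain ⟨c, d⟩ := y
    simp only [Prod.mk_sub_mk, Prod.mk_add_mk, Prod.mk.injEq]
    omega
  have sub1 : ∀ y : V, y - (1,0) = y + (-1,0) := fun y => by
    rw [psub y 1 0]; norm_num
  have sub2 : ∀ y : V, y - (-1,0) = y + (1,0) := fun y => by
    rw [psub y (-1) 0]; norm_num
  have sub3 : ∀ y : V, y - (0,1) = y + (0,-1) := fun y => by
    rw [psub y 0 1]; norm_num
  have sub4 : ∀ y : V, y - (0,-1) = y + (0,1) := fun y => by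
    rw [psub y 0 (-1)]; norm_num
  have sumA : Summable fun y : V => p n y * (U 0 (y - (1,0)) / 4) := p_summable n _
  have sumB : Summable fun y : V => p n y * (U 0 (y - (-1,0)) / 4) := p_summable n _
  have sumC : Summable fun y : V => p n y * (U 0 (y - (0,1)) / 4) := p_summable n _
  have sumD : Summable fun y : V => p n y * (U 0 (y - (0,-1)) / 4) := p_summable n _
  rw [← Summable.tsum_add sumA sumB, ← Summable.tsum_add (sumA.add sumB) sumC,
    ← Summable.tsum_add ((sumA.add sumB).add sumC) sumD]
  have main : ∀ y : V,
      p n y * (U 0 (y - (1,0)) / 4) + p n y * (U 0 (y - (-1,0)) / 4)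
        + p n y * (U 0 (y - (0,1)) / 4) + p n y * (U 0 (y - (0,-1)) / 4)
      = p n y * U 0 y - (if y = 0 then p n 0 * delta else 0) := by
    intro y
    rw [sub1, sub2, sub3, sub4]
    have havg := U0_avg y
    by_cases h : y = 0
    · subst h
      rw [if_pos rfl] at havg
      rw [if_pos rfl]
      linear_combination p n 0 * havg
    · rw [if_neg h] at havg
      rw [if_neg h]
      linear_combination p n y * havg
  rw [tsum_congr main]
  have sumE : Summable fun y : V => p n y * U 0 y := p_summable n _
  have sumF : Summable fun y : V => (if y = 0 then p n 0 * delta else 0 : ℝ) :=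
    summable_of_ne_finset_zero (s := {0}) fun x hx => by
      rw [if_neg (by simpa using hx)]
  rw [Summable.tsum_sub sumE sumF, tsum_ite_eq]
  unfold s
  ring

lemma s_nonneg (n : ℕ) : 0 ≤ s n :=
  tsum_nonneg fun x => mul_nonneg (p_nonneg n x) (U_nonneg 0 x)

lemma s_eq (n : ℕ) : s n = 1 - delta * ∑ k ∈ Finset.range n, p k 0 := by
  induction n with
  | zero => simpa using s_zero
  | succ n ih =>
      rw [s_succ n, ih, Finset.sum_range_succ]
      ring

lemma partial_bound (n : ℕ) : delta * ∑ k ∈ Finset.range n, p k 0 ≤ 1 := by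
  have h1 := s_nonneg n
  have h2 := s_eq n
  linarith

lemma sum_even_le (K : ℕ) : ∑ k ∈ Finset.range K, p (2*k) 0 ≤ ∑ n ∈ Finset.range (2*K), p n 0 := by
  induction K with
  | zero => simp
  | succ K ih =>
      rw [Finset.sum_range_succ, show 2*(K+1) = 2*K+1+1 by ring, Finset.sum_range_succ,
        Finset.sum_range_succ]
      have := p_nonneg (2*K+1) 0
      linarith

lemma harmonic_le (K : ℕ) :
    (1/4 : ℝ) * ∑ k ∈ Finset.range K, (1/((k:ℝ)+1)) ≤ ∑ k ∈ Finset.range K, p (2*k) 0 := by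
  rw [Finset.mul_sum]
  apply Finset.sum_le_sum
  intro k _
  calc (1/4 : ℝ) * (1/((k:ℝ)+1)) = 1/(4*((k:ℝ)+1)) := by rw [div_mul_div_comm, one_mul]
    _ ≤ p (2*k) 0 := p_lower k

lemma delta_zero : delta = 0 := by
  by_contra h
  have hδ : 0 < delta := lt_of_le_of_ne delta_nonneg (Ne.symm h)
  have div : Filter.Tendsto (fun K => (1/4 : ℝ) * ∑ i ∈ Finset.range K, (1/((i:ℝ)+1)))
      Filter.atTop Filter.atTop :=
    Real.tendsto_sum_range_one_div_nat_succ_atTop.const_mul_atTop (by norm_num)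
  obtain ⟨K, hK⟩ := (div.eventually_gt_atTop (1/delta)).exists
  have hchain : 1/delta < ∑ n ∈ Finset.range (2*K), p n 0 :=
    lt_of_lt_of_le hK (le_trans (harmonic_le K) (sum_even_le K))
  have hb := partial_bound (2*K)
  rw [div_lt_iff₀ hδ] at hchain
  nlinarith

lemma U0_units : U 0 (1,0) = 1 ∧ U 0 (-1,0) = 1 ∧ U 0 (0,1) = 1 ∧ U 0 (0,-1) = 1 := by
  have h := delta_zero
  unfold delta at h
  have h1 := U_le_one 0 (1,0); have h2 := U_le_one 0 (-1,0)
  have h3 := U_le_one 0 (0,1); have h4 := U_le_one 0 (0,-1)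
  refine ⟨by linarith, by linarith, by linarith, by linarith⟩

lemma chain (y : V) (n : ℕ) : ∀ m x, u 0 n y * u y m x ≤ u 0 (m + n) x := by
  intro m
  induction m with
  | zero =>
      intro x
      by_cases h : x = y
      · subst h
        rw [u_self, mul_one, zero_add]
      · rw [show u y 0 x = 0 by simp [u, if_neg h], mul_zero]
        exact u_nonneg 0 (0 + n) x
  | succ m ih =>
      intro x
      have harith : m + 1 + n = (m + n) + 1 := by omega
      rw [harith]
      by_cases hxy : x = y
      · subst hxy
        rw [u_self, mul_one]
        exact u_mono 0 x (by omega)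
      · by_cases hx0 : x = 0
        · subst hx0
          rw [u_self]
          calc u 0 n y * u y (m+1) 0 ≤ 1 * 1 :=
                mul_le_mul (u_le_one 0 n y) (u_le_one y (m+1) 0) (u_nonneg y (m+1) 0) zero_le_one
            _ = 1 := one_mul 1
        · rw [u_succ_eq 0 (m+n) x hx0, u_succ_eq y m x hxy]
          have i1 := ih (x + (1,0)); have i2 := ih (x + (-1,0))
          have i3 := ih (x + (0,1)); have i4 := ih (x + (0,-1))
          have expand : u 0 n y * ((u y m (x + (1,0)) + u y m (x + (-1,0)) + u y m (x + (0,1))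
              + u y m (x + (0,-1))) / 4)
            = (u 0 n y * u y m (x + (1,0)) + u 0 n y * u y m (x + (-1,0))
              + u 0 n y * u y m (x + (0,1)) + u 0 n y * u y m (x + (0,-1))) / 4 := by ring
          rw [expand]
          linarith

lemma U_chain (y x : V) : U 0 y * U y x ≤ U 0 x := by
  have step1 : ∀ n, u 0 n y * U y x ≤ U 0 x := by
    intro n
    have t1 : Filter.Tendsto (fun m => u 0 (m + n) x) Filter.atTop (nhds (U 0 x)) :=
      (tendsto_u 0 x).comp (Filter.tendsto_add_atTop_nat n)
    have t2 : Filter.Tendsto (fun m => u 0 n y * u y m x) Filter.atTop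
        (nhds (u 0 n y * U y x)) := (tendsto_u y x).const_mul _
    exact le_of_tendsto_of_tendsto' t2 t1 (fun m => chain y n m x)
  have t3 : Filter.Tendsto (fun n => u 0 n y * U y x) Filter.atTop (nhds (U 0 y * U y x)) :=
    (tendsto_u 0 y).mul_const _
  exact le_of_tendsto' t3 step1

lemma U0_eq_one : ∀ x : V, U 0 x = 1 := by
  have key : ∀ N : ℕ, ∀ x : V, x.1.natAbs + x.2.natAbs = N → U 0 x = 1 := by
    intro N
    induction N using Nat.strong_induction_on with
    | _ N ih =>
        intro x hx
        rcases Nat.eq_zero_or_pos N with hN | hN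
        · subst hN
          have hx0 : x = 0 := by
            obtain ⟨i, j⟩ := x
            have h' : i.natAbs + j.natAbs = 0 := hx
            simp only [Prod.ext_iff, Prod.fst_zero, Prod.snd_zero]
            omega
          rw [hx0, U_self]
        · have hpick : ∃ y : V, U 0 y = 1 ∧ (x - y).1.natAbs + (x - y).2.natAbs = N - 1 := by
            obtain ⟨u1, u2, u3, u4⟩ := U0_units
            obtain ⟨i, j⟩ := x
            have h' : i.natAbs + j.natAbs = N := hx
            rcases lt_trichotomy i 0 with hi | hi | hi
            · refine ⟨(-1,0), u2, ?_⟩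
              rw [show ((i,j) : V) - (-1,0) = (i+1, j) by
                rw [Prod.mk_sub_mk]; norm_num]
              show (i+1).natAbs + j.natAbs = N - 1
              omega
            · rcases lt_trichotomy j 0 with hj | hj | hj
              · refine ⟨(0,-1), u4, ?_⟩
                rw [show ((i,j) : V) - (0,-1) = (i, j+1) by
                  rw [Prod.mk_sub_mk]; norm_num]
                show i.natAbs + (j+1).natAbs = N - 1
                omega
              · exfalso; omega
              · refine ⟨(0,1), u3, ?_⟩
                rw [show ((i,j) : V) - (0,1) = (i, j-1) by
                  rw [Prod.mk_sub_mk]; norm_num]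
                show i.natAbs + (j-1).natAbs = N - 1
                omega
            · refine ⟨(1,0), u1, ?_⟩
              rw [show ((i,j) : V) - (1,0) = (i-1, j) by
                rw [Prod.mk_sub_mk]; norm_num]
              show (i-1).natAbs + j.natAbs = N - 1
              omega
          obtain ⟨y, hy1, hy2⟩ := hpick
          have h := U_chain y x
          rw [hy1, one_mul, U_translate y x, ih (N-1) (by omega) (x - y) hy2] at h
          exact le_antisymm (U_le_one 0 x) h
  intro x
  exact key (x.1.natAbs + x.2.natAbs) x rfl

lemma key_ge (f : V → ℝ) (h0 : ∀ x, 0 ≤ f x)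
    (hH : ∀ x : V, f x = (f (x+(1,0)) + f (x+(-1,0)) + f (x+(0,1)) + f (x+(0,-1))) / 4) :
    ∀ x, f 0 ≤ f x := by
  have step : ∀ (n : ℕ) (x : V), f 0 * u 0 n x ≤ f x := by
    intro n
    induction n with
    | zero =>
        intro x
        by_cases h : x = 0
        · subst h; simp [u]
        · rw [show u 0 0 x = 0 by simp [u, if_neg h], mul_zero]
          exact h0 x
    | succ n ih =>
        intro x
        by_cases h : x = 0
        · subst h; rw [u_self, mul_one]
        · rw [u_succ_eq 0 n x h, hH x]
          have i1 := ih (x + (1,0)); have i2 := ih (x + (-1,0))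
          have i3 := ih (x + (0,1)); have i4 := ih (x + (0,-1))
          have expand : f 0 * ((u 0 n (x + (1,0)) + u 0 n (x + (-1,0)) + u 0 n (x + (0,1))
              + u 0 n (x + (0,-1))) / 4)
            = (f 0 * u 0 n (x + (1,0)) + f 0 * u 0 n (x + (-1,0))
              + f 0 * u 0 n (x + (0,1)) + f 0 * u 0 n (x + (0,-1))) / 4 := by ring
          rw [expand]
          linarith
  intro x
  have t : Filter.Tendsto (fun n => f 0 * u 0 n x) Filter.atTop (nhds (f 0 * U 0 x)) :=
    (tendsto_u 0 x).const_mul _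
  have h := le_of_tendsto' t (fun n => step n x)
  rwa [U0_eq_one x, mul_one] at h

end DMVP

/-- Problem 2: a nonnegative function on the integer lattice
satisfying the discrete mean value property is constant. -/
theorem discrete_mvp_nonneg_const (f : ℤ × ℤ → ℝ)
    (hnonneg : ∀ p : ℤ × ℤ, 0 ≤ f p)
    (hmvp : ∀ i j : ℤ, f (i, j) =
      (f (i - 1, j) + f (i + 1, j) + f (i, j - 1) + f (i, j + 1)) / 4) :
    ∀ p q : ℤ × ℤ, f p = f q := by
  have hH : ∀ x : DMVP.V,
      f x = (f (x+(1,0)) + f (x+(-1,0)) + f (x+(0,1)) + f (x+(0,-1))) / 4 := by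
    intro x
    obtain ⟨i, j⟩ := x
    have h := hmvp i j
    rw [show ((i,j) : DMVP.V) + (1,0) = (i+1, j) by rw [Prod.mk_add_mk, Prod.mk.injEq]; omega,
      show ((i,j) : DMVP.V) + (-1,0) = (i-1, j) by rw [Prod.mk_add_mk, Prod.mk.injEq]; omega,
      show ((i,j) : DMVP.V) + (0,1) = (i, j+1) by rw [Prod.mk_add_mk, Prod.mk.injEq]; omega,
      show ((i,j) : DMVP.V) + (0,-1) = (i, j-1) by rw [Prod.mk_add_mk, Prod.mk.injEq]; omega]
    linarith
  have all_ge : ∀ t x : DMVP.V, f t ≤ f x := by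
    intro t x
    have hg0 : ∀ z : DMVP.V, 0 ≤ (fun z => f (z + t)) z := fun z => hnonneg _
    have hgH : ∀ z : DMVP.V, (fun z => f (z + t)) z
        = ((fun z => f (z + t)) (z+(1,0)) + (fun z => f (z + t)) (z+(-1,0))
          + (fun z => f (z + t)) (z+(0,1)) + (fun z => f (z + t)) (z+(0,-1))) / 4 := by
      intro z
      simp only
      rw [hH (z + t), add_right_comm z t (1,0), add_right_comm z t (-1,0),
        add_right_comm z t (0,1), add_right_comm z t (0,-1)]
    have h := DMVP.key_ge (fun z => f (z + t)) hg0 hgH (x - t)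
    simpa [zero_add, sub_add_cancel] using h
  exact fun p q => le_antisymm (all_ge p q) (all_ge q p)
end

section
/- Let d ≥ 1. If a function f : ℤ^d → ℝ is nonnegative and for every x ∈ ℤ^d the value f(x) equals the average (1/(2d)) · Σ_{k=1}^{d} (f(x + e_k) + f(x - e_k)) of its values at the 2d neighboring lattice points (where e_1, …, e_d are the standard basis vectors of ℤ^d), then f is constant. -/
open Finset

namespace DiscreteMVP

variable {d : ℕ}

/-- ℓ¹ norm on the lattice. -/
private def nrm (x : Fin d → ℤ) : ℕ := ∑ k, (x k).natAbs

private lemma nrm_eq' (x : Fin d → ℤ) (k : Fin d) :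
    nrm x = (x k).natAbs + ∑ j ∈ Finset.univ.erase k, (x j).natAbs :=
  (Finset.add_sum_erase _ (fun j => (x j).natAbs) (mem_univ k)).symm

private lemma nrm_eq_zero {x : Fin d → ℤ} (h : nrm x = 0) : x = 0 := by
  funext k
  have := Finset.sum_eq_zero_iff.1 h k (mem_univ k)
  simpa [Int.natAbs_eq_zero] using this

private lemma erase_sum_eq_plus (x : Fin d → ℤ) (k : Fin d) :
    ∑ j ∈ Finset.univ.erase k, (((x + Pi.single k 1 : Fin d → ℤ)) j).natAbs
      = ∑ j ∈ Finset.univ.erase k, (x j).natAbs := by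
  refine Finset.sum_congr rfl fun j hj => ?_
  have hjk : j ≠ k := (Finset.mem_erase.1 hj).1
  simp [Pi.single_apply, hjk]

private lemma erase_sum_eq_minus (x : Fin d → ℤ) (k : Fin d) :
    ∑ j ∈ Finset.univ.erase k, (((x - Pi.single k 1 : Fin d → ℤ)) j).natAbs
      = ∑ j ∈ Finset.univ.erase k, (x j).natAbs := by
  refine Finset.sum_congr rfl fun j hj => ?_
  have hjk : j ≠ k := (Finset.mem_erase.1 hj).1
  simp [Pi.single_apply, hjk]

private lemma nrm_step_pos {x : Fin d → ℤ} {k : Fin d} (h : 0 < x k) :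
    nrm (x - Pi.single k 1) + 1 = nrm x := by
  rw [nrm_eq' (x - Pi.single k 1) k, nrm_eq' x k, erase_sum_eq_minus]
  have h2 : (x - Pi.single k 1 : Fin d → ℤ) k = x k - 1 := by simp
  rw [h2]
  omega

private lemma nrm_step_neg {x : Fin d → ℤ} {k : Fin d} (h : x k < 0) :
    nrm (x + Pi.single k 1) + 1 = nrm x := by
  rw [nrm_eq' (x + Pi.single k 1) k, nrm_eq' x k, erase_sum_eq_plus]
  have h2 : (x + Pi.single k 1 : Fin d → ℤ) k = x k + 1 := by simp
  rw [h2]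
  omega

/-- Reachability induction principle on ℤ^d. -/
private lemma reach (P : (Fin d → ℤ) → Prop) (h0 : P 0)
    (hp : ∀ (x : Fin d → ℤ) (k : Fin d), P x → P (x + Pi.single k 1))
    (hm : ∀ (x : Fin d → ℤ) (k : Fin d), P x → P (x - Pi.single k 1)) :
    ∀ x, P x := by
  suffices h : ∀ n (x : Fin d → ℤ), nrm x = n → P x by
    intro x; exact h (nrm x) x rfl
  intro n
  induction n with
  | zero => intro x hx; rw [nrm_eq_zero hx]; exact h0
  | succ n ih =>
    intro x hx
    have hex : ∃ k, x k ≠ 0 := by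
      by_contra hc
      push_neg at hc
      have : x = 0 := funext fun k => hc k
      rw [this] at hx
      simp [nrm] at hx
    obtain ⟨k, hk⟩ := hex
    rcases lt_or_gt_of_ne hk with hneg | hpos
    · have hstep := nrm_step_neg hneg
      have hn : nrm (x + Pi.single k 1) = n := by omega
      have hP := ih _ hn
      have := hm _ k hP
      simpa using this
    · have hstep := nrm_step_pos hpos
      have hn : nrm (x - Pi.single k 1) = n := by omega
      have hP := ih _ hn
      have := hp _ k hP
      simpa using this

/-- The (cleared-denominator) harmonicity equation. -/
private def Heq (d : ℕ) (f : (Fin d → ℤ) → ℝ) : Prop :=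
  ∀ x, 2 * (d : ℝ) * f x = ∑ k, (f (x + Pi.single k 1) + f (x - Pi.single k 1))

private lemma Heq_comb {f g : (Fin d → ℤ) → ℝ} (hf : Heq d f) (hg : Heq d g) (a b : ℝ) :
    Heq d (fun x => a * f x + b * g x) := by
  intro x
  calc 2 * (d : ℝ) * (a * f x + b * g x)
      = a * (2 * (d : ℝ) * f x) + b * (2 * (d : ℝ) * g x) := by ring
    _ = a * (∑ k, (f (x + Pi.single k 1) + f (x - Pi.single k 1)))
        + b * (∑ k, (g (x + Pi.single k 1) + g (x - Pi.single k 1))) := by rw [hf x, hg x]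
    _ = ∑ k, ((a * f (x + Pi.single k 1) + b * g (x + Pi.single k 1))
        + (a * f (x - Pi.single k 1) + b * g (x - Pi.single k 1))) := by
        rw [Finset.mul_sum, Finset.mul_sum, ← Finset.sum_add_distrib]
        exact Finset.sum_congr rfl fun k _ => by ring

private lemma Heq_translate {f : (Fin d → ℤ) → ℝ} (hf : Heq d f) (v : Fin d → ℤ) :
    Heq d (fun x => f (x + v)) := by
  intro x
  have h := hf (x + v)
  simp only
  calc 2 * (d : ℝ) * f (x + v)
      = ∑ k, (f ((x + v) + Pi.single k 1) + f ((x + v) - Pi.single k 1)) := h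
    _ = ∑ k, (f ((x + Pi.single k 1) + v) + f ((x - Pi.single k 1) + v)) := by
        refine Finset.sum_congr rfl fun k _ => ?_
        rw [show (x + v) + Pi.single k 1 = (x + Pi.single k 1) + v by abel,
            show (x + v) - Pi.single k 1 = (x - Pi.single k 1) + v by abel]

/-- The compact convex set of normalized nonnegative harmonic functions. -/
private def C (d : ℕ) : Set ((Fin d → ℤ) → ℝ) :=
  {f | (∀ x, 0 ≤ f x) ∧ Heq d f ∧ f 0 = 1}

private lemma pair_le {f : (Fin d → ℤ) → ℝ} (hf0 : ∀ x, 0 ≤ f x) (hfH : Heq d f)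
    (x : Fin d → ℤ) (k : Fin d) :
    f (x + Pi.single k 1) + f (x - Pi.single k 1) ≤ 2 * (d : ℝ) * f x := by
  rw [hfH x]
  exact Finset.single_le_sum (f := fun j => f (x + Pi.single j 1) + f (x - Pi.single j 1))
    (fun j _ => add_nonneg (hf0 _) (hf0 _)) (mem_univ k)

private lemma nb_plus {f : (Fin d → ℤ) → ℝ} (hf0 : ∀ x, 0 ≤ f x) (hfH : Heq d f)
    (x : Fin d → ℤ) (k : Fin d) :
    f (x + Pi.single k 1) ≤ 2 * (d : ℝ) * f x := by
  have h1 := pair_le hf0 hfH x k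
  have h2 := hf0 (x - Pi.single k 1)
  linarith

private lemma nb_minus {f : (Fin d → ℤ) → ℝ} (hf0 : ∀ x, 0 ≤ f x) (hfH : Heq d f)
    (x : Fin d → ℤ) (k : Fin d) :
    f (x - Pi.single k 1) ≤ 2 * (d : ℝ) * f x := by
  have h1 := pair_le hf0 hfH x k
  have h2 := hf0 (x + Pi.single k 1)
  linarith

private lemma pos_everywhere (hd : 1 ≤ d) {f : (Fin d → ℤ) → ℝ}
    (hf0 : ∀ x, 0 ≤ f x) (hfH : Heq d f) (h0 : 0 < f 0) : ∀ x, 0 < f x := by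
  have hdpos : (0 : ℝ) < 2 * (d : ℝ) := by
    have : (1 : ℝ) ≤ (d : ℝ) := by exact_mod_cast hd
    linarith
  refine reach (fun x => 0 < f x) h0 ?_ ?_
  · intro x k hx
    have h := nb_minus hf0 hfH (x + Pi.single k 1) k
    rw [add_sub_cancel_right] at h
    nlinarith
  · intro x k hx
    have h := nb_plus hf0 hfH (x - Pi.single k 1) k
    rw [sub_add_cancel] at h
    nlinarith

private lemma growth_bound (hd : 1 ≤ d) {f : (Fin d → ℤ) → ℝ}
    (hf0 : ∀ x, 0 ≤ f x) (hfH : Heq d f) (hf1 : f 0 = 1) :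
    ∀ x, f x ≤ (2 * (d : ℝ)) ^ (nrm x) := by
  have hdpos : (0 : ℝ) ≤ 2 * (d : ℝ) := by positivity
  suffices h : ∀ n (x : Fin d → ℤ), nrm x = n → f x ≤ (2 * (d : ℝ)) ^ n by
    intro x; exact h (nrm x) x rfl
  intro n
  induction n with
  | zero => intro x hx; rw [nrm_eq_zero hx, hf1]; simp
  | succ n ih =>
    intro x hx
    have hex : ∃ k, x k ≠ 0 := by
      by_contra hc
      push_neg at hc
      have : x = 0 := funext fun k => hc k
      rw [this] at hx
      simp [nrm] at hx
    obtain ⟨k, hk⟩ := hex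
    rcases lt_or_gt_of_ne hk with hneg | hpos
    · have hstep := nrm_step_neg hneg
      have hn : nrm (x + Pi.single k 1) = n := by omega
      have h1 : f x ≤ 2 * (d : ℝ) * f (x + Pi.single k 1) := by
        have h := nb_minus hf0 hfH (x + Pi.single k 1) k
        rwa [add_sub_cancel_right] at h
      have h2 := ih _ hn
      calc f x ≤ 2 * (d : ℝ) * f (x + Pi.single k 1) := h1
        _ ≤ 2 * (d : ℝ) * (2 * (d : ℝ)) ^ n := by nlinarith
        _ = (2 * (d : ℝ)) ^ (n + 1) := by ring
    · have hstep := nrm_step_pos hpos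
      have hn : nrm (x - Pi.single k 1) = n := by omega
      have h1 : f x ≤ 2 * (d : ℝ) * f (x - Pi.single k 1) := by
        have h := nb_plus hf0 hfH (x - Pi.single k 1) k
        rwa [sub_add_cancel] at h
      have h2 := ih _ hn
      calc f x ≤ 2 * (d : ℝ) * f (x - Pi.single k 1) := h1
        _ ≤ 2 * (d : ℝ) * (2 * (d : ℝ)) ^ n := by nlinarith
        _ = (2 * (d : ℝ)) ^ (n + 1) := by ring

private lemma C_isClosed : IsClosed (C d) := by
  have h1 : IsClosed {f : (Fin d → ℤ) → ℝ | ∀ x, 0 ≤ f x} := by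
    rw [Set.setOf_forall]
    exact isClosed_iInter fun x => isClosed_le continuous_const (continuous_apply x)
  have h2 : IsClosed {f : (Fin d → ℤ) → ℝ | Heq d f} := by
    have he : {f : (Fin d → ℤ) → ℝ | Heq d f} = {f : (Fin d → ℤ) → ℝ | ∀ x,
        2 * (d : ℝ) * f x = ∑ k, (f (x + Pi.single k 1) + f (x - Pi.single k 1))} := rfl
    rw [he, Set.setOf_forall]
    refine isClosed_iInter fun x => isClosed_eq ?_ ?_
    · exact continuous_const.mul (continuous_apply x)
    · exact continuous_finset_sum _ fun k _ =>
        ((continuous_apply _).add (continuous_apply _))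
  have h3 : IsClosed {f : (Fin d → ℤ) → ℝ | f 0 = 1} :=
    isClosed_eq (continuous_apply 0) continuous_const
  have hC : C d = {f | ∀ x, 0 ≤ f x} ∩ ({f | Heq d f} ∩ {f | f 0 = 1}) := by
    ext f; simp [C, and_assoc]
  rw [hC]
  exact h1.inter (h2.inter h3)

private lemma C_isCompact (hd : 1 ≤ d) : IsCompact (C d) := by
  have hsub : C d ⊆ Set.pi Set.univ (fun x : Fin d → ℤ =>
      Set.Icc (0 : ℝ) ((2 * (d : ℝ)) ^ (nrm x))) := by
    rintro f ⟨hf0, hfH, hf1⟩ x _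
    exact ⟨hf0 x, growth_bound hd hf0 hfH hf1 x⟩
  exact IsCompact.of_isClosed_subset
    (isCompact_univ_pi fun x => isCompact_Icc) C_isClosed hsub

private lemma C_convex : Convex ℝ (C d) := by
  rintro f ⟨hf0, hfH, hf1⟩ g ⟨hg0, hgH, hg1⟩ a b ha hb hab
  refine ⟨?_, ?_, ?_⟩
  · intro x
    have h1 := hf0 x; have h2 := hg0 x
    simp only [Pi.add_apply, Pi.smul_apply, smul_eq_mul]
    nlinarith
  · have hcomb := Heq_comb hfH hgH a b
    intro x
    have hx := hcomb x
    simpa using hx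
  · simp only [Pi.add_apply, Pi.smul_apply, smul_eq_mul, hf1, hg1]
    linarith

/-- Multiplicativity of extreme points in a given direction. -/
private lemma mult_of_extreme (hd : 1 ≤ d) {g : (Fin d → ℤ) → ℝ}
    (hgE : g ∈ (C d).extremePoints ℝ) (v : Fin d → ℤ)
    (hnb : ∀ x, g (x + v) ≤ 2 * (d : ℝ) * g x)
    (hpos : 0 < g v) (hlt : g v < 2 * (d : ℝ)) :
    ∀ x, g (x + v) = g v * g x := by
  obtain ⟨hgC, hext⟩ := hgE
  obtain ⟨hg0, hgH, hg1⟩ := hgC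
  have hdpos : (0 : ℝ) < 2 * (d : ℝ) := by
    have : (1 : ℝ) ≤ (d : ℝ) := by exact_mod_cast hd
    linarith
  have hdne : (2 * (d : ℝ)) ≠ 0 := ne_of_gt hdpos
  set a : ℝ := g v with ha
  have hane : a ≠ 0 := ne_of_gt hpos
  set D : ℝ := 2 * (d : ℝ) - a with hD
  have hDpos : 0 < D := by rw [hD]; linarith
  have hDne : D ≠ 0 := ne_of_gt hDpos
  set t : ℝ := a / (2 * (d : ℝ)) with ht
  have ht0 : 0 < t := div_pos hpos hdpos
  have ht1 : t < 1 := (div_lt_one hdpos).2 hlt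
  have h1t : 0 < 1 - t := by linarith
  set g1 : (Fin d → ℤ) → ℝ := fun x => (1 / a) * g (x + v) + 0 * g x with hg1def
  set g2 : (Fin d → ℤ) → ℝ :=
    fun x => (2 * (d : ℝ) / D) * g x + (-(1 / D)) * g (x + v) with hg2def
  have hg1C : g1 ∈ C d := by
    refine ⟨?_, ?_, ?_⟩
    · intro x
      have hx := hg0 (x + v)
      simp only [hg1def, zero_mul, add_zero]
      positivity
    · exact Heq_comb (Heq_translate hgH v) hgH (1 / a) 0
    · simp only [hg1def, zero_mul, add_zero, zero_add]
      rw [← ha]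
      field_simp
  have hg2C : g2 ∈ C d := by
    refine ⟨?_, ?_, ?_⟩
    · intro x
      have h := hnb x
      have heq : (2 * (d : ℝ) / D) * g x + (-(1 / D)) * g (x + v)
          = (1 / D) * (2 * (d : ℝ) * g x - g (x + v)) := by ring
      simp only [hg2def]
      rw [heq]
      have h1 : (0 : ℝ) ≤ 1 / D := le_of_lt (by positivity)
      have h2 : (0 : ℝ) ≤ 2 * (d : ℝ) * g x - g (x + v) := by linarith
      exact mul_nonneg h1 h2
    · exact Heq_comb hgH (Heq_translate hgH v) (2 * (d : ℝ) / D) (-(1 / D))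
    · simp only [hg2def, zero_add, hg1]
      rw [← ha, hD]
      have hDne' : 2 * (d : ℝ) - a ≠ 0 := by rw [← hD]; exact hDne
      field_simp
      ring
  have hseg : g ∈ openSegment ℝ g1 g2 := by
    refine ⟨t, 1 - t, ht0, h1t, by ring, ?_⟩
    funext x
    simp only [Pi.add_apply, Pi.smul_apply, smul_eq_mul, hg1def, hg2def, ht, hD]
    have hDne' : 2 * (d : ℝ) - a ≠ 0 := by rw [← hD]; exact hDne
    field_simp
    ring
  have hkey := hext hg1C hg2C hseg
  intro x
  have hx := congrFun hkey x
  simp only [hg1def, zero_mul, add_zero] at hx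
  field_simp at hx
  linarith [hx]

private lemma extreme_eq_one (hd : 1 ≤ d) {g : (Fin d → ℤ) → ℝ}
    (hgE : g ∈ (C d).extremePoints ℝ) : g = fun _ => 1 := by
  obtain ⟨hg0, hgH, hg1⟩ := hgE.1
  have hdpos : (0 : ℝ) < 2 * (d : ℝ) := by
    have : (1 : ℝ) ≤ (d : ℝ) := by exact_mod_cast hd
    linarith
  have hpos : ∀ x, 0 < g x := pos_everywhere hd hg0 hgH (by rw [hg1]; norm_num)
  have hnbp : ∀ (k : Fin d) x, g (x + Pi.single k 1) ≤ 2 * (d : ℝ) * g x :=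
    fun k x => nb_plus hg0 hgH x k
  have hnbm : ∀ (k : Fin d) x, g (x + -Pi.single k 1) ≤ 2 * (d : ℝ) * g x := by
    intro k x
    have h := nb_minus hg0 hgH x k
    rwa [sub_eq_add_neg] at h
  have hlt : ∀ k : Fin d, g (Pi.single k 1) + g (-Pi.single k 1) ≤ 2 * (d : ℝ) := by
    intro k
    have h := pair_le hg0 hgH 0 k
    rw [zero_add, zero_sub, hg1, mul_one] at h
    exact h
  have hltp : ∀ k : Fin d, g (Pi.single k 1) < 2 * (d : ℝ) := by
    intro k
    have h1 := hlt k
    have h2 := hpos (-Pi.single k 1)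
    linarith
  have hltm : ∀ k : Fin d, g (-Pi.single k 1) < 2 * (d : ℝ) := by
    intro k
    have h1 := hlt k
    have h2 := hpos (Pi.single k 1)
    linarith
  have hmp : ∀ (k : Fin d) x, g (x + Pi.single k 1) = g (Pi.single k 1) * g x := fun k =>
    mult_of_extreme hd hgE (Pi.single k 1) (hnbp k) (hpos _) (hltp k)
  have hmm : ∀ (k : Fin d) x, g (x + -Pi.single k 1) = g (-Pi.single k 1) * g x := fun k =>
    mult_of_extreme hd hgE (-Pi.single k 1) (hnbm k) (hpos _) (hltm k)
  have hprod : ∀ k : Fin d, g (Pi.single k 1) * g (-Pi.single k 1) = 1 := by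
    intro k
    have h := hmp k (-Pi.single k 1)
    rw [neg_add_cancel, hg1] at h
    linarith
  have hsum : ∑ k : Fin d, (g (Pi.single k 1) + g (-Pi.single k 1)) = 2 * (d : ℝ) := by
    have h := hgH 0
    rw [hg1, mul_one] at h
    rw [h]
    refine Finset.sum_congr rfl fun k _ => ?_
    rw [zero_add, zero_sub]
  have hge2 : ∀ k : Fin d, 2 ≤ g (Pi.single k 1) + g (-Pi.single k 1) := by
    intro k
    have h1 := hpos (Pi.single k 1)
    have h2 := hpos (-Pi.single k 1)
    have h3 := hprod k
    nlinarith [sq_nonneg (g (Pi.single k 1) - 1)]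
  have heq2 : ∀ k : Fin d, g (Pi.single k 1) + g (-Pi.single k 1) = 2 := by
    have hzero : ∑ k : Fin d, (g (Pi.single k 1) + g (-Pi.single k 1) - 2) = 0 := by
      rw [Finset.sum_sub_distrib, hsum, Finset.sum_const, Finset.card_univ, Fintype.card_fin]
      push_cast
      ring
    intro k
    have h := (Finset.sum_eq_zero_iff_of_nonneg
      (fun j _ => by linarith [hge2 j])).1 hzero k (mem_univ k)
    linarith
  have hone : ∀ k : Fin d, g (Pi.single k 1) = 1 := by
    intro k
    have h1 := heq2 k
    have h2 := hprod k
    have h3 := hpos (Pi.single k 1)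
    nlinarith [sq_nonneg (g (Pi.single k 1) - 1)]
  have honem : ∀ k : Fin d, g (-Pi.single k 1) = 1 := by
    intro k
    have h := hprod k
    rw [hone k, one_mul] at h
    exact h
  funext x
  refine reach (fun x => g x = 1) hg1 ?_ ?_ x
  · intro y k hy
    rw [hmp k y, hone k, one_mul, hy]
  · intro y k hy
    rw [sub_eq_add_neg, hmm k y, honem k, one_mul, hy]

private lemma C_eq_one (hd : 1 ≤ d) : C d ⊆ {fun _ => (1 : ℝ)} := by
  have hKM := closure_convexHull_extremePoints (C_isCompact hd) C_convex
  have hsub : (C d).extremePoints ℝ ⊆ {fun _ => (1 : ℝ)} :=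
    fun g hg => extreme_eq_one hd hg
  calc C d = closure (convexHull ℝ ((C d).extremePoints ℝ)) := hKM.symm
    _ ⊆ closure (convexHull ℝ {fun _ => (1 : ℝ)}) :=
        closure_mono (convexHull_mono hsub)
    _ = closure {fun _ => (1 : ℝ)} := by rw [convexHull_singleton]
    _ = {fun _ => (1 : ℝ)} := closure_singleton

end DiscreteMVP

/-- A nonnegative function on `ℤ^d` (`d ≥ 1`) satisfying the `d`-dimensional
discrete mean value property is constant. -/
theorem discrete_mvp_nonneg_const_dim (d : ℕ) (hd : 1 ≤ d)
    (f : (Fin d → ℤ) → ℝ)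
    (hnonneg : ∀ x : Fin d → ℤ, 0 ≤ f x)
    (hmvp : ∀ x : Fin d → ℤ, f x =
      (1 / (2 * (d : ℝ))) * ∑ k : Fin d, (f (x + Pi.single k 1) + f (x - Pi.single k 1))) :
    ∀ x y : Fin d → ℤ, f x = f y := by
  have hdpos : (0 : ℝ) < 2 * (d : ℝ) := by
    have : (1 : ℝ) ≤ (d : ℝ) := by exact_mod_cast hd
    linarith
  have hdne : (2 * (d : ℝ)) ≠ 0 := ne_of_gt hdpos
  have h2d : ∀ x, 2 * (d : ℝ) * f x
      = ∑ k : Fin d, (f (x + Pi.single k 1) + f (x - Pi.single k 1)) := by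
    intro x
    rw [hmvp x]
    field_simp
  set c : ℝ := f 0 + 1 with hc
  have hcpos : 0 < c := by rw [hc]; linarith [hnonneg 0]
  have hcne : c ≠ 0 := ne_of_gt hcpos
  set F : (Fin d → ℤ) → ℝ := fun x => (f x + 1) / c with hF
  have hFC : F ∈ DiscreteMVP.C d := by
    refine ⟨?_, ?_, ?_⟩
    · intro x
      have := hnonneg x
      simp only [hF]
      positivity
    · intro x
      have hnum : ∑ k : Fin d, ((f (x + Pi.single k 1) + 1) + (f (x - Pi.single k 1) + 1))
          = 2 * (d : ℝ) * f x + 2 * (d : ℝ) := by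
        have hterm : ∀ k : Fin d, (f (x + Pi.single k 1) + 1) + (f (x - Pi.single k 1) + 1)
            = (f (x + Pi.single k 1) + f (x - Pi.single k 1)) + 2 := fun k => by ring
        rw [Finset.sum_congr rfl fun k _ => hterm k, Finset.sum_add_distrib, ← h2d x,
          Finset.sum_const, Finset.card_univ, Fintype.card_fin]
        push_cast
        ring
      simp only [hF]
      calc 2 * (d : ℝ) * ((f x + 1) / c)
          = (2 * (d : ℝ) * f x + 2 * (d : ℝ)) / c := by field_simp
        _ = (∑ k : Fin d, ((f (x + Pi.single k 1) + 1) + (f (x - Pi.single k 1) + 1))) / c := by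
            rw [hnum]
        _ = ∑ k : Fin d, ((f (x + Pi.single k 1) + 1) / c + (f (x - Pi.single k 1) + 1) / c) := by
            rw [Finset.sum_div]
            exact Finset.sum_congr rfl fun k _ => by rw [add_div]
    · simp only [hF]
      rw [← hc]
      field_simp
  have hFone : F = fun _ => (1 : ℝ) := DiscreteMVP.C_eq_one hd hFC
  intro x y
  have hx := congrFun hFone x
  have hy := congrFun hFone y
  simp only [hF] at hx hy
  have hx' : f x + 1 = c := by
    field_simp at hx
    linarith
  have hy' : f y + 1 = c := by
    field_simp at hy
    linarith
  linarith
end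

section
/- If f : ℝ² → ℝ is a bounded continuous function such that for every point P ∈ ℝ², the average of f over the circle of radius 1 centered at P equals f(P), i.e. f(P) = (1/(2π)) ∫₀^{2π} f(P + (cos t, sin t)) dt, then f is constant. -/
open Real MeasureTheory Set intervalIntegral

noncomputable section MVPAux

/-- Euclidean annulus with radii `2/5` and `8/5` around `x`, inside `ℝ × ℝ`. -/
def mvpAnn (x : ℝ × ℝ) : Set (ℝ × ℝ) :=
  {y | (y.1 - x.1) ^ 2 + (y.2 - x.2) ^ 2 ∈ Set.Icc (4 / 25 : ℝ) (64 / 25)}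

lemma measurableSet_mvpAnn (x : ℝ × ℝ) : MeasurableSet (mvpAnn x) :=
  measurableSet_preimage (f := fun y : ℝ × ℝ => (y.1 - x.1) ^ 2 + (y.2 - x.2) ^ 2)
    (by fun_prop) measurableSet_Icc

lemma mvpAnn_subset_closedBall (x : ℝ × ℝ) : mvpAnn x ⊆ Metric.closedBall x 2 := by
  intro y hy
  obtain ⟨h1, h2⟩ := hy
  have e1 : |y.1 - x.1| ≤ 2 := by
    nlinarith [sq_nonneg (y.1 - x.1), sq_nonneg (y.2 - x.2), abs_nonneg (y.1-x.1),
      sq_abs (y.1-x.1), sq_abs (y.2-x.2)]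
  have e2 : |y.2 - x.2| ≤ 2 := by
    nlinarith [sq_nonneg (y.1 - x.1), sq_nonneg (y.2 - x.2), abs_nonneg (y.2-x.2),
      sq_abs (y.1-x.1), sq_abs (y.2-x.2)]
  rw [Metric.mem_closedBall, Prod.dist_eq]
  simp only [Real.dist_eq]
  exact max_le e1 e2

lemma integrableOn_mvpAnn {g : ℝ × ℝ → ℝ} (hg : Continuous g) (x : ℝ × ℝ) :
    IntegrableOn g (mvpAnn x) :=
  (hg.locallyIntegrable.integrableOn_isCompact
    (ProperSpace.isCompact_closedBall x 2)).mono_set (mvpAnn_subset_closedBall x)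

lemma periodic_shift_integral {F : ℝ → ℝ} (hF : Function.Periodic F (2 * π)) (c : ℝ) :
    ∫ u in (0:ℝ)..(2 * π), F (c + u) = ∫ u in (0:ℝ)..(2 * π), F u := by
  rw [intervalIntegral.integral_comp_add_left]
  simpa using hF.intervalIntegral_add_eq c 0

lemma double_integral_eq {g : ℝ × ℝ → ℝ} (hg : Continuous g) {M : ℝ} (hgb : ∀ y, |g y| ≤ M)
    (hmvp : ∀ P : ℝ × ℝ,
      (∫ t in (0:ℝ)..(2 * π), g (P.1 + Real.cos t, P.2 + Real.sin t)) = 2 * π * g P)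
    (x : ℝ × ℝ) :
    ∫ u in (0:ℝ)..(2*π), (∫ t in (0:ℝ)..(2*π),
        g (x.1 + 2*Real.cos (u/2)*Real.cos t, x.2 + 2*Real.cos (u/2)*Real.sin t))
      = (2*π)^2 * g x := by
  have hΦc : Continuous (fun p : ℝ × ℝ => g (x.1 + 2*Real.cos (p.2/2)*Real.cos (p.1+p.2/2),
      x.2 + 2*Real.cos (p.2/2)*Real.sin (p.1+p.2/2))) := hg.comp (by fun_prop)
  -- step 1: iterated MVP
  have step1 : ∫ t in (0:ℝ)..(2*π), (∫ s in (0:ℝ)..(2*π),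
      g (x.1 + Real.cos t + Real.cos s, x.2 + Real.sin t + Real.sin s)) = (2*π)^2 * g x := by
    rw [intervalIntegral.integral_congr
      (g := fun t => 2 * π * g (x.1 + Real.cos t, x.2 + Real.sin t))
      (fun t _ => by simpa using hmvp (x.1 + Real.cos t, x.2 + Real.sin t))]
    rw [intervalIntegral.integral_const_mul, hmvp x]
    ring
  -- step 2: substitution s = t + u and trig identity, for each t
  have step2 : ∀ t : ℝ, (∫ s in (0:ℝ)..(2*π),
      g (x.1 + Real.cos t + Real.cos s, x.2 + Real.sin t + Real.sin s))
      = ∫ u in (0:ℝ)..(2*π),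
        g (x.1 + 2*Real.cos (u/2)*Real.cos (t+u/2), x.2 + 2*Real.cos (u/2)*Real.sin (t+u/2)) := by
    intro t
    have hper : Function.Periodic
        (fun s => g (x.1 + Real.cos t + Real.cos s, x.2 + Real.sin t + Real.sin s)) (2*π) :=
      fun s => by simp [Real.cos_add_two_pi, Real.sin_add_two_pi]
    rw [← periodic_shift_integral hper t]
    refine intervalIntegral.integral_congr fun u _ => ?_
    have h1 : Real.cos t + Real.cos (t + u) = 2*Real.cos (u/2)*Real.cos (t+u/2) := by
      have := Real.cos_add_cos t (t + u)
      rw [show (t+(t+u))/2 = t+u/2 by ring, show (t-(t+u))/2 = -(u/2) by ring, Real.cos_neg]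
        at this
      linarith
    have h2 : Real.sin t + Real.sin (t + u) = 2*Real.cos (u/2)*Real.sin (t+u/2) := by
      have := Real.two_mul_sin_mul_cos (t+u/2) (u/2)
      rw [show t+u/2-u/2 = t by ring, show t+u/2+u/2 = t+u by ring] at this
      linarith
    rw [show x.1 + Real.cos t + Real.cos (t+u) = x.1 + (Real.cos t + Real.cos (t+u)) by ring, h1,
      show x.2 + Real.sin t + Real.sin (t+u) = x.2 + (Real.sin t + Real.sin (t+u)) by ring, h2]
  -- step 3: Fubini swap
  have step3 : ∫ t in (0:ℝ)..(2*π), (∫ u in (0:ℝ)..(2*π),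
      g (x.1 + 2*Real.cos (u/2)*Real.cos (t+u/2), x.2 + 2*Real.cos (u/2)*Real.sin (t+u/2)))
      = ∫ u in (0:ℝ)..(2*π), (∫ t in (0:ℝ)..(2*π),
      g (x.1 + 2*Real.cos (u/2)*Real.cos (t+u/2), x.2 + 2*Real.cos (u/2)*Real.sin (t+u/2))) := by
    have h2π : (0:ℝ) ≤ 2*π := by positivity
    haveI : IsFiniteMeasure (volume.restrict (Ioc (0:ℝ) (2*π))) :=
      ⟨by rw [Measure.restrict_apply_univ]; simp [Real.volume_Ioc]; exact ENNReal.mul_lt_top (by simp) ENNReal.ofReal_lt_top⟩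
    have hint : Integrable (Function.uncurry (fun t u : ℝ =>
        g (x.1 + 2*Real.cos (u/2)*Real.cos (t+u/2), x.2 + 2*Real.cos (u/2)*Real.sin (t+u/2))))
        ((volume.restrict (Ioc (0:ℝ) (2*π))).prod (volume.restrict (Ioc (0:ℝ) (2*π)))) := by
      refine Integrable.mono' (integrable_const M) ?_ ?_
      · exact (hΦc.comp (continuous_fst.prodMk continuous_snd)).aestronglyMeasurable
      · exact Filter.Eventually.of_forall fun p => by
          simpa [Function.uncurry_def] using hgb _
    simp only [intervalIntegral.integral_of_le h2π]
    exact MeasureTheory.integral_integral_swap hint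
  -- step 4: inner shift for fixed u
  have step4 : ∀ u : ℝ, (∫ t in (0:ℝ)..(2*π),
      g (x.1 + 2*Real.cos (u/2)*Real.cos (t+u/2), x.2 + 2*Real.cos (u/2)*Real.sin (t+u/2)))
      = ∫ t in (0:ℝ)..(2*π),
        g (x.1 + 2*Real.cos (u/2)*Real.cos t, x.2 + 2*Real.cos (u/2)*Real.sin t) := by
    intro u
    have hper : Function.Periodic
        (fun t => g (x.1 + 2*Real.cos (u/2)*Real.cos t, x.2 + 2*Real.cos (u/2)*Real.sin t))
        (2*π) := fun s => by simp [Real.cos_add_two_pi, Real.sin_add_two_pi]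
    rw [← periodic_shift_integral hper (u/2)]
    exact intervalIntegral.integral_congr fun t _ => by rw [add_comm (u/2) t]
  calc ∫ u in (0:ℝ)..(2*π), (∫ t in (0:ℝ)..(2*π),
        g (x.1 + 2*Real.cos (u/2)*Real.cos t, x.2 + 2*Real.cos (u/2)*Real.sin t))
      = ∫ u in (0:ℝ)..(2*π), (∫ t in (0:ℝ)..(2*π),
        g (x.1 + 2*Real.cos (u/2)*Real.cos (t+u/2), x.2 + 2*Real.cos (u/2)*Real.sin (t+u/2))) :=
        intervalIntegral.integral_congr fun u _ => (step4 u).symm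
    _ = ∫ t in (0:ℝ)..(2*π), (∫ u in (0:ℝ)..(2*π),
        g (x.1 + 2*Real.cos (u/2)*Real.cos (t+u/2), x.2 + 2*Real.cos (u/2)*Real.sin (t+u/2))) :=
        step3.symm
    _ = ∫ t in (0:ℝ)..(2*π), (∫ s in (0:ℝ)..(2*π),
        g (x.1 + Real.cos t + Real.cos s, x.2 + Real.sin t + Real.sin s)) :=
        intervalIntegral.integral_congr fun t _ => (step2 t).symm
    _ = (2*π)^2 * g x := step1



noncomputable def mvpTh (g : ℝ × ℝ → ℝ) (x : ℝ × ℝ) (ρ : ℝ) : ℝ :=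
  ∫ t in (0:ℝ)..(2*π), g (x.1 + ρ * Real.cos t, x.2 + ρ * Real.sin t)

lemma mvpTh_cont {g : ℝ × ℝ → ℝ} (hg : Continuous g) (x : ℝ × ℝ) :
    Continuous (mvpTh g x) :=
  intervalIntegral.continuous_parametric_intervalIntegral_of_continuous'
    (f := fun ρ t => g (x.1 + ρ * Real.cos t, x.2 + ρ * Real.sin t))
    (hg.comp (by fun_prop)) 0 (2*π)

lemma mvpTh_nonneg {g : ℝ × ℝ → ℝ} (hg0 : ∀ y, 0 ≤ g y) (x : ℝ × ℝ) (ρ : ℝ) :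
    0 ≤ mvpTh g x ρ :=
  intervalIntegral.integral_nonneg (by positivity) (fun t _ => hg0 _)

lemma rTh_bound {g : ℝ × ℝ → ℝ} (hg : Continuous g) {M : ℝ} (hgb : ∀ y, |g y| ≤ M)
    (hg0 : ∀ y, 0 ≤ g y)
    (hmvp : ∀ P : ℝ × ℝ,
      (∫ t in (0:ℝ)..(2 * π), g (P.1 + Real.cos t, P.2 + Real.sin t)) = 2 * π * g P)
    (x : ℝ × ℝ) :
    (∫ r in (2/5:ℝ)..(8/5), r * mvpTh g x r) ≤ (8/5) * ((2*π)^2 * g x) := by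
  have hThc := mvpTh_cont hg x
  have hTh0 := mvpTh_nonneg hg0 x
  set a : ℝ := 2 * Real.arccos (4/5) with ha
  set b : ℝ := 2 * Real.arccos (1/5) with hb
  have ha0 : 0 ≤ a := by have := Real.arccos_nonneg (4/5); linarith
  have hab : a ≤ b := by
    have := Real.strictAntiOn_arccos (by norm_num : (1/5:ℝ) ∈ Icc (-1:ℝ) 1)
      (by norm_num : (4/5:ℝ) ∈ Icc (-1:ℝ) 1) (by norm_num)
    linarith
  have hb2π : b ≤ 2*π := by
    have := Real.arccos_le_pi (1/5)
    nlinarith [Real.pi_pos]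
  -- derivative facts
  have hderiv : ∀ u : ℝ, HasDerivAt (fun u => 2 * Real.cos (u/2)) (-Real.sin (u/2)) u := by
    intro u
    have h1 : HasDerivAt (fun u : ℝ => u/2) (1/2) u := (hasDerivAt_id u).div_const 2
    have h2 := (Real.hasDerivAt_cos (u/2)).comp u h1
    have h3 := h2.const_mul (2:ℝ)
    exact h3.congr_deriv (by ring)
  have hρc : Continuous (fun u : ℝ => 2 * Real.cos (u/2)) := by fun_prop
  -- step 8 (CoV)
  have step8 : (∫ u in a..b, Real.sin (u/2) * mvpTh g x (2*Real.cos (u/2)))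
      = ∫ r in (2/5:ℝ)..(8/5), mvpTh g x r := by
    have := intervalIntegral.integral_comp_smul_deriv (a := a) (b := b)
      (f := fun u => 2 * Real.cos (u/2)) (f' := fun u => -Real.sin (u/2)) (g := mvpTh g x)
      (fun u _ => hderiv u) (Continuous.continuousOn (by fun_prop)) hThc
    have hfa : 2 * Real.cos (a/2) = 8/5 := by
      rw [ha, show 2 * Real.arccos (4/5) / 2 = Real.arccos (4/5) by ring,
        Real.cos_arccos (by norm_num) (by norm_num)]
      norm_num
    have hfb : 2 * Real.cos (b/2) = 2/5 := by
      rw [hb, show 2 * Real.arccos (1/5) / 2 = Real.arccos (1/5) by ring,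
        Real.cos_arccos (by norm_num) (by norm_num)]
      norm_num
    beta_reduce at this
    rw [hfa, hfb] at this
    have hneg : (∫ u in a..b, (-Real.sin (u/2)) • ((mvpTh g x) ∘ (fun u => 2 * Real.cos (u/2))) u)
        = -∫ u in a..b, Real.sin (u/2) * mvpTh g x (2*Real.cos (u/2)) := by
      rw [← intervalIntegral.integral_neg]
      refine intervalIntegral.integral_congr fun u _ => ?_
      simp [smul_eq_mul]
    rw [hneg] at this
    rw [intervalIntegral.integral_symm (2/5:ℝ) (8/5:ℝ)] at this
    linarith [this]
  -- step 7: sin bound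
  have step7 : (∫ u in a..b, Real.sin (u/2) * mvpTh g x (2*Real.cos (u/2)))
      ≤ ∫ u in a..b, mvpTh g x (2*Real.cos (u/2)) := by
    apply intervalIntegral.integral_mono_on hab
    · exact ((Real.continuous_sin.comp (by fun_prop)).mul (hThc.comp hρc)).intervalIntegrable _ _
    · exact (hThc.comp hρc).intervalIntegrable _ _
    · intro u hu
      exact mul_le_of_le_one_left (hTh0 _) (Real.sin_le_one _)
  -- step 6: positivity outside [a,b]
  have step6 : (∫ u in a..b, mvpTh g x (2*Real.cos (u/2))) ≤ (2*π)^2 * g x := by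
    have hint : ∀ c d : ℝ, IntervalIntegrable (fun u => mvpTh g x (2*Real.cos (u/2))) volume c d :=
      fun c d => (hThc.comp hρc).intervalIntegrable c d
    have hsplit : (∫ u in (0:ℝ)..a, mvpTh g x (2*Real.cos (u/2)))
        + (∫ u in a..b, mvpTh g x (2*Real.cos (u/2)))
        + (∫ u in b..(2*π), mvpTh g x (2*Real.cos (u/2)))
        = ∫ u in (0:ℝ)..(2*π), mvpTh g x (2*Real.cos (u/2)) := by
      rw [intervalIntegral.integral_add_adjacent_intervals (hint 0 a) (hint a b),
        intervalIntegral.integral_add_adjacent_intervals (hint 0 b) (hint b (2*π))]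
    have h1 : 0 ≤ ∫ u in (0:ℝ)..a, mvpTh g x (2*Real.cos (u/2)) :=
      intervalIntegral.integral_nonneg ha0 (fun u _ => hTh0 _)
    have h2 : 0 ≤ ∫ u in b..(2*π), mvpTh g x (2*Real.cos (u/2)) :=
      intervalIntegral.integral_nonneg hb2π (fun u _ => hTh0 _)
    have hD : (∫ u in (0:ℝ)..(2*π), mvpTh g x (2*Real.cos (u/2))) = (2*π)^2 * g x := by
      simpa only [mvpTh] using double_integral_eq hg hgb hmvp x
    linarith
  -- step 9
  have step9 : (∫ r in (2/5:ℝ)..(8/5), r * mvpTh g x r)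
      ≤ (8/5) * ∫ r in (2/5:ℝ)..(8/5), mvpTh g x r := by
    rw [← intervalIntegral.integral_const_mul]
    apply intervalIntegral.integral_mono_on (by norm_num)
    · exact (continuous_id.mul hThc).intervalIntegrable _ _
    · exact (continuous_const.mul hThc).intervalIntegrable _ _
    · intro r hr
      exact mul_le_mul_of_nonneg_right hr.2 (hTh0 r)
  calc (∫ r in (2/5:ℝ)..(8/5), r * mvpTh g x r)
      ≤ (8/5) * ∫ r in (2/5:ℝ)..(8/5), mvpTh g x r := step9
    _ = (8/5) * ∫ u in a..b, Real.sin (u/2) * mvpTh g x (2*Real.cos (u/2)) := by rw [step8]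
    _ ≤ (8/5) * ((2*π)^2 * g x) := by
          have := le_trans step7 step6
          nlinarith [this]

lemma polar_eq {g : ℝ × ℝ → ℝ} (hg : Continuous g) {M : ℝ} (hgb : ∀ y, |g y| ≤ M) (x : ℝ × ℝ) :
    ∫ y in mvpAnn x, g y = ∫ r in (2/5:ℝ)..(8/5), r * mvpTh g x r := by
  have hM0 : 0 ≤ M := (abs_nonneg _).trans (hgb x)
  set F : ℝ × ℝ → ℝ := Set.indicator (mvpAnn 0) (fun w => g (x + w)) with hF
  have hFm : Measurable F :=
    ((hg.comp (continuous_const.add continuous_id)).measurable).indicator (measurableSet_mvpAnn 0)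
  have hFb : ∀ w, |F w| ≤ M := by
    intro w
    rw [hF]
    by_cases hw : w ∈ mvpAnn 0
    · rw [Set.indicator_of_mem hw]; exact hgb _
    · rw [Set.indicator_of_notMem hw]; simpa using hM0
  have hFval : ∀ r θ : ℝ, r ∈ Icc (2/5:ℝ) (8/5) →
      F (r * Real.cos θ, r * Real.sin θ) = g (x.1 + r * Real.cos θ, x.2 + r * Real.sin θ) := by
    intro r θ hr
    have h1 : (r * Real.cos θ)^2 + (r * Real.sin θ)^2 = r^2 := by
      have h := Real.sin_sq_add_cos_sq θ
      calc (r * Real.cos θ)^2 + (r * Real.sin θ)^2 = r^2 * (Real.sin θ^2 + Real.cos θ^2) := by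
            ring
        _ = r^2 := by rw [h]; ring
    have hmem : (r * Real.cos θ, r * Real.sin θ) ∈ mvpAnn 0 := by
      simp only [mvpAnn, Set.mem_setOf_eq, Prod.fst_zero, Prod.snd_zero, sub_zero, Set.mem_Icc]
      rw [h1]
      constructor <;> nlinarith [hr.1, hr.2]
    rw [hF, Set.indicator_of_mem hmem]
    congr 1
    all_goals ext <;> simp
  set R : Set (ℝ × ℝ) := Icc (2/5:ℝ) (8/5) ×ˢ Ioo (-π) π with hR
  have hRsub : R ⊆ polarCoord.target := by
    rintro ⟨r, θ⟩ ⟨hr, hθ⟩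
    exact ⟨lt_of_lt_of_le (by norm_num) hr.1, hθ⟩
  have hπ : (0:ℝ) < π := Real.pi_pos
  calc ∫ y in mvpAnn x, g y
      = ∫ w, F w := by
        rw [← MeasureTheory.integral_indicator (measurableSet_mvpAnn x),
          ← MeasureTheory.integral_add_left_eq_self (Set.indicator (mvpAnn x) g) x]
        congr 1
        funext w
        rw [hF]
        have hiff : x + w ∈ mvpAnn x ↔ w ∈ mvpAnn 0 := by
          simp only [mvpAnn, Set.mem_setOf_eq, Prod.fst_add, Prod.snd_add, Prod.fst_zero,
            Prod.snd_zero, sub_zero, add_sub_cancel_left]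
        by_cases hw : w ∈ mvpAnn 0
        · rw [Set.indicator_of_mem (hiff.mpr hw), Set.indicator_of_mem hw]
        · rw [Set.indicator_of_notMem (fun h => hw (hiff.mp h)),
            Set.indicator_of_notMem hw]
    _ = ∫ p in polarCoord.target, p.1 • F (polarCoord.symm p) :=
        (integral_comp_polarCoord_symm F).symm
    _ = ∫ p in polarCoord.target, p.1 • F (p.1 * Real.cos p.2, p.1 * Real.sin p.2) := by
        simp only [polarCoord_symm_apply]
    _ = ∫ p in R, p.1 • F (p.1 * Real.cos p.2, p.1 * Real.sin p.2) := by
        apply MeasureTheory.setIntegral_eq_of_subset_of_ae_diff_eq_zero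
          polarCoord.open_target.measurableSet.nullMeasurableSet hRsub
        refine Filter.Eventually.of_forall fun p hp => ?_
        obtain ⟨⟨hp1, hp2⟩, hpR⟩ := hp
        have hp1' : (0:ℝ) < p.1 := hp1
        have hnot : ¬ (p.1 * Real.cos p.2, p.1 * Real.sin p.2) ∈ mvpAnn 0 := by
          intro hmem
          simp only [mvpAnn, Set.mem_setOf_eq, Prod.fst_zero, Prod.snd_zero, sub_zero,
            Set.mem_Icc] at hmem
          obtain ⟨hlo, hhi⟩ := hmem
          have h1 : (p.1 * Real.cos p.2)^2 + (p.1 * Real.sin p.2)^2 = p.1^2 := by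
            have h := Real.sin_sq_add_cos_sq p.2
            calc (p.1 * Real.cos p.2)^2 + (p.1 * Real.sin p.2)^2
                = p.1^2 * (Real.sin p.2^2 + Real.cos p.2^2) := by ring
              _ = p.1^2 := by rw [h]; ring
          rw [h1] at hlo hhi
          have hpIcc : p.1 ∈ Icc (2/5:ℝ) (8/5) := by
            constructor <;> nlinarith [hp1']
          exact hpR ⟨hpIcc, hp2⟩
        rw [hF, Set.indicator_of_notMem hnot, smul_zero]
    _ = ∫ r in Icc (2/5:ℝ) (8/5),
          (∫ θ in Ioo (-π) π, r • F (r * Real.cos θ, r * Real.sin θ)) := by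
        rw [hR, MeasureTheory.Measure.volume_eq_prod]
        apply MeasureTheory.setIntegral_prod
        -- integrability
        haveI : IsFiniteMeasure ((volume.prod volume).restrict
            (Icc (2/5:ℝ) (8/5) ×ˢ Ioo (-π) π)) := by
          constructor
          rw [Measure.restrict_apply_univ, Measure.prod_prod]
          exact ENNReal.mul_lt_top (by simp [Real.volume_Icc]) (by simp [Real.volume_Ioo])
        refine Integrable.mono' (integrable_const ((8/5) * M)) ?_ ?_
        · refine AEStronglyMeasurable.restrict ?_
          refine (measurable_fst.smul (hFm.comp ?_)).aestronglyMeasurable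
          exact (measurable_fst.mul (Real.measurable_cos.comp measurable_snd)).prodMk
            (measurable_fst.mul (Real.measurable_sin.comp measurable_snd))
        · rw [MeasureTheory.ae_restrict_iff' ((measurableSet_Icc).prod measurableSet_Ioo)]
          refine Filter.Eventually.of_forall fun p hp => ?_
          obtain ⟨hp1, _⟩ := hp
          have h1 : |p.1| ≤ 8/5 := by
            rw [abs_of_nonneg (le_trans (by norm_num) hp1.1)]; exact hp1.2
          have := hFb (polarCoord.symm p)
          rw [smul_eq_mul, Real.norm_eq_abs, abs_mul]
          exact mul_le_mul h1 this (abs_nonneg _) (by norm_num)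
    _ = ∫ r in Icc (2/5:ℝ) (8/5), r * mvpTh g x r := by
        apply MeasureTheory.setIntegral_congr_fun measurableSet_Icc
        intro r hr
        have hper : Function.Periodic
            (fun θ => g (x.1 + r * Real.cos θ, x.2 + r * Real.sin θ)) (2*π) :=
          fun s => by simp [Real.cos_add_two_pi, Real.sin_add_two_pi]
        calc (∫ θ in Ioo (-π) π, r • F (r * Real.cos θ, r * Real.sin θ))
            = ∫ θ in Ioo (-π) π, r • g (x.1 + r * Real.cos θ, x.2 + r * Real.sin θ) := by
              apply MeasureTheory.setIntegral_congr_fun measurableSet_Ioo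
              intro θ _
              beta_reduce
              rw [hFval r θ hr]
          _ = r * ∫ θ in Ioo (-π) π, g (x.1 + r * Real.cos θ, x.2 + r * Real.sin θ) := by
              simp_rw [smul_eq_mul]
              exact MeasureTheory.integral_const_mul r _
          _ = r * mvpTh g x r := by
              congr 1
              rw [← MeasureTheory.integral_Ioc_eq_integral_Ioo,
                ← intervalIntegral.integral_of_le (by linarith : (-π:ℝ) ≤ π)]
              have := hper.intervalIntegral_add_eq (-π) 0
              rw [show (-π + 2*π : ℝ) = π by ring, zero_add] at this
              rw [mvpTh]
              exact this
    _ = ∫ r in (2/5:ℝ)..(8/5), r * mvpTh g x r := by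
        rw [intervalIntegral.integral_of_le (by norm_num : (2/5:ℝ) ≤ 8/5),
          ← MeasureTheory.integral_Icc_eq_integral_Ioc]

lemma annulus_bound {g : ℝ × ℝ → ℝ} (hg : Continuous g) {M : ℝ} (hgb : ∀ y, |g y| ≤ M)
    (hg0 : ∀ y, 0 ≤ g y)
    (hmvp : ∀ P : ℝ × ℝ,
      (∫ t in (0:ℝ)..(2 * π), g (P.1 + Real.cos t, P.2 + Real.sin t)) = 2 * π * g P)
    (x : ℝ × ℝ) :
    ∫ y in mvpAnn x, g y ≤ (8/5) * (2*π)^2 * g x := by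
  have h1 := polar_eq hg hgb x
  have h2 := rTh_bound hg hgb hg0 hmvp x
  rw [h1]
  linarith

/-- Small closed ball (in the sup metric of `ℝ × ℝ`) of radius `1/8`. -/
def SBall (c : ℝ × ℝ) : Set (ℝ × ℝ) := Metric.closedBall c (1/8)

lemma volume_SBall (c : ℝ × ℝ) : volume (SBall c) = ENNReal.ofReal (1/16) := by
  rw [SBall, ← Prod.mk.eta (p := c), ← closedBall_prod_same, MeasureTheory.Measure.volume_eq_prod,
    MeasureTheory.Measure.prod_prod, Real.volume_closedBall, Real.volume_closedBall,
    ← ENNReal.ofReal_mul (by norm_num)]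
  norm_num

lemma ball_min {g : ℝ × ℝ → ℝ} (hg : Continuous g) (c : ℝ × ℝ) {δ : ℝ}
    (hint : (∫ y in SBall c, g y) ≤ δ) :
    ∃ z ∈ SBall c, g z ≤ 16 * δ := by
  have hcpt : IsCompact (SBall c) := by
    rw [SBall]; exact ProperSpace.isCompact_closedBall _ _
  have hne : (SBall c).Nonempty := ⟨c, by rw [SBall]; exact Metric.mem_closedBall_self (by norm_num)⟩
  obtain ⟨z, hz, hmin⟩ := hcpt.exists_isMinOn hne hg.continuousOn
  refine ⟨z, hz, ?_⟩
  have h1 : g z * (volume (SBall c)).toReal ≤ ∫ y in SBall c, g y := by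
    have h1' := MeasureTheory.setIntegral_ge_of_const_le (μ := volume) hcpt.measurableSet
      (by rw [volume_SBall]; exact ENNReal.ofReal_ne_top)
      (fun x hx => isMinOn_iff.mp hmin x hx)
      (hg.locallyIntegrable.integrableOn_isCompact hcpt)
    rwa [smul_eq_mul, mul_comm, Measure.real] at h1'
  rw [volume_SBall, ENNReal.toReal_ofReal (by norm_num)] at h1
  linarith

lemma ball_subset_mvpAnn {v z c : ℝ × ℝ} (hv : v.1 ^ 2 + v.2 ^ 2 = 1)
    (hz : z ∈ SBall c) : SBall (c + v) ⊆ mvpAnn z := by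
  rw [SBall] at hz
  intro y hy
  rw [SBall] at hy
  rw [Metric.mem_closedBall, Prod.dist_eq, max_le_iff, Real.dist_eq, Real.dist_eq] at hy hz
  obtain ⟨hz1, hz2⟩ := hz
  obtain ⟨hy1, hy2⟩ := hy
  rw [abs_le] at hz1 hz2 hy1 hy2
  simp only [Prod.fst_add, Prod.snd_add] at hy1 hy2
  obtain ⟨t1, t2, e1, e2, hT, hCS⟩ : ∃ t1 t2 : ℝ, y.1 - z.1 = v.1 + t1 ∧ y.2 - z.2 = v.2 + t2
      ∧ t1 ^ 2 + t2 ^ 2 ≤ 1 / 8 ∧ (v.1 * t1 + v.2 * t2) ^ 2 ≤ t1 ^ 2 + t2 ^ 2 := by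
    refine ⟨(y.1 - (c.1 + v.1)) - (z.1 - c.1), (y.2 - (c.2 + v.2)) - (z.2 - c.2),
      by ring, by ring, by nlinarith, by nlinarith [sq_nonneg (v.1 * ((y.2 - (c.2 + v.2))
        - (z.2 - c.2)) - v.2 * ((y.1 - (c.1 + v.1)) - (z.1 - c.1)))]⟩
  have key : (y.1 - z.1) ^ 2 + (y.2 - z.2) ^ 2
      = 1 + 2 * (v.1 * t1 + v.2 * t2) + (t1 ^ 2 + t2 ^ 2) := by
    rw [e1, e2]; nlinarith [hv]
  constructor
  · rw [key]; nlinarith [sq_nonneg (v.1 * t1 + v.2 * t2 + 1/2)]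
  · rw [key]; nlinarith [sq_nonneg (v.1 * t1 + v.2 * t2 - 1)]

lemma setIntegral_translate (φ : ℝ × ℝ → ℝ) (c w : ℝ × ℝ) :
    ∫ y in SBall c, φ (y + w) = ∫ y in SBall (c + w), φ y := by
  rw [SBall, SBall,
    ← MeasureTheory.integral_indicator (measurableSet_closedBall),
    ← MeasureTheory.integral_indicator (measurableSet_closedBall),
    ← MeasureTheory.integral_add_right_eq_self
      (Set.indicator (Metric.closedBall (c + w) (1/8)) φ) w]
  congr 1
  funext y
  by_cases hy : y ∈ Metric.closedBall c (1/8)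
  · rw [Set.indicator_of_mem hy, Set.indicator_of_mem (by
      rw [Metric.mem_closedBall] at hy ⊢; rwa [dist_add_right])]
  · rw [Set.indicator_of_notMem hy, Set.indicator_of_notMem (by
      rw [Metric.mem_closedBall] at hy ⊢; rwa [dist_add_right])]

lemma dir_nonpos {f : ℝ × ℝ → ℝ} (hcont : Continuous f) {C : ℝ} (hC : ∀ x, |f x| ≤ C)
    (hmvp : ∀ P : ℝ × ℝ,
      (∫ t in (0:ℝ)..(2 * π), f (P.1 + Real.cos t, P.2 + Real.sin t)) = 2 * π * f P)
    {v : ℝ × ℝ} (hv : v.1 ^ 2 + v.2 ^ 2 = 1) (x₀ : ℝ × ℝ) : f (x₀ + v) ≤ f x₀ := by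
  have hC0 : 0 ≤ C := (abs_nonneg _).trans (hC 0)
  set h : ℝ × ℝ → ℝ := fun x => f (x + v) - f x with hh
  have hhcont : Continuous h := (hcont.comp (continuous_id.add continuous_const)).sub hcont
  have hhb : ∀ x, |h x| ≤ 2 * C := fun x => by
    rw [hh]
    calc |f (x + v) - f x| ≤ |f (x + v)| + |f x| := abs_sub _ _
      _ ≤ 2 * C := by linarith [hC (x + v), hC x]
  have hbddA : BddAbove (Set.range h) := by
    refine ⟨2 * C, ?_⟩
    rintro - ⟨x, rfl⟩
    linarith [(abs_le.mp (hhb x)).1, (abs_le.mp (hhb x)).2]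
  set S : ℝ := sSup (Set.range h) with hS
  have hhS : ∀ x, h x ≤ S := fun x => le_csSup hbddA ⟨x, rfl⟩
  have hSle : S ≤ 2 * C := csSup_le (Set.range_nonempty h) (by rintro - ⟨x, rfl⟩; linarith [(abs_le.mp (hhb x)).1, (abs_le.mp (hhb x)).2])
  have hSge : -(2*C) ≤ S := le_trans (by linarith [(abs_le.mp (hhb 0)).1, (abs_le.mp (hhb 0)).2]) (hhS 0)
  -- the auxiliary nonnegative function
  set g : ℝ × ℝ → ℝ := fun x => S - h x with hg
  have hgcont : Continuous g := continuous_const.sub hhcont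
  have hg0 : ∀ y, 0 ≤ g y := fun y => by rw [hg]; simp only; linarith [hhS y]
  have hgb : ∀ y, |g y| ≤ 4 * C := fun y => by
    rw [hg, abs_le]
    constructor <;> simp only <;> linarith [(abs_le.mp (hhb y)).1, (abs_le.mp (hhb y)).2]
  have hgmvp : ∀ P : ℝ × ℝ,
      (∫ t in (0:ℝ)..(2 * π), g (P.1 + Real.cos t, P.2 + Real.sin t)) = 2 * π * g P := by
    intro P
    have hfi : ∀ Q : ℝ × ℝ, IntervalIntegrable
        (fun t => f (Q.1 + Real.cos t, Q.2 + Real.sin t)) volume 0 (2*π) :=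
      fun Q => (hcont.comp (by fun_prop)).intervalIntegrable _ _
    have heq : ∀ t : ℝ, g (P.1 + Real.cos t, P.2 + Real.sin t)
        = S - f ((P + v).1 + Real.cos t, (P + v).2 + Real.sin t)
          + f (P.1 + Real.cos t, P.2 + Real.sin t) := by
      intro t
      rw [hg, hh]
      simp only
      have : (P.1 + Real.cos t, P.2 + Real.sin t) + v
          = ((P + v).1 + Real.cos t, (P + v).2 + Real.sin t) := by
        ext <;> simp <;> ring
      rw [this]
      ring
    rw [intervalIntegral.integral_congr (fun t _ => heq t)]
    rw [intervalIntegral.integral_add (((_root_.intervalIntegrable_const).sub (hfi (P+v)))) (hfi P),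
      intervalIntegral.integral_sub _root_.intervalIntegrable_const (hfi (P+v)),
      intervalIntegral.integral_const, hmvp (P+v), hmvp P]
    have hgP : g P = S - f (P + v) + f P := by rw [hg, hh]; simp only; ring
    rw [hgP]
    simp only [smul_eq_mul]
    ring
  -- chain step
  set K0 : ℝ := (8/5) * (2*π)^2 with hK0
  have hK0pos : 0 < K0 := by positivity
  set K : ℝ := 16 * K0 with hK
  have hKpos : 0 < K := by positivity
  have step : ∀ (c : ℝ × ℝ) (δ : ℝ), (∫ y in SBall c, g y) ≤ δ →
      (∫ y in SBall (c + v), g y) ≤ K * δ := by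
    intro c δ hint
    obtain ⟨z, hz, hgz⟩ := ball_min hgcont c hint
    calc (∫ y in SBall (c + v), g y) ≤ (∫ y in mvpAnn z, g y) := by
          apply MeasureTheory.setIntegral_mono_set (integrableOn_mvpAnn hgcont z)
            (Filter.Eventually.of_forall hg0)
          exact HasSubset.Subset.eventuallyLE (ball_subset_mvpAnn hv hz)
      _ ≤ K0 * g z := by
          have := annulus_bound hgcont hgb hg0 hgmvp z
          rw [hK0]; linarith
      _ ≤ K * δ := by
          rw [hK]
          nlinarith [hgz, hK0pos]
  -- base point for given ε
  have base : ∀ ε : ℝ, 0 < ε → ∃ c₀ : ℝ × ℝ, (∫ y in SBall c₀, g y) ≤ K * ε := by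
    intro ε hε
    obtain ⟨-, ⟨xm, rfl⟩, hx⟩ := exists_lt_of_lt_csSup (Set.range_nonempty h)
      (show S - ε < S by linarith)
    have hgx : g xm ≤ ε := by rw [hg]; simp only; linarith
    refine ⟨xm + v, ?_⟩
    calc (∫ y in SBall (xm + v), g y) ≤ (∫ y in mvpAnn xm, g y) := by
          apply MeasureTheory.setIntegral_mono_set (integrableOn_mvpAnn hgcont xm)
            (Filter.Eventually.of_forall hg0)
          exact HasSubset.Subset.eventuallyLE
            (ball_subset_mvpAnn hv (Metric.mem_closedBall_self (by norm_num)))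
      _ ≤ K0 * g xm := by
          have := annulus_bound hgcont hgb hg0 hgmvp xm
          rw [hK0]; linarith
      _ ≤ K * ε := by
          rw [hK]
          nlinarith [hgx, hK0pos]
  -- the chain
  have chain : ∀ ε : ℝ, 0 < ε → ∃ c₀ : ℝ × ℝ, ∀ k : ℕ,
      (∫ y in SBall (c₀ + k • v), g y) ≤ ε * K ^ (k + 1) := by
    intro ε hε
    obtain ⟨c₀, hc₀⟩ := base ε hε
    refine ⟨c₀, ?_⟩
    intro k
    induction k with
    | zero => simpa using hc₀.trans (by nlinarith)
    | succ k ih =>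
        have := step (c₀ + k • v) _ ih
        have harr : c₀ + k • v + v = c₀ + (k+1) • v := by
          rw [succ_nsmul, add_assoc]
        rw [harr] at this
        calc (∫ y in SBall (c₀ + (k+1) • v), g y) ≤ K * (ε * K ^ (k+1)) := this
          _ = ε * K ^ (k+1+1) := by ring
  -- telescoping
  have hSBc : ∀ c : ℝ × ℝ, IsCompact (SBall c) := fun c => by
    rw [SBall]; exact ProperSpace.isCompact_closedBall c (1/8)
  have hSBm : ∀ c : ℝ × ℝ, MeasurableSet (SBall c) := fun c =>
    (hSBc c).isClosed.measurableSet
  have hvolS : ∀ c : ℝ × ℝ, (volume (SBall c)).toReal = 1/16 := fun c => by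
    rw [volume_SBall]; exact ENNReal.toReal_ofReal (by norm_num)
  have hIntSB : ∀ (φ : ℝ × ℝ → ℝ), Continuous φ → ∀ c, IntegrableOn φ (SBall c) :=
    fun φ hφ c => hφ.locallyIntegrable.integrableOn_isCompact (hSBc c)
  have hteles : ∀ (y : ℝ × ℝ) (n : ℕ),
      f (y + n • v) - f y = ∑ k ∈ Finset.range n, h (y + k • v) := by
    intro y n
    induction n with
    | zero => simp
    | succ n ih =>
        rw [Finset.sum_range_succ, ← ih, hh]
        simp only
        rw [succ_nsmul, ← add_assoc]
        ring
  have hkey : ∀ n : ℕ, (n : ℝ) * S ≤ 2 * C := by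
    intro n
    set T : ℝ := ∑ k ∈ Finset.range n, K ^ (k+1) with hT
    have hT0 : 0 ≤ T := Finset.sum_nonneg fun k _ => by positivity
    have hmain : ∀ ε : ℝ, 0 < ε → (n : ℝ) * S ≤ 2 * C + 16 * T * ε := by
      intro ε hε
      obtain ⟨c₀, hch⟩ := chain ε hε
      have hterm : ∀ k : ℕ, (∫ y in SBall c₀, h (y + k • v))
          = S * (1/16) - ∫ y in SBall (c₀ + k • v), g y := by
        intro k
        rw [setIntegral_translate h c₀ (k • v)]
        have hpt : ∀ y : ℝ × ℝ, h y = S - g y := fun y => by rw [hg]; simp only; ring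
        calc (∫ y in SBall (c₀ + k • v), h y)
            = ∫ y in SBall (c₀ + k • v), (S - g y) :=
              MeasureTheory.setIntegral_congr_fun (hSBm _) (fun y _ => hpt y)
          _ = (∫ _ in SBall (c₀ + k • v), S) - ∫ y in SBall (c₀ + k • v), g y :=
              MeasureTheory.integral_sub
                (MeasureTheory.integrableOn_const (by
                  rw [volume_SBall]; exact ENNReal.ofReal_ne_top))
                (hIntSB g hgcont _)
          _ = S * (1/16) - ∫ y in SBall (c₀ + k • v), g y := by
              rw [MeasureTheory.setIntegral_const, Measure.real, hvolS, smul_eq_mul, mul_comm]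
      have hsum : (∫ y in SBall c₀, (f (y + n • v) - f y))
          = ∑ k ∈ Finset.range n, (S * (1/16) - ∫ y in SBall (c₀ + k • v), g y) := by
        calc (∫ y in SBall c₀, (f (y + n • v) - f y))
            = ∫ y in SBall c₀, (∑ k ∈ Finset.range n, h (y + k • v)) :=
              MeasureTheory.setIntegral_congr_fun (hSBm _) (fun y _ => hteles y n)
          _ = ∑ k ∈ Finset.range n, ∫ y in SBall c₀, h (y + k • v) :=
              MeasureTheory.integral_finset_sum _ (fun k _ =>
                (hIntSB _ (hhcont.comp (continuous_id.add continuous_const)) c₀))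
          _ = _ := Finset.sum_congr rfl (fun k _ => hterm k)
      have hlhs : (∫ y in SBall c₀, (f (y + n • v) - f y)) ≤ 2 * C * (1/16) := by
        calc (∫ y in SBall c₀, (f (y + n • v) - f y))
            ≤ ∫ _ in SBall c₀, (2 * C : ℝ) := by
              apply MeasureTheory.setIntegral_mono_on
                (((by fun_prop : Continuous fun y : ℝ × ℝ => f (y + n • v) - f y)).locallyIntegrable.integrableOn_isCompact (hSBc c₀))
                (MeasureTheory.integrableOn_const (by
                  rw [volume_SBall]; exact ENNReal.ofReal_ne_top))
                (hSBm c₀)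
              intro y _
              linarith [(abs_le.mp (hC (y + n • v))).2, (abs_le.mp (hC y)).1]
          _ = 2 * C * (1/16) := by
              rw [MeasureTheory.setIntegral_const, Measure.real, hvolS, smul_eq_mul, mul_comm]
      have hrhs : ∑ k ∈ Finset.range n, (S * (1/16) - ∫ y in SBall (c₀ + k • v), g y)
          ≥ (n : ℝ) * (S * (1/16)) - ε * T := by
        rw [Finset.sum_sub_distrib]
        have h1 : ∑ _k ∈ Finset.range n, S * (1/16) = (n : ℝ) * (S * (1/16)) := by
          rw [Finset.sum_const, Finset.card_range, nsmul_eq_mul]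
        have h2 : ∑ k ∈ Finset.range n, (∫ y in SBall (c₀ + k • v), g y)
            ≤ ∑ k ∈ Finset.range n, ε * K ^ (k+1) := Finset.sum_le_sum fun k _ => hch k
        rw [h1]
        have h3 : ∑ k ∈ Finset.range n, ε * K ^ (k+1) = ε * T := by
          rw [hT, Finset.mul_sum]
        linarith
      rw [hsum] at hlhs
      linarith
    rcases le_or_gt T 0 with hT' | hT'
    · have := hmain 1 one_pos
      nlinarith
    · apply le_of_forall_pos_le_add
      intro ε' hε'
      have := hmain (ε' / (16 * T)) (by positivity)
      calc (n : ℝ) * S ≤ 2 * C + 16 * T * (ε' / (16 * T)) := this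
        _ = 2 * C + ε' := by field_simp
  -- conclude S ≤ 0
  have hS0 : S ≤ 0 := by
    by_contra hpos
    push_neg at hpos
    obtain ⟨n, hn⟩ := exists_nat_gt (2 * C / S)
    have h2 : 2 * C < (n : ℝ) * S := by
      rw [div_lt_iff₀ hpos] at hn
      linarith
    exact absurd (hkey n) (not_le.mpr h2)
  have := hhS x₀
  rw [hh] at this
  simp only at this
  linarith

end MVPAux

open Real

/-- Problem 3: a bounded continuous function on the plane whose average over every
circle of radius 1 equals its value at the center is constant. -/
theorem unit_circle_mvp_bounded_const (f : ℝ × ℝ → ℝ)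
    (hcont : Continuous f)
    (hbdd : ∃ C : ℝ, ∀ x : ℝ × ℝ, |f x| ≤ C)
    (hmvp : ∀ P : ℝ × ℝ, f P =
      (1 / (2 * π)) * ∫ t in (0 : ℝ)..(2 * π), f (P.1 + Real.cos t, P.2 + Real.sin t)) :
    ∀ p q : ℝ × ℝ, f p = f q := by
  obtain ⟨C, hC⟩ := hbdd
  have hπ : (0:ℝ) < π := Real.pi_pos
  have hmvp2 : ∀ P : ℝ × ℝ,
      (∫ t in (0:ℝ)..(2*π), f (P.1 + Real.cos t, P.2 + Real.sin t)) = 2 * π * f P := by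
    intro P
    have h1 := hmvp P
    have h2π : (2*π) ≠ 0 := by positivity
    field_simp at h1
    linarith
  have hstep1 : ∀ (x u : ℝ × ℝ), u.1^2 + u.2^2 = 1 → f (x + u) = f x := by
    intro x u hu
    have h1 := dir_nonpos hcont hC hmvp2 hu x
    have hu' : (-u).1^2 + (-u).2^2 = 1 := by simpa using hu
    have h2 := dir_nonpos hcont hC hmvp2 hu' (x + u)
    rw [add_neg_cancel_right] at h2
    linarith
  have hstep2 : ∀ (x w : ℝ × ℝ), w.1^2 + w.2^2 ≤ 4 → f (x + w) = f x := by
    intro x w hw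
    rcases eq_or_lt_of_le (show (0:ℝ) ≤ w.1^2 + w.2^2 by positivity) with h0 | h0
    · have hw1 : w.1 = 0 := by nlinarith [sq_nonneg w.1, sq_nonneg w.2]
      have hw2 : w.2 = 0 := by nlinarith [sq_nonneg w.1, sq_nonneg w.2]
      have hw0 : w = 0 := by rw [Prod.ext_iff]; simp [hw1, hw2]
      rw [hw0, add_zero]
    · set d2 : ℝ := w.1^2 + w.2^2 with hd2
      set s : ℝ := Real.sqrt (1 - d2/4) with hs
      have hs2 : s^2 = 1 - d2/4 := Real.sq_sqrt (by simp only [hd2]; linarith)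
      have hd2pos : (0:ℝ) < d2 := h0
      have hdsq : (Real.sqrt d2)^2 = d2 := Real.sq_sqrt hd2pos.le
      have hdne : Real.sqrt d2 ≠ 0 := by positivity
      set u1 : ℝ × ℝ := (w.1/2 - s*w.2/Real.sqrt d2, w.2/2 + s*w.1/Real.sqrt d2) with hu1'
      set u2 : ℝ × ℝ := (w.1/2 + s*w.2/Real.sqrt d2, w.2/2 - s*w.1/Real.sqrt d2) with hu2'
      have hu1 : u1.1^2 + u1.2^2 = 1 := by
        rw [hu1']
        simp only
        field_simp
        nlinarith [hs2, hdsq]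
      have hu2 : u2.1^2 + u2.2^2 = 1 := by
        rw [hu2']
        simp only
        field_simp
        nlinarith [hs2, hdsq]
      have hsum : u1 + u2 = w := by
        rw [hu1', hu2', Prod.ext_iff]
        constructor <;> simp <;> ring
      calc f (x + w) = f ((x + u1) + u2) := by rw [← hsum, ← add_assoc]
        _ = f (x + u1) := hstep1 _ u2 hu2
        _ = f x := hstep1 x u1 hu1
  have hstepN : ∀ (n : ℕ) (x w : ℝ × ℝ), w.1^2 + w.2^2 ≤ 4 → f (x + n • w) = f x := by
    intro n
    induction n with
    | zero => intro x w _; simp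
    | succ n ih =>
        intro x w hw
        rw [succ_nsmul, ← add_assoc, hstep2 (x + n • w) w hw, ih x w hw]
  intro p q
  set w : ℝ × ℝ := p - q with hw
  obtain ⟨m, hm⟩ := exists_nat_gt (w.1^2 + w.2^2)
  set n : ℕ := m + 1 with hn
  have hnR : (0:ℝ) < n := by positivity
  have hwn : w.1^2 + w.2^2 < (n:ℝ) := by
    have : (m:ℝ) < n := by exact_mod_cast Nat.lt_succ_self m
    linarith
  set u : ℝ × ℝ := ((n:ℝ))⁻¹ • w with hu
  have hu4 : u.1^2 + u.2^2 ≤ 4 := by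
    rw [hu]
    simp only [Prod.smul_fst, Prod.smul_snd, smul_eq_mul]
    have h1 : (1:ℝ) ≤ (n:ℝ) := by exact_mod_cast Nat.one_le_iff_ne_zero.mpr (by omega)
    have key : ((n:ℝ))⁻¹ * w.1 * (((n:ℝ))⁻¹ * w.1) + ((n:ℝ))⁻¹ * w.2 * (((n:ℝ))⁻¹ * w.2)
        = (w.1^2 + w.2^2) / (n:ℝ)^2 := by field_simp
    have h2 : (w.1^2 + w.2^2) / (n:ℝ)^2 ≤ 1 := by
      rw [div_le_one (by positivity)]
      nlinarith
    nlinarith [key, h2, sq_nonneg (((n:ℝ))⁻¹ * w.1), sq_nonneg (((n:ℝ))⁻¹ * w.2)]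
  have hq : q + n • u = p := by
    rw [hu, ← Nat.cast_smul_eq_nsmul ℝ, smul_smul, mul_inv_cancel₀ (ne_of_gt hnR), one_smul,
      hw, add_sub_cancel]
  calc f p = f (q + n • u) := by rw [hq]
    _ = f q := hstepN n q u hu4
end

section
/- If f : ℝ² → ℝ is a continuous function that is everywhere positive and for every point P ∈ ℝ² satisfies f(P) = (1/(2π)) ∫₀^{2π} f(P + (cos t, sin t)) dt, then f is constant. -/
open Real Complex intervalIntegral Metric



lemma cont_integrand {r : ℝ} (hr : 2 ≤ r) :
    Continuous (fun t : ℝ => Complex.log ((r:ℂ) + Complex.exp (t * Complex.I))) := by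
  rw [continuous_iff_continuousAt]
  intro t
  have hre : (0:ℝ) < ((r:ℂ) + Complex.exp (t * Complex.I)).re := by
    have h1 : |(Complex.exp ((t:ℂ) * Complex.I)).re| ≤ ‖Complex.exp ((t:ℂ) * Complex.I)‖ :=
      Complex.abs_re_le_norm _
    rw [Complex.norm_exp_ofReal_mul_I] at h1
    have : ((r:ℂ) + Complex.exp (t * Complex.I)).re = r + (Complex.exp ((t:ℂ) * Complex.I)).re := by simp
    rw [this]
    cases' abs_le.mp h1 with hl hu
    linarith
  have h2 : ContinuousAt (fun z : ℂ => Complex.log ((r:ℂ) + z)) (Complex.exp ((t:ℝ) * Complex.I)) :=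
    (continuousAt_clog (Or.inl hre)).comp (by fun_prop)
  exact h2.comp (f := fun t : ℝ => Complex.exp (t * Complex.I)) (x := t) (by fun_prop)

lemma log_avg_real {r : ℝ} (hr : 2 ≤ r) :
    (∫ t in (0:ℝ)..(2*π), Real.log (‖(r:ℂ) + Complex.exp (t * Complex.I)‖))
      = 2 * π * Real.log r := by
  have hr0 : (0:ℝ) < r := by linarith
  set g : ℂ → ℂ := fun w => Complex.log ((r:ℂ) + w) with hg
  have hdiff : ∀ w ∈ closedBall (0:ℂ) 1, DifferentiableAt ℂ g w := by
    intro w hw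
    have hre : (0:ℝ) < ((r:ℂ) + w).re := by
      have h1 : |w.re| ≤ ‖w‖ := Complex.abs_re_le_norm w
      have h2 : ‖w‖ ≤ 1 := by simpa [Metric.mem_closedBall] using hw
      have : ((r:ℂ) + w).re = r + w.re := by simp
      rw [this]
      cases' abs_le.mp (h1.trans h2) with hl hu
      linarith
    exact (Complex.differentiableAt_log (Or.inl hre)).comp w
      ((differentiableAt_const _).add differentiableAt_id)
  have hkey : (∮ z in C((0:ℂ), 1), (z - 0)⁻¹ • g z) = (2 * ↑π * Complex.I : ℂ) • g 0 := by
    refine DiffContOnCl.circleIntegral_sub_inv_smul ?_ (by simp)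
    refine DifferentiableOn.diffContOnCl ?_
    intro w hw
    exact (hdiff w (closure_ball_subset_closedBall (by simpa using hw))).differentiableWithinAt
  have hunfold : (∮ z in C((0:ℂ), 1), (z - 0)⁻¹ • g z)
      = Complex.I * ∫ t in (0:ℝ)..(2*π), g (Complex.exp (t * Complex.I)) := by
    rw [circleIntegral]
    rw [← intervalIntegral.integral_const_mul]
    congr 1
    ext t
    rw [deriv_circleMap]
    have h1 : circleMap 0 1 t = Complex.exp (t * Complex.I) := by simp [circleMap]
    rw [h1, smul_eq_mul, smul_eq_mul]
    have : Complex.exp ((t:ℂ) * Complex.I) ≠ 0 := Complex.exp_ne_zero _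
    field_simp
    ring
  have hint : (∫ t in (0:ℝ)..(2*π), g (Complex.exp (t * Complex.I)))
      = 2 * ↑π * (Real.log r : ℂ) := by
    have hI : (Complex.I : ℂ) ≠ 0 := Complex.I_ne_zero
    have := hkey
    rw [hunfold] at this
    have hg0 : g 0 = (Real.log r : ℂ) := by
      simp only [hg, add_zero]
      exact (Complex.ofReal_log hr0.le).symm
    rw [hg0, smul_eq_mul] at this
    have h2 : Complex.I * (∫ t in (0:ℝ)..(2*π), g (Complex.exp (t * Complex.I)))
        = Complex.I * (2 * ↑π * (Real.log r : ℂ)) := by rw [this]; ring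
    exact mul_left_cancel₀ hI h2
  have hcomm := Complex.reCLM.intervalIntegral_comp_comm
    (μ := MeasureTheory.volume) (a := (0:ℝ)) (b := 2*π)
    ((cont_integrand hr).intervalIntegrable (0:ℝ) (2*π))
  calc (∫ t in (0:ℝ)..(2*π), Real.log (‖(r:ℂ) + Complex.exp (t * Complex.I)‖))
      = ∫ t in (0:ℝ)..(2*π), Complex.reCLM (Complex.log ((r:ℂ) + Complex.exp (t * Complex.I))) := by
        simp [Complex.log_re]
    _ = Complex.reCLM (∫ t in (0:ℝ)..(2*π), Complex.log ((r:ℂ) + Complex.exp (t * Complex.I))) := hcomm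
    _ = 2 * π * Real.log r := by rw [show (∫ t in (0:ℝ)..(2*π), Complex.log ((r:ℂ) + Complex.exp (t * Complex.I))) = 2 * ↑π * (Real.log r : ℂ) from hint]; simp



-- periodicity of t ↦ exp (t*I) composed things
lemma exp_I_periodic (G : ℂ → ℝ) : Function.Periodic (fun s : ℝ => G (Complex.exp (s * Complex.I))) (2*π) := by
  intro s
  have : Complex.exp ((↑(s + 2*π)) * Complex.I) = Complex.exp (s * Complex.I) := by
    push_cast
    rw [add_mul, Complex.exp_add]
    simp [Complex.exp_two_pi_mul_I]
  simp only []
  rw [this]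

lemma vanish {g : ℝ → ℝ} (hc : Continuous g) (hnn : ∀ t, 0 ≤ g t)
    (hz : (∫ t in (0:ℝ)..(2*π), g t) = 0) : ∀ t ∈ Set.Ioc (0:ℝ) (2*π), g t = 0 := by
  have hab : (0:ℝ) ≤ 2*π := by positivity
  have h := (intervalIntegral.integral_eq_zero_iff_of_le_of_nonneg_ae hab
    (MeasureTheory.ae_restrict_of_forall_mem measurableSet_Ioc (fun t _ => hnn t))
    (hc.intervalIntegrable _ _)).mp hz
  have := MeasureTheory.Measure.eqOn_Ioc_of_ae_eq (μ := MeasureTheory.volume) h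
    hc.continuousOn continuous_const.continuousOn
  exact fun t ht => this ht

-- find unit vector: any w with |w - c| = 1 equals c + exp(s I) with s ∈ Ioc 0 2π
lemma exists_angle {c w : ℂ} (h : ‖w - c‖ = 1) :
    ∃ s ∈ Set.Ioc (0:ℝ) (2*π), w = c + Complex.exp (s * Complex.I) := by
  have h0 : w - c ≠ 0 := by
    intro hh; rw [hh] at h; simp at h
  have harg := Complex.norm_mul_exp_arg_mul_I (w - c)
  rw [h] at harg
  simp only [Complex.ofReal_one, one_mul] at harg
  set a := Complex.arg (w - c) with ha
  have h1 : -π < a := Complex.neg_pi_lt_arg _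
  have h2 : a ≤ π := Complex.arg_le_pi _
  have hπ : 0 < π := Real.pi_pos
  by_cases hle : 0 < a
  · exact ⟨a, ⟨hle, by linarith⟩, by rw [harg]; ring⟩
  · refine ⟨a + 2*π, ⟨by linarith [not_lt.mp hle], by linarith [not_lt.mp hle]⟩, ?_⟩
    have : Complex.exp ((↑(a + 2*π)) * Complex.I) = Complex.exp (a * Complex.I) := by
      push_cast
      rw [add_mul, Complex.exp_add]
      simp [Complex.exp_two_pi_mul_I]
    rw [this, harg]; ring

lemma exists_mid {p q : ℂ} (h : ‖q - p‖ ≤ 2) :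
    ∃ z : ℂ, ‖z - p‖ = 1 ∧ ‖q - z‖ = 1 := by
  by_cases hpq : q = p
  · exact ⟨p + 1, by simp, by simp [hpq]⟩
  · set d := ‖q - p‖ with hd
    have hd0 : 0 < d := by
      rw [hd]; simp [sub_ne_zero.mpr hpq]
    have hle : d^2 ≤ 4 := by nlinarith
    set c : ℝ := Real.sqrt (1 - d^2/4) / d with hc
    have hcsq : c^2 = (1 - d^2/4) / d^2 := by
      rw [hc, div_pow, Real.sq_sqrt (by nlinarith)]
    have habs : ‖(1:ℂ)/2 + c * Complex.I‖ = 1/d := by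
      have : ((1:ℂ)/2 + c * Complex.I) = Complex.mk (1/2) c := by
        apply Complex.ext <;> simp
      rw [this]
      rw [Complex.norm_def, Complex.normSq_mk]
      rw [show (1:ℝ)/2 * (1/2) + c * c = 1/d^2 by have := hcsq; field_simp at this ⊢; nlinarith [this]]
      rw [show (1:ℝ)/d^2 = (1/d)^2 by ring]
      exact Real.sqrt_sq (by positivity)
    have habs' : ‖-(1:ℂ)/2 + c * Complex.I‖ = 1/d := by
      have : (-(1:ℂ)/2 + c * Complex.I) = Complex.mk (-(1/2)) c := by
        apply Complex.ext <;> simp; ring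
      rw [this]
      rw [Complex.norm_def, Complex.normSq_mk]
      rw [show -((1:ℝ)/2) * -(1/2) + c * c = 1/d^2 by have := hcsq; field_simp at this ⊢; nlinarith [this]]
      rw [show (1:ℝ)/d^2 = (1/d)^2 by ring]
      exact Real.sqrt_sq (by positivity)
    refine ⟨(p+q)/2 + (c:ℂ) * ((q-p) * Complex.I), ?_, ?_⟩
    · have : (p+q)/2 + (c:ℂ) * ((q-p) * Complex.I) - p = (q - p) * ((1:ℂ)/2 + c * Complex.I) := by ring
      rw [this, norm_mul, ← hd, habs]
      field_simp
    · have : q - ((p+q)/2 + (c:ℂ) * ((q-p) * Complex.I)) = (q - p) * -(-(1:ℂ)/2 + c * Complex.I) := by ring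
      rw [this, norm_mul, norm_neg, ← hd, habs']
      field_simp



lemma log_avg {z : ℂ} (hz : 2 ≤ ‖z‖) :
    (∫ t in (0:ℝ)..(2*π), Real.log (‖z + Complex.exp (t * Complex.I)‖))
      = 2 * π * Real.log (‖z‖) := by
  set a := Complex.arg z with ha
  have harg : (‖z‖ : ℂ) * Complex.exp (a * Complex.I) = z := Complex.norm_mul_exp_arg_mul_I z
  set Gc : ℂ → ℝ := fun w => Real.log (‖(‖z‖ : ℂ) + w‖) with hGc
  have hrot : ∀ t : ℝ, Real.log (‖z + Complex.exp (t * Complex.I)‖)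
      = Gc (Complex.exp ((t - a) * Complex.I)) := by
    intro t
    have hfact : z + Complex.exp (t * Complex.I)
        = Complex.exp (a * Complex.I) * ((‖z‖ : ℂ) + Complex.exp ((↑(t - a)) * Complex.I)) := by
      rw [mul_add, mul_comm (Complex.exp _) ((‖z‖ : ℂ)), harg, ← Complex.exp_add]
      push_cast
      ring_nf
    rw [hGc]
    simp only []
    rw [show ((t:ℂ) - a) * Complex.I = (↑(t - a)) * Complex.I by push_cast; ring]
    rw [hfact, norm_mul, Complex.norm_exp_ofReal_mul_I, one_mul]
  have h1 : (∫ t in (0:ℝ)..(2*π), Real.log (‖z + Complex.exp (t * Complex.I)‖))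
      = ∫ t in (0:ℝ)..(2*π), Gc (Complex.exp ((t - a) * Complex.I)) := by
    congr 1; ext t; exact hrot t
  rw [h1]
  have h2 : (∫ t in (0:ℝ)..(2*π), Gc (Complex.exp ((t - a) * Complex.I)))
      = ∫ u in (0 - a)..(2*π - a), Gc (Complex.exp (u * Complex.I)) := by
    rw [← intervalIntegral.integral_comp_sub_right (fun u => Gc (Complex.exp (u * Complex.I))) a]
    norm_num
  rw [h2]
  have hper := exp_I_periodic Gc
  have h3 : (∫ u in (0 - a)..(2*π - a), Gc (Complex.exp (u * Complex.I)))
      = ∫ u in (0:ℝ)..(2*π), Gc (Complex.exp (u * Complex.I)) := by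
    have := hper.intervalIntegral_add_eq (0 - a) 0
    rw [show (0:ℝ) - a + 2*π = 2*π - a by ring, zero_add] at this
    exact this
  rw [h3]
  exact log_avg_real hz



lemma circle_eq {θ : ℂ → ℝ} {x₀ : ℂ} {M : ℝ}
    (hgc : Continuous (fun t : ℝ => θ (x₀ + Complex.exp (t * Complex.I))))
    (havg : (∫ t in (0:ℝ)..(2*π), θ (x₀ + Complex.exp (t * Complex.I))) = 2*π* θ x₀)
    (hmin : ∀ t : ℝ, M ≤ θ (x₀ + Complex.exp (t * Complex.I)))
    (hx : θ x₀ = M) : ∀ w, ‖w - x₀‖ = 1 → θ w = M := by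
  intro w hw
  set g : ℝ → ℝ := fun t => θ (x₀ + Complex.exp (t * Complex.I)) - M with hg
  have hic : Continuous g := hgc.sub continuous_const
  have hnn : ∀ t, 0 ≤ g t := fun t => by simp [hg]; linarith [hmin t]
  have hzero : (∫ t in (0:ℝ)..(2*π), g t) = 0 := by
    rw [hg]
    rw [intervalIntegral.integral_sub (hgc.intervalIntegrable _ _)
      (intervalIntegrable_const)]
    rw [havg, intervalIntegral.integral_const, hx]
    simp only [smul_eq_mul, sub_zero]
    ring
  obtain ⟨s, hs, hws⟩ := exists_angle hw
  have := vanish hic hnn hzero s hs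
  rw [hg] at this
  simp only [] at this
  rw [hws]
  linarith [this]

section spread
variable {F : ℂ → ℝ} (hFc : Continuous F)
  (hFm : ∀ z : ℂ, (∫ t in (0:ℝ)..(2*π), F (z + Complex.exp (t * Complex.I))) = 2*π* F z)
  (hFnn : ∀ z, 0 ≤ F z)

include hFc hFm hFnn

lemma zero_step {p w : ℂ} (hp : F p = 0) (hw : ‖w - p‖ = 1) : F w = 0 :=
  circle_eq (by fun_prop) (hFm p) (fun t => hFnn _) hp w hw

lemma zero_two {p q : ℂ} (hp : F p = 0) (hq : ‖q - p‖ ≤ 2) : F q = 0 := by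
  obtain ⟨z, h1, h2⟩ := exists_mid hq
  have hz := zero_step hFc hFm hFnn hp h1
  have : ‖q - z‖ = 1 := h2
  exact zero_step hFc hFm hFnn hz this

lemma spread {z₀ : ℂ} (hz : F z₀ = 0) : ∀ w, F w = 0 := by
  have key : ∀ n : ℕ, ∀ w : ℂ, ‖w - z₀‖ ≤ 2*n → F w = 0 := by
    intro n
    induction n with
    | zero =>
      intro w hw
      have : w = z₀ := by
        have : ‖w - z₀‖ = 0 := le_antisymm (by simpa using hw) (by positivity)
        have := norm_eq_zero.mp this
        linear_combination this
      rw [this]; exact hz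
    | succ n ih =>
      intro w hw
      by_cases hle : ‖w - z₀‖ ≤ 2*n
      · exact ih w hle
      · push_neg at hle
        set d := ‖w - z₀‖ with hd
        have hd0 : 0 < d := lt_of_le_of_lt (by positivity) hle
        set y : ℂ := z₀ + ((2*n/d : ℝ) : ℂ) * (w - z₀) with hy
        have hy1 : ‖y - z₀‖ = 2*n := by
          rw [hy]
          have : z₀ + ((2*n/d : ℝ) : ℂ) * (w - z₀) - z₀ = ((2*n/d : ℝ) : ℂ) * (w - z₀) := by ring
          rw [this, norm_mul, Complex.norm_real, Real.norm_eq_abs, ← hd]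
          rw [_root_.abs_of_nonneg (by positivity)]
          field_simp
        have hy2 : ‖w - y‖ ≤ 2 := by
          rw [hy]
          have : w - (z₀ + ((2*n/d : ℝ) : ℂ) * (w - z₀)) = ((1 - 2*n/d : ℝ) : ℂ) * (w - z₀) := by
            push_cast; ring
          rw [this]
          simp only [norm_mul, Complex.norm_real, Real.norm_eq_abs, ← hd]
          have h1 : |1 - 2*(n:ℝ)/d| = 1 - 2*n/d := by
            rw [_root_.abs_of_nonneg]
            rw [sub_nonneg, div_le_one hd0]
            linarith
          rw [h1]
          have : (1 - 2*n/d) * d = d - 2*n := by field_simp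
          rw [this]
          push_cast at hw ⊢
          linarith
        exact zero_two hFc hFm hFnn (ih y (le_of_eq hy1)) hy2
  intro w
  obtain ⟨n, hn⟩ := exists_nat_ge (‖w - z₀‖ / 2)
  exact key n w (by linarith [(div_le_iff₀ (by norm_num : (0:ℝ) < 2)).mp hn])

end spread



section barrier
variable {F : ℂ → ℝ} (hFc : Continuous F)
  (hFm : ∀ z : ℂ, (∫ t in (0:ℝ)..(2*π), F (z + Complex.exp (t * Complex.I))) = 2*π* F z)
  (hFp : ∀ z, 0 < F z)

include hFc hFm hFp

lemma barrier : ∃ c > 0, ∀ z, c ≤ F z := by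
  -- minimum of F on the closed ball of radius 3
  obtain ⟨xb, hxbK, hxbmin⟩ := (isCompact_closedBall (0:ℂ) 3).exists_isMinOn
    ⟨0, by simp⟩ hFc.continuousOn
  set c₁ := F xb with hc₁
  have hc₁pos : 0 < c₁ := hFp xb
  have hball : ∀ w : ℂ, ‖w‖ ≤ 3 → c₁ ≤ F w := by
    intro w hw
    exact hxbmin (by simpa [Metric.mem_closedBall, Complex.dist_eq] using hw)
  -- the key estimate for each N
  have key : ∀ z : ℂ, 1 ≤ ‖z‖ → ∀ N : ℝ, 5 ≤ N → ‖z‖ + 2 ≤ N →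
      c₁ * (Real.log N - Real.log (‖z‖)) / Real.log N
        - c₁ * (Real.log N - Real.log (N-1)) / Real.log N ≤ F z := by
    intro z hz1 N hN5 hNz
    have hlogN : 0 < Real.log N := Real.log_pos (by linarith)
    set b : ℝ := c₁ / Real.log N with hb
    have hbpos : 0 < b := by positivity
    set θ : ℂ → ℝ := fun w => F w - c₁ + b * Real.log (max (‖w‖) (1/2)) with hθ
    have hθc : Continuous θ := by
      apply Continuous.add (hFc.sub continuous_const)
      apply Continuous.mul continuous_const
      apply Continuous.log
      · exact continuous_norm.max continuous_const
      · intro w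
        have : (1:ℝ)/2 ≤ max (‖w‖) (1/2) := le_max_right _ _
        positivity
    have hθval : ∀ w : ℂ, 1 ≤ ‖w‖ →
        θ w = F w - c₁ + b * Real.log (‖w‖) := by
      intro w hw
      rw [hθ]
      simp only []
      rw [max_eq_left (by linarith)]
    set K : Set ℂ := Metric.closedBall 0 (N+1) ∩ (Metric.ball 0 1)ᶜ with hK
    have hmemK : ∀ w : ℂ, w ∈ K ↔ 1 ≤ ‖w‖ ∧ ‖w‖ ≤ N + 1 := by
      intro w
      simp [hK, Metric.mem_closedBall, Metric.mem_ball, Complex.dist_eq, not_lt, and_comm]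
    have hKcomp : IsCompact K :=
      (isCompact_closedBall _ _).inter_right (Metric.isOpen_ball).isClosed_compl
    have hKne : K.Nonempty := ⟨(2:ℂ), by
      rw [hmemK]
      constructor
      · simpa using (by norm_num : (1:ℝ) ≤ 2)
      · simpa using (by linarith : (2:ℝ) ≤ N + 1)⟩
    obtain ⟨m₀, hm₀K, hm₀min⟩ := hKcomp.exists_isMinOn hKne hθc.continuousOn
    set M := θ m₀ with hM
    have hMle : ∀ w ∈ K, M ≤ θ w := fun w hw => hm₀min hw
    -- the set of minimizers
    set T : Set ℂ := K ∩ {w | θ w = M} with hT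
    have hTcomp : IsCompact T := hKcomp.inter_right (isClosed_eq hθc continuous_const)
    have hTne : T.Nonempty := ⟨m₀, hm₀K, rfl⟩
    obtain ⟨x₀, hx₀T, hx₀max⟩ := hTcomp.exists_isMaxOn hTne continuous_norm.continuousOn
    have hx₀K : x₀ ∈ K := hx₀T.1
    have hx₀M : θ x₀ = M := hx₀T.2
    have hx₀1 : 1 ≤ ‖x₀‖ := ((hmemK x₀).mp hx₀K).1
    -- x₀ cannot be in the "interior" region
    have hcases : ‖x₀‖ ≤ 3 ∨ N - 1 ≤ ‖x₀‖ := by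
      by_contra hcon
      push_neg at hcon
      obtain ⟨h3, hN1⟩ := hcon
      -- circle around x₀ is inside K
      have hcirc : ∀ t : ℝ, 1 ≤ ‖x₀ + Complex.exp (t * Complex.I)‖
          ∧ ‖x₀ + Complex.exp (t * Complex.I)‖ ≤ N + 1 := by
        intro t
        have he : ‖Complex.exp ((t:ℂ) * Complex.I)‖ = 1 :=
          Complex.norm_exp_ofReal_mul_I t
        constructor
        · have h := norm_add_le (x₀ + Complex.exp (t * Complex.I)) (-(Complex.exp (t * Complex.I)))
          simp only [add_neg_cancel_right, norm_neg, he] at h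
          linarith
        · have := norm_add_le x₀ (Complex.exp (t * Complex.I))
          rw [he] at this
          linarith
      have havg : (∫ t in (0:ℝ)..(2*π), θ (x₀ + Complex.exp (t * Complex.I))) = 2*π* θ x₀ := by
        have hint1 : (∫ t in (0:ℝ)..(2*π), θ (x₀ + Complex.exp (t * Complex.I)))
            = (∫ t in (0:ℝ)..(2*π), (F (x₀ + Complex.exp (t * Complex.I)) - c₁
              + b * Real.log (‖x₀ + Complex.exp (t * Complex.I)‖))) := by
          apply intervalIntegral.integral_congr
          intro t _
          exact hθval _ (hcirc t).1
        rw [hint1]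
        have hInt1 : IntervalIntegrable (fun t : ℝ => F (x₀ + Complex.exp (t * Complex.I)) - c₁)
            MeasureTheory.volume 0 (2*π) := by
          apply Continuous.intervalIntegrable
          fun_prop
        have hInt2 : IntervalIntegrable
            (fun t : ℝ => b * Real.log (‖x₀ + Complex.exp (t * Complex.I)‖))
            MeasureTheory.volume 0 (2*π) := by
          apply Continuous.intervalIntegrable
          apply Continuous.mul continuous_const
          apply Continuous.log (continuous_norm.comp (by fun_prop))
          intro t
          have := (hcirc t).1
          positivity
        rw [intervalIntegral.integral_add hInt1 hInt2]
        rw [intervalIntegral.integral_sub (by apply Continuous.intervalIntegrable; fun_prop)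
          intervalIntegrable_const]
        rw [hFm x₀, intervalIntegral.integral_const, intervalIntegral.integral_const_mul]
        rw [log_avg (by linarith : 2 ≤ ‖x₀‖)]
        rw [hθval x₀ hx₀1]
        simp only [smul_eq_mul]
        ring
      have hminc : ∀ t : ℝ, M ≤ θ (x₀ + Complex.exp (t * Complex.I)) := by
        intro t
        exact hMle _ ((hmemK _).mpr (hcirc t))
      have hall := circle_eq (by fun_prop) havg hminc hx₀M
      -- the outward point
      set w : ℂ := x₀ + x₀ / (‖x₀‖ : ℂ) with hw
      have hx₀ne : (‖x₀‖ : ℝ) ≠ 0 := by linarith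
      have hwd : ‖w - x₀‖ = 1 := by
        rw [hw]
        have : x₀ + x₀ / (‖x₀‖ : ℂ) - x₀ = x₀ / (‖x₀‖ : ℂ) := by ring
        rw [this, norm_div, Complex.norm_real, Real.norm_eq_abs, _root_.abs_of_nonneg (by positivity)]
        field_simp
      have hwabs : ‖w‖ = ‖x₀‖ + 1 := by
        rw [hw]
        have : x₀ + x₀ / (‖x₀‖ : ℂ) = x₀ * (1 + (‖x₀‖ : ℂ)⁻¹) := by
          field_simp
        rw [this, norm_mul]
        have h2 : (1 + (‖x₀‖ : ℂ)⁻¹) = (((1 + (‖x₀‖)⁻¹ : ℝ)) : ℂ) := by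
          push_cast
          ring
        rw [h2, Complex.norm_real, Real.norm_eq_abs, _root_.abs_of_nonneg (by positivity)]
        field_simp
      have hwT : w ∈ T := by
        constructor
        · rw [hmemK, hwabs]
          constructor <;> linarith
        · exact hall w hwd
      have := hx₀max hwT
      simp only [Set.mem_setOf_eq] at this
      rw [hwabs] at this
      simp at this
      linarith [this]
    -- lower bound on M
    have hMlb : -(c₁ * (Real.log N - Real.log (N-1)) / Real.log N) ≤ M := by
      clear_value M b c₁
      have heps : 0 ≤ c₁ * (Real.log N - Real.log (N-1)) / Real.log N := by
        have h5 : Real.log (N-1) ≤ Real.log N := Real.log_le_log (by linarith) (by linarith)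
        apply div_nonneg _ hlogN.le
        apply mul_nonneg hc₁pos.le
        linarith
      cases hcases with
      | inl h3 =>
        have : 0 ≤ M := by
          rw [← hx₀M, hθval x₀ hx₀1]
          have h1 : c₁ ≤ F x₀ := hball x₀ h3
          have h2 : 0 ≤ Real.log (‖x₀‖) := Real.log_nonneg hx₀1
          nlinarith [mul_nonneg hbpos.le h2]
        have h9 : -(c₁ * (Real.log N - Real.log (N-1)) / Real.log N) ≤ 0 := neg_nonpos_of_nonneg heps
        linarith
      | inr hbig =>
        rw [← hx₀M, hθval x₀ hx₀1]
        have h1 : 0 < F x₀ := hFp x₀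
        have h2 : Real.log (N-1) ≤ Real.log (‖x₀‖) :=
          Real.log_le_log (by linarith) hbig
        have h3 : b * Real.log (N-1) ≤ b * Real.log (‖x₀‖) := by nlinarith
        have h4 : c₁ * (Real.log N - Real.log (N-1)) / Real.log N = c₁ - b * Real.log (N-1) := by
          rw [hb]
          field_simp
        linarith
    -- apply at z
    have hzK : z ∈ K := (hmemK z).mpr ⟨hz1, by linarith⟩
    have := hMle z hzK
    rw [hθval z hz1] at this
    have h4 : c₁ * (Real.log N - Real.log (‖z‖)) / Real.log N
        = c₁ - b * Real.log (‖z‖) := by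
      rw [hb]
      field_simp
    clear_value M b c₁
    linarith
  -- take the limit N → ∞
  refine ⟨c₁, hc₁pos, ?_⟩
  intro z
  by_cases hz3 : ‖z‖ ≤ 3
  · exact hball z hz3
  · push_neg at hz3
    have hz1 : 1 ≤ ‖z‖ := by linarith
    set A := ‖z‖ with hA
    -- lower sequence
    set L : ℕ → ℝ := fun n => c₁ - c₁ * (Real.log A + Real.log 2) / Real.log n with hL
    have hLtend : Filter.Tendsto L Filter.atTop (nhds c₁) := by
      have h1 : Filter.Tendsto (fun n : ℕ => Real.log (n:ℝ)) Filter.atTop Filter.atTop :=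
        Real.tendsto_log_atTop.comp tendsto_natCast_atTop_atTop
      have h2 : Filter.Tendsto (fun n : ℕ => c₁ * (Real.log A + Real.log 2) / Real.log n)
          Filter.atTop (nhds 0) := Filter.Tendsto.div_atTop tendsto_const_nhds h1
      have := Filter.Tendsto.sub (tendsto_const_nhds (x := c₁) (f := Filter.atTop (α := ℕ))) h2
      simpa using this
    have hLle : ∀ᶠ n : ℕ in Filter.atTop, L n ≤ F z := by
      filter_upwards [Filter.eventually_ge_atTop (⌈A + 5⌉₊)] with n hn
      have hnA : A + 5 ≤ (n:ℝ) := le_trans (Nat.le_ceil _) (by exact_mod_cast Nat.cast_le.mpr hn)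
      have hN5 : (5:ℝ) ≤ (n:ℝ) := by linarith [norm_nonneg z]
      have hNz : A + 2 ≤ (n:ℝ) := by linarith
      have hkey := key z hz1 (n:ℝ) hN5 hNz
      have hlogN : 0 < Real.log (n:ℝ) := Real.log_pos (by linarith [norm_nonneg z])
      -- log n - log (n-1) ≤ log 2
      have hA0 : 0 ≤ A := norm_nonneg z
      have hsub : Real.log (n:ℝ) - Real.log ((n:ℝ)-1) ≤ Real.log 2 := by
        have hlog2 : Real.log 2 + Real.log ((n:ℝ)-1) = Real.log (2*((n:ℝ)-1)) :=
          (Real.log_mul (by norm_num) (by linarith)).symm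
        have hmono : Real.log (n:ℝ) ≤ Real.log (2*((n:ℝ)-1)) :=
          Real.log_le_log (by linarith) (by linarith)
        linarith
      have e1 : c₁ * (Real.log (n:ℝ) - Real.log A) / Real.log (n:ℝ)
          = c₁ - c₁ * Real.log A / Real.log (n:ℝ) := by
        field_simp
      have e2 : c₁ * (Real.log (n:ℝ) - Real.log ((n:ℝ)-1)) / Real.log (n:ℝ)
          ≤ c₁ * Real.log 2 / Real.log (n:ℝ) := by
        gcongr
      have e3 : L n = c₁ - c₁ * Real.log A / Real.log (n:ℝ) - c₁ * Real.log 2 / Real.log (n:ℝ) := by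
        rw [hL]
        ring
      rw [← hA] at hkey
      clear_value A c₁ L
      linarith
    exact le_of_tendsto hLtend hLle

end barrier



/-- Problem 4: a positive continuous function on the plane whose average over every
circle of radius 1 equals its value at the center is constant. -/
theorem unit_circle_mvp_pos_const (f : ℝ × ℝ → ℝ)
    (hcont : Continuous f)
    (hpos : ∀ x : ℝ × ℝ, 0 < f x)
    (hmvp : ∀ P : ℝ × ℝ, f P =
      (1 / (2 * π)) * ∫ t in (0 : ℝ)..(2 * π), f (P.1 + Real.cos t, P.2 + Real.sin t)) :
    ∀ p q : ℝ × ℝ, f p = f q := by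
  have hπ : (0:ℝ) < 2*π := by positivity
  set F : ℂ → ℝ := fun z => f (z.re, z.im) with hF
  have hFc : Continuous F := hcont.comp (Complex.continuous_re.prodMk Complex.continuous_im)
  have hFp : ∀ z, 0 < F z := fun z => hpos _
  have hFm : ∀ z : ℂ, (∫ t in (0:ℝ)..(2*π), F (z + Complex.exp (t * Complex.I))) = 2*π* F z := by
    intro z
    have h1 : ∀ t : ℝ, F (z + Complex.exp (t * Complex.I))
        = f (z.re + Real.cos t, z.im + Real.sin t) := by
      intro t
      rw [hF]
      simp only [Complex.add_re, Complex.add_im,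
        Complex.exp_ofReal_mul_I_re, Complex.exp_ofReal_mul_I_im]
    have h2 : (∫ t in (0:ℝ)..(2*π), F (z + Complex.exp (t * Complex.I)))
        = ∫ t in (0:ℝ)..(2*π), f (z.re + Real.cos t, z.im + Real.sin t) := by
      apply intervalIntegral.integral_congr
      intro t _
      exact h1 t
    rw [h2]
    have := hmvp (z.re, z.im)
    simp only [] at this
    have h3 : F z = f (z.re, z.im) := rfl
    rw [h3, this]
    field_simp
  have hbdd : BddBelow (Set.range F) := ⟨0, by rintro y ⟨z, rfl⟩; exact (hFp z).le⟩
  have hne : (Set.range F).Nonempty := ⟨F 0, 0, rfl⟩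
  set m := sInf (Set.range F) with hm
  have hmle : ∀ z, m ≤ F z := fun z => csInf_le hbdd ⟨z, rfl⟩
  have hconst : ∀ z w : ℂ, F z = F w := by
    by_cases hattain : ∃ z₀, F z₀ = m
    · obtain ⟨z₀, hz₀⟩ := hattain
      set H : ℂ → ℝ := fun z => F z - m with hH
      have hHm : ∀ z : ℂ, (∫ t in (0:ℝ)..(2*π), H (z + Complex.exp (t * Complex.I))) = 2*π* H z := by
        intro z
        rw [hH]
        simp only []
        have hi : IntervalIntegrable (fun t : ℝ => F (z + Complex.exp (t * Complex.I)))
            MeasureTheory.volume 0 (2*π) := by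
          apply Continuous.intervalIntegrable
          apply hFc.comp
          fun_prop
        rw [intervalIntegral.integral_sub hi (_root_.intervalIntegrable_const)]
        rw [hFm z, intervalIntegral.integral_const]
        simp only [smul_eq_mul, sub_zero]
        ring
      have hzero := spread (hFc.sub continuous_const) hHm
        (fun z => sub_nonneg.mpr (hmle z))
        (show F z₀ - m = 0 by linarith [hz₀])
      intro z w
      have h1 := hzero z
      have h2 := hzero w
      simp only [Pi.sub_apply, ← hm] at h1 h2
      linarith
    · push_neg at hattain
      exfalso
      set H : ℂ → ℝ := fun z => F z - m with hH
      have hHm : ∀ z : ℂ, (∫ t in (0:ℝ)..(2*π), H (z + Complex.exp (t * Complex.I))) = 2*π* H z := by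
        intro z
        rw [hH]
        simp only []
        have hi : IntervalIntegrable (fun t : ℝ => F (z + Complex.exp (t * Complex.I)))
            MeasureTheory.volume 0 (2*π) := by
          apply Continuous.intervalIntegrable
          apply hFc.comp
          fun_prop
        rw [intervalIntegral.integral_sub hi (_root_.intervalIntegrable_const)]
        rw [hFm z, intervalIntegral.integral_const]
        simp only [smul_eq_mul, sub_zero]
        ring
      have hHp : ∀ z, 0 < H z := by
        intro z
        simp only [hH]
        have := hmle z
        have := hattain z
        cases lt_or_eq_of_le (hmle z) with
        | inl h => linarith
        | inr h => exact absurd h.symm (hattain z)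
      obtain ⟨c, hc, hcle⟩ := barrier (hFc.sub continuous_const) hHm hHp
      have : m + c ≤ m := by
        apply le_csInf hne
        rintro y ⟨z, rfl⟩
        have := hcle z
        simp only [Pi.sub_apply, ← hm] at this
        linarith
      linarith
  intro p q
  have hp : f p = F (Complex.equivRealProd.symm p) := by
    rw [hF]
    simp [Complex.equivRealProd]
  have hq : f q = F (Complex.equivRealProd.symm q) := by
    rw [hF]
    simp [Complex.equivRealProd]
  rw [hp, hq]
  exact hconst _ _
end

section
/- If a function f : ℤ² → ℝ satisfies the discrete mean value property and attains its supremum, i.e. there exists (i₀,j₀) ∈ ℤ² with f(i₀,j₀) ≥ f(i,j) for all (i,j) ∈ ℤ², then f is constant. Likewise, if f attains its infimum, then f is constant. -/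
lemma discrete_mvp_max_aux (f : ℤ × ℤ → ℝ)
    (hmvp : ∀ i j : ℤ, f (i, j) =
      (f (i - 1, j) + f (i + 1, j) + f (i, j - 1) + f (i, j + 1)) / 4)
    (p₀ : ℤ × ℤ) (h : ∀ p : ℤ × ℤ, f p ≤ f p₀) :
    ∀ p : ℤ × ℤ, f p = f p₀ := by
  have key : ∀ i j : ℤ, f (i, j) = f p₀ →
      f (i + 1, j) = f p₀ ∧ f (i - 1, j) = f p₀ ∧
      f (i, j + 1) = f p₀ ∧ f (i, j - 1) = f p₀ := by
    intro i j hij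
    have h1 := h (i - 1, j)
    have h2 := h (i + 1, j)
    have h3 := h (i, j - 1)
    have h4 := h (i, j + 1)
    have hm := hmvp i j
    rw [hij] at hm
    exact ⟨by linarith, by linarith, by linarith, by linarith⟩
  have row : ∀ a : ℤ, f (p₀.1 + a, p₀.2) = f p₀ := by
    intro a
    induction a using Int.induction_on with
    | zero => simp
    | succ k ih =>
      have := (key (p₀.1 + k) p₀.2 ih).1
      rw [show p₀.1 + ((k : ℤ) + 1) = p₀.1 + k + 1 by ring]
      exact this
    | pred k ih =>
      have := (key (p₀.1 + (-k : ℤ)) p₀.2 ih).2.1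
      rw [show p₀.1 + (-(k : ℤ) - 1) = p₀.1 + (-k : ℤ) - 1 by ring]
      exact this
  have grid : ∀ a b : ℤ, f (p₀.1 + a, p₀.2 + b) = f p₀ := by
    intro a b
    induction b using Int.induction_on with
    | zero => simpa using row a
    | succ k ih =>
      have := (key (p₀.1 + a) (p₀.2 + k) ih).2.2.1
      rw [show p₀.2 + ((k : ℤ) + 1) = p₀.2 + k + 1 by ring]
      exact this
    | pred k ih =>
      have := (key (p₀.1 + a) (p₀.2 + (-k : ℤ)) ih).2.2.2
      rw [show p₀.2 + (-(k : ℤ) - 1) = p₀.2 + (-k : ℤ) - 1 by ring]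
      exact this
  intro p
  have := grid (p.1 - p₀.1) (p.2 - p₀.2)
  simpa using this

/-- Minimum/maximum principle: a function on the integer lattice with the discrete
mean value property which attains its supremum, or attains its infimum, is constant. -/
theorem discrete_mvp_extremum_const (f : ℤ × ℤ → ℝ)
    (hmvp : ∀ i j : ℤ, f (i, j) =
      (f (i - 1, j) + f (i + 1, j) + f (i, j - 1) + f (i, j + 1)) / 4)
    (hext : (∃ p₀ : ℤ × ℤ, ∀ p : ℤ × ℤ, f p ≤ f p₀) ∨
            (∃ p₀ : ℤ × ℤ, ∀ p : ℤ × ℤ, f p₀ ≤ f p)) :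
    ∀ p q : ℤ × ℤ, f p = f q := by
  rcases hext with ⟨p₀, h⟩ | ⟨p₀, h⟩
  · intro p q
    rw [discrete_mvp_max_aux f hmvp p₀ h p, discrete_mvp_max_aux f hmvp p₀ h q]
  · intro p q
    have hg : ∀ i j : ℤ, (fun p => -f p) (i, j) =
        ((fun p => -f p) (i - 1, j) + (fun p => -f p) (i + 1, j) +
         (fun p => -f p) (i, j - 1) + (fun p => -f p) (i, j + 1)) / 4 := by
      intro i j
      simp only
      have := hmvp i j
      linarith
    have hh : ∀ p : ℤ × ℤ, (fun p => -f p) p ≤ (fun p => -f p) p₀ := by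
      intro p; simp only; linarith [h p]
    have := discrete_mvp_max_aux (fun p => -f p) hg p₀ hh
    have hp := this p
    have hq := this q
    linarith
end

section
/- If a function f : ℤ² → ℝ is nonnegative, satisfies the discrete mean value property, and f(i₀,j₀) = 0 for some lattice point (i₀,j₀), then f is identically zero. -/
/-- A nonnegative function on the integer lattice with the discrete mean value
property which vanishes at one point vanishes identically. -/
theorem discrete_mvp_nonneg_zero (f : ℤ × ℤ → ℝ)
    (hnonneg : ∀ p : ℤ × ℤ, 0 ≤ f p)
    (hmvp : ∀ i j : ℤ, f (i, j) =
      (f (i - 1, j) + f (i + 1, j) + f (i, j - 1) + f (i, j + 1)) / 4)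
    (i₀ j₀ : ℤ) (hzero : f (i₀, j₀) = 0) :
    ∀ p : ℤ × ℤ, f p = 0 := by
  have key : ∀ i j : ℤ, f (i, j) = 0 →
      f (i + 1, j) = 0 ∧ f (i - 1, j) = 0 ∧ f (i, j + 1) = 0 ∧ f (i, j - 1) = 0 := by
    intro i j h
    have hm := hmvp i j
    rw [h] at hm
    have h1 := hnonneg (i - 1, j)
    have h2 := hnonneg (i + 1, j)
    have h3 := hnonneg (i, j - 1)
    have h4 := hnonneg (i, j + 1)
    exact ⟨by linarith, by linarith, by linarith, by linarith⟩
  have hrow : ∀ n : ℤ, f (i₀ + n, j₀) = 0 := by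
    intro n
    induction n using Int.induction_on with
    | zero => simpa using hzero
    | succ k ih => have := (key _ _ ih).1; convert this using 2; ring
    | pred k ih => have := (key _ _ ih).2.1; convert this using 2; ring
  have hall : ∀ n m : ℤ, f (i₀ + n, j₀ + m) = 0 := by
    intro n m
    induction m using Int.induction_on with
    | zero => simpa using hrow n
    | succ k ih => have := (key _ _ ih).2.2.1; convert this using 2; ring
    | pred k ih => have := (key _ _ ih).2.2.2; convert this using 2; ring
  intro p
  have := hall (p.1 - i₀) (p.2 - j₀)
  simpa using this
end

section
/- (Liouville's theorem via the mean value property.) If f : ℝ² → ℝ is a bounded continuous function such that for every P ∈ ℝ² and every r > 0, f(P) = (1/(2π)) ∫₀^{2π} f(P + r(cos t, sin t)) dt, then f is constant. -/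
open Real

open MeasureTheory Set

namespace LiouvilleMVPAux

/-- Euclidean disc in `ℝ × ℝ`. -/
def D (P : ℝ × ℝ) (R : ℝ) : Set (ℝ × ℝ) := {x | (x.1 - P.1)^2 + (x.2 - P.2)^2 < R^2}

lemma measurableSet_D (P : ℝ × ℝ) (R : ℝ) : MeasurableSet (D P R) := by
  have h : Continuous fun x : ℝ × ℝ => (x.1 - P.1)^2 + (x.2 - P.2)^2 := by continuity
  exact measurableSet_lt h.measurable measurable_const

lemma D_subset_closedBall (P : ℝ × ℝ) (R : ℝ) : D P R ⊆ Metric.closedBall P |R| := by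
  intro x hx
  simp only [D, mem_setOf_eq] at hx
  rw [Metric.mem_closedBall, Prod.dist_eq, max_le_iff, Real.dist_eq, Real.dist_eq]
  constructor
  · rw [abs_le]; constructor <;> nlinarith [abs_nonneg R, sq_abs R, sq_nonneg (x.2 - P.2)]
  · rw [abs_le]; constructor <;> nlinarith [abs_nonneg R, sq_abs R, sq_nonneg (x.1 - P.1)]

lemma integrableOn_D {g : ℝ × ℝ → ℝ} (hg : Continuous g) (P : ℝ × ℝ) (R : ℝ) :
    IntegrableOn g (D P R) :=
  (hg.continuousOn.integrableOn_compact (isCompact_closedBall P |R|)).mono_set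
    (D_subset_closedBall P R)

lemma volume_D_lt_top (P : ℝ × ℝ) (R : ℝ) : volume (D P R) < ⊤ :=
  lt_of_le_of_lt (measure_mono (D_subset_closedBall P R)) measure_closedBall_lt_top

lemma D_incl {P Q : ℝ × ℝ} {s R : ℝ}
    (h : s + Real.sqrt ((P.1 - Q.1)^2 + (P.2 - Q.2)^2) ≤ R) (hs : 0 < s) :
    D P s ⊆ D Q R := by
  intro x hx
  simp only [D, mem_setOf_eq] at hx ⊢
  set a := x.1 - P.1; set b := x.2 - P.2; set c := P.1 - Q.1; set e := P.2 - Q.2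
  set dd := Real.sqrt (c^2 + e^2) with hdd
  have hdd0 : 0 ≤ dd := Real.sqrt_nonneg _
  have hdd2 : dd^2 = c^2 + e^2 := Real.sq_sqrt (by positivity)
  have h4 : (a*c + b*e)^2 ≤ (a^2 + b^2) * (c^2 + e^2) := by nlinarith [sq_nonneg (a*e - b*c)]
  have h5 : (a^2 + b^2) * (c^2 + e^2) ≤ s^2 * dd^2 := by
    rw [hdd2]; exact mul_le_mul_of_nonneg_right hx.le (by positivity)
  have h6 : a*c + b*e ≤ s * dd := by
    nlinarith [mul_nonneg hs.le hdd0, sq_nonneg (a*c + b*e - s*dd), sq_nonneg (a*c + b*e + s*dd)]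
  have hx1 : x.1 - Q.1 = a + c := by simp [a, c]
  have hx2 : x.2 - Q.2 = b + e := by simp [b, e]
  rw [hx1, hx2]
  nlinarith [hx, h6, hdd2]

lemma circ_shift (h : ℝ → ℝ) (hper : Function.Periodic h (2*π)) :
    ∫ θ in (-π)..π, h θ = ∫ θ in (0:ℝ)..(2*π), h θ := by
  have := hper.intervalIntegral_add_eq (-π) 0
  rw [show -π + 2*π = π by ring, zero_add] at this
  exact this

lemma polar (g : ℝ × ℝ → ℝ) (hg : Continuous g) {R : ℝ} (hR : 0 < R) :
    ∫ x in D 0 R, g x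
      = ∫ r in (0:ℝ)..R, r * ∫ θ in (0:ℝ)..(2*π), g (r * Real.cos θ, r * Real.sin θ) := by
  have hmeas := measurableSet_D (0 : ℝ × ℝ) R
  have htarget : polarCoord.target = Ioi (0:ℝ) ×ˢ Ioo (-π) π := rfl
  have hsymm : ∀ p : ℝ × ℝ, polarCoord.symm p = (p.1 * Real.cos p.2, p.1 * Real.sin p.2) :=
    fun p => rfl
  have h1 : ∫ x in D 0 R, g x = ∫ x, (D 0 R).indicator g x := (integral_indicator hmeas).symm
  rw [h1, ← integral_comp_polarCoord_symm, htarget]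
  set h : ℝ × ℝ → ℝ := fun p => p.1 * g (p.1 * Real.cos p.2, p.1 * Real.sin p.2) with hh
  have hcont : Continuous h := by
    apply continuous_fst.mul
    exact hg.comp ((continuous_fst.mul (Real.continuous_cos.comp continuous_snd)).prodMk
      (continuous_fst.mul (Real.continuous_sin.comp continuous_snd)))
  have key : EqOn (fun p : ℝ × ℝ => p.1 • (D 0 R).indicator g (polarCoord.symm p))
      ((Ioo (0:ℝ) R ×ˢ Ioo (-π) π).indicator h) (Ioi (0:ℝ) ×ˢ Ioo (-π) π) := by
    rintro ⟨r, θ⟩ ⟨hr, hθ⟩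
    simp only [mem_Ioi] at hr
    have hmem : polarCoord.symm (r, θ) ∈ D 0 R ↔ r < R := by
      rw [hsymm]
      simp only [D, mem_setOf_eq, Prod.fst_zero, Prod.snd_zero, sub_zero]
      rw [show (r * Real.cos θ) ^ 2 + (r * Real.sin θ) ^ 2 = r ^ 2 by
        linear_combination r ^ 2 * Real.sin_sq_add_cos_sq θ]
      constructor
      · intro hlt; nlinarith
      · intro hlt; nlinarith
    by_cases hcase : r < R
    · dsimp only
      rw [indicator_of_mem (hmem.mpr hcase),
        indicator_of_mem (show (r, θ) ∈ Ioo (0:ℝ) R ×ˢ Ioo (-π) π from ⟨⟨hr, hcase⟩, hθ⟩), hsymm]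
      simp [hh, smul_eq_mul]
    · dsimp only
      rw [indicator_of_notMem (fun hm => hcase (hmem.mp hm)),
        indicator_of_notMem (fun hm => hcase hm.1.2)]
      simp
  rw [setIntegral_congr_fun (by measurability) key,
    setIntegral_indicator (by measurability),
    show (Ioi (0:ℝ) ×ˢ Ioo (-π) π) ∩ (Ioo (0:ℝ) R ×ˢ Ioo (-π) π) = Ioo (0:ℝ) R ×ˢ Ioo (-π) π by
      rw [inter_eq_self_of_subset_right]; exact prod_mono_left Ioo_subset_Ioi_self]
  have hint : IntegrableOn h (Ioo (0:ℝ) R ×ˢ Ioo (-π) π) (volume.prod volume) := by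
    rw [← Measure.volume_eq_prod ℝ ℝ]
    exact (hcont.continuousOn.integrableOn_compact (isCompact_Icc.prod isCompact_Icc)).mono_set
      (prod_mono Ioo_subset_Icc_self Ioo_subset_Icc_self)
  rw [Measure.volume_eq_prod ℝ ℝ, setIntegral_prod h hint]
  rw [intervalIntegral.integral_of_le hR.le, integral_Ioc_eq_integral_Ioo]
  apply setIntegral_congr_fun measurableSet_Ioo
  intro r hr
  dsimp only
  have hper : Function.Periodic (fun θ => g (r * Real.cos θ, r * Real.sin θ)) (2*π) := by
    intro θ; simp [Real.cos_add_two_pi, Real.sin_add_two_pi]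
  calc ∫ θ in Ioo (-π) π, h (r, θ)
      = r * ∫ θ in Ioo (-π) π, g (r * Real.cos θ, r * Real.sin θ) := by
        rw [← integral_const_mul]
    _ = r * ∫ θ in (-π)..π, g (r * Real.cos θ, r * Real.sin θ) := by
        rw [intervalIntegral.integral_of_le (by linarith [Real.pi_pos]),
          integral_Ioc_eq_integral_Ioo]
    _ = r * ∫ θ in (0:ℝ)..(2*π), g (r * Real.cos θ, r * Real.sin θ) := by
        rw [circ_shift _ hper]

lemma disc_avg (g : ℝ × ℝ → ℝ) (hg : Continuous g) (P : ℝ × ℝ) {R : ℝ} (hR : 0 < R)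
    (hP : ∀ r : ℝ, 0 < r →
      (∫ t in (0:ℝ)..(2*π), g (P.1 + r * Real.cos t, P.2 + r * Real.sin t)) = 2*π * g P) :
    ∫ x in D P R, g x = π * R^2 * g P := by
  have hmm : ∀ x : ℝ × ℝ, (P + x ∈ D P R) ↔ x ∈ D 0 R := by
    intro x
    simp [D, add_sub_cancel_left]
  have htrans : ∫ x in D P R, g x = ∫ x in D 0 R, g (P + x) := by
    rw [← integral_indicator (measurableSet_D P R), ← integral_indicator (measurableSet_D 0 R),
      ← integral_add_left_eq_self (fun x => (D P R).indicator g x) P]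
    congr 1
    ext x
    by_cases hx : x ∈ D 0 R
    · rw [indicator_of_mem ((hmm x).mpr hx), indicator_of_mem hx]
    · rw [indicator_of_notMem (fun hm => hx ((hmm x).mp hm)), indicator_of_notMem hx]
  rw [htrans, polar (fun x => g (P + x)) (hg.comp (continuous_const.add continuous_id)) hR]
  have hcongr : EqOn
      (fun r => r * ∫ θ in (0:ℝ)..(2*π), g (P + (r * Real.cos θ, r * Real.sin θ)))
      (fun r => r * (2*π * g P)) (uIcc (0:ℝ) R) := by
    intro r hr
    rw [uIcc_of_le hR.le] at hr
    dsimp only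
    rcases eq_or_lt_of_le hr.1 with rfl | hpos
    · simp
    · have heq : (∫ θ in (0:ℝ)..(2*π), g (P + (r * Real.cos θ, r * Real.sin θ)))
          = ∫ t in (0:ℝ)..(2*π), g (P.1 + r * Real.cos t, P.2 + r * Real.sin t) := rfl
      rw [heq, hP r hpos]
  rw [intervalIntegral.integral_congr hcongr, intervalIntegral.integral_mul_const, integral_id]
  ring

end LiouvilleMVPAux


open LiouvilleMVPAux

/-- Liouville's theorem via the mean value property: a bounded continuous function on
the plane whose average over every circle equals its value at the center is constant. -/
theorem liouville_mvp (f : ℝ × ℝ → ℝ)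
    (hcont : Continuous f)
    (hbdd : ∃ C : ℝ, ∀ x : ℝ × ℝ, |f x| ≤ C)
    (hmvp : ∀ P : ℝ × ℝ, ∀ r : ℝ, 0 < r →
      f P = (1 / (2 * π)) *
        ∫ t in (0 : ℝ)..(2 * π), f (P.1 + r * Real.cos t, P.2 + r * Real.sin t)) :
    ∀ p q : ℝ × ℝ, f p = f q := by
  obtain ⟨C, hC⟩ := hbdd
  have hC0 : 0 ≤ C := (abs_nonneg _).trans (hC 0)
  intro p q
  -- disc mean value property
  have havg : ∀ (P : ℝ × ℝ) {R : ℝ}, 0 < R → ∫ x in D P R, f x = π * R^2 * f P := by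
    intro P R hR
    refine disc_avg f hcont P hR ?_
    intro r hr
    rw [hmvp P r hr]
    have hπ : (2*π) ≠ 0 := by positivity
    field_simp
  have hvol : ∀ (P : ℝ × ℝ) {R : ℝ}, 0 < R → ∫ _x in D P R, (1:ℝ) = π * R^2 := by
    intro P R hR
    have := disc_avg (fun _ => (1:ℝ)) continuous_const P hR (fun r hr => by simp)
    simpa using this
  set d := Real.sqrt ((p.1 - q.1)^2 + (p.2 - q.2)^2) with hd
  have hd0 : 0 ≤ d := Real.sqrt_nonneg _
  have hbound : ∀ R : ℝ, d < R → |f p - f q| ≤ 4*C*d/R := by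
    intro R hdR
    have hRpos : 0 < R := lt_of_le_of_lt hd0 hdR
    have hRd : 0 < R - d := by linarith
    set S := D p (R - d) with hS
    have hSp : S ⊆ D p R := by
      apply D_incl _ hRd
      simp only [sub_self]
      rw [show (0:ℝ)^2 + (0:ℝ)^2 = 0 by ring, Real.sqrt_zero]
      linarith
    have hSq : S ⊆ D q R := by
      apply D_incl _ hRd
      rw [← hd]
      linarith
    have key : ∀ X : ℝ × ℝ, S ⊆ D X R →
        |(∫ x in D X R, f x) - ∫ x in S, f x| ≤ C * (π*R^2 - π*(R-d)^2) := by
      intro X hsub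
      rw [← integral_diff (measurableSet_D p (R - d)) (integrableOn_D hcont X R) hsub]
      have hfin : volume (D X R \ S) < ⊤ :=
        lt_of_le_of_lt (measure_mono diff_subset) (volume_D_lt_top X R)
      have hbd := norm_setIntegral_le_of_norm_le_const (f := f) (C := C) hfin
        (fun x _ => by rw [Real.norm_eq_abs]; exact hC x)
      rw [Real.norm_eq_abs, measureReal_def] at hbd
      refine hbd.trans ?_
      have hone : (volume (D X R \ S)).toReal = ∫ _x in D X R \ S, (1:ℝ) := by
        rw [setIntegral_const]; simp [measureReal_def]
      have hone2 : (∫ _x in D X R \ S, (1:ℝ)) = π*R^2 - π*(R-d)^2 := by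
        rw [integral_diff (measurableSet_D p (R - d))
          ((integrableOn_const_iff (C := (1:ℝ))).mpr (Or.inr (volume_D_lt_top X R))) hsub,
          hvol X hRpos, hvol p hRd]
      rw [hone, hone2]
    have h1 := havg p hRpos
    have h2 := havg q hRpos
    have hsplit : π*R^2 * (f p - f q)
        = ((∫ x in D p R, f x) - ∫ x in S, f x) - ((∫ x in D q R, f x) - ∫ x in S, f x) := by
      rw [h1, h2]; ring
    have hABS : |π*R^2 * (f p - f q)| ≤ 2 * C * (π*R^2 - π*(R-d)^2) := by
      rw [hsplit]
      calc |((∫ x in D p R, f x) - ∫ x in S, f x) - ((∫ x in D q R, f x) - ∫ x in S, f x)|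
          ≤ |(∫ x in D p R, f x) - ∫ x in S, f x| + |(∫ x in D q R, f x) - ∫ x in S, f x| :=
            abs_sub _ _
        _ ≤ C * (π*R^2 - π*(R-d)^2) + C * (π*R^2 - π*(R-d)^2) := by
            exact add_le_add (key p hSp) (key q hSq)
        _ = 2 * C * (π*R^2 - π*(R-d)^2) := by ring
    have hπR : 0 < π * R^2 := by positivity
    rw [abs_mul, abs_of_pos hπR] at hABS
    rw [le_div_iff₀ hRpos]
    nlinarith [Real.pi_pos, abs_nonneg (f p - f q), sq_nonneg d,
      mul_pos Real.pi_pos hRpos, mul_nonneg (mul_nonneg hC0 Real.pi_pos.le) (sq_nonneg d)]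
  have htend : Filter.Tendsto (fun R : ℝ => 4*C*d/R) Filter.atTop (nhds 0) :=
    Filter.Tendsto.div_atTop tendsto_const_nhds Filter.tendsto_id
  have hle : |f p - f q| ≤ 0 :=
    ge_of_tendsto htend (Filter.eventually_atTop.mpr
      ⟨d + 1, fun R hR => hbound R (by linarith)⟩)
  have : f p - f q = 0 := abs_eq_zero.mp (le_antisymm hle (abs_nonneg _))
  linarith
end

section
/- If f : ℤ² → ℝ is nonnegative, satisfies the discrete mean value property, and f(0,0) = 1, then 0 < f(i,j) ≤ 4^{|i|+|j|} for all (i,j) ∈ ℤ². -/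
theorem aux_key (f : ℤ × ℤ → ℝ)
    (hnonneg : ∀ p : ℤ × ℤ, 0 ≤ f p)
    (hmvp : ∀ i j : ℤ, f (i, j) =
      (f (i - 1, j) + f (i + 1, j) + f (i, j - 1) + f (i, j + 1)) / 4) :
    ∀ n : ℕ, ∀ i j a b : ℤ, a.natAbs + b.natAbs = n →
      f (i + a, j + b) ≤ (4 : ℝ) ^ n * f (i, j) := by
  have nb : ∀ i j : ℤ, f (i + 1, j) ≤ 4 * f (i, j) ∧ f (i - 1, j) ≤ 4 * f (i, j)
      ∧ f (i, j + 1) ≤ 4 * f (i, j) ∧ f (i, j - 1) ≤ 4 * f (i, j) := by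
    intro i j
    have h := hmvp i j
    have h1 := hnonneg (i - 1, j)
    have h2 := hnonneg (i + 1, j)
    have h3 := hnonneg (i, j - 1)
    have h4 := hnonneg (i, j + 1)
    refine ⟨by linarith, by linarith, by linarith, by linarith⟩
  intro n
  induction n with
  | zero =>
    intro i j a b hab
    have ha : a = 0 := by omega
    have hb : b = 0 := by omega
    simp [ha, hb]
  | succ n ih =>
    intro i j a b hab
    have pos4n : (0 : ℝ) < 4 ^ n := by positivity
    rcases lt_trichotomy a 0 with ha | ha | ha
    · have : f (i + a, j + b) = f ((i - 1) + (a + 1), j + b) := by ring_nf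
      rw [this]
      have h1 : f ((i - 1) + (a + 1), j + b) ≤ 4 ^ n * f (i - 1, j) :=
        ih (i - 1) j (a + 1) b (by omega)
      have h2 := (nb i j).2.1
      calc f ((i - 1) + (a + 1), j + b) ≤ 4 ^ n * f (i - 1, j) := h1
        _ ≤ 4 ^ n * (4 * f (i, j)) := by nlinarith
        _ = 4 ^ (n + 1) * f (i, j) := by ring
    · subst ha
      rcases lt_trichotomy b 0 with hb | hb | hb
      · have : f (i + 0, j + b) = f (i + 0, (j - 1) + (b + 1)) := by ring_nf
        rw [this]
        have h1 : f (i + 0, (j - 1) + (b + 1)) ≤ 4 ^ n * f (i, j - 1) := by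
          have := ih i (j - 1) 0 (b + 1) (by omega)
          simpa using this
        have h2 := (nb i j).2.2.2
        calc f (i + 0, (j - 1) + (b + 1)) ≤ 4 ^ n * f (i, j - 1) := h1
          _ ≤ 4 ^ n * (4 * f (i, j)) := by nlinarith
          _ = 4 ^ (n + 1) * f (i, j) := by ring
      · omega
      · have : f (i + 0, j + b) = f (i + 0, (j + 1) + (b - 1)) := by ring_nf
        rw [this]
        have h1 : f (i + 0, (j + 1) + (b - 1)) ≤ 4 ^ n * f (i, j + 1) := by
          have := ih i (j + 1) 0 (b - 1) (by omega)
          simpa using this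
        have h2 := (nb i j).2.2.1
        calc f (i + 0, (j + 1) + (b - 1)) ≤ 4 ^ n * f (i, j + 1) := h1
          _ ≤ 4 ^ n * (4 * f (i, j)) := by nlinarith
          _ = 4 ^ (n + 1) * f (i, j) := by ring
    · have : f (i + a, j + b) = f ((i + 1) + (a - 1), j + b) := by ring_nf
      rw [this]
      have h1 : f ((i + 1) + (a - 1), j + b) ≤ 4 ^ n * f (i + 1, j) :=
        ih (i + 1) j (a - 1) b (by omega)
      have h2 := (nb i j).1
      calc f ((i + 1) + (a - 1), j + b) ≤ 4 ^ n * f (i + 1, j) := h1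
        _ ≤ 4 ^ n * (4 * f (i, j)) := by nlinarith
        _ = 4 ^ (n + 1) * f (i, j) := by ring

/-- If `f` is nonnegative on the integer lattice, has the discrete mean value
property, and `f (0,0) = 1`, then `0 < f (i,j) ≤ 4 ^ (|i| + |j|)` everywhere. -/
theorem discrete_mvp_growth_bound (f : ℤ × ℤ → ℝ)
    (hnonneg : ∀ p : ℤ × ℤ, 0 ≤ f p)
    (hmvp : ∀ i j : ℤ, f (i, j) =
      (f (i - 1, j) + f (i + 1, j) + f (i, j - 1) + f (i, j + 1)) / 4)
    (h00 : f (0, 0) = 1) :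
    ∀ i j : ℤ, 0 < f (i, j) ∧ f (i, j) ≤ (4 : ℝ) ^ (i.natAbs + j.natAbs) := by
  intro i j
  set n := i.natAbs + j.natAbs with hn
  constructor
  · have h := aux_key f hnonneg hmvp n i j (-i) (-j) (by omega)
    simp only [add_neg_cancel] at h
    rw [h00] at h
    by_contra hle
    push_neg at hle
    have hz : f (i, j) = 0 := le_antisymm hle (hnonneg (i, j))
    rw [hz, mul_zero] at h
    linarith
  · have h := aux_key f hnonneg hmvp n 0 0 i j (by omega)
    simp only [zero_add] at h
    rwa [h00, mul_one] at h
end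

section
/- Let β > 0 and let γ : ℤ → ℝ be a sequence of positive real numbers such that γ(j) = (1/4)(γ(j)/β + γ(j)·β + γ(j−1) + γ(j+1)) for all j ∈ ℤ. Then β = 1 and γ is constant. Equivalently: the function f(i,j) = γ(j)·β^i on ℤ² is nonnegative with the discrete mean value property only when β = 1 and γ is constant. -/
/-- If `β > 0` and `γ : ℤ → ℝ` is positive with
`γ j = (γ j / β + γ j * β + γ (j-1) + γ (j+1)) / 4` for all `j` (i.e. the function
`f (i,j) = γ j * β ^ i` has the discrete mean value property), then `β = 1` and `γ`
is constant. -/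
theorem mvp_separated_solution (β : ℝ) (hβ : 0 < β) (γ : ℤ → ℝ)
    (hpos : ∀ j : ℤ, 0 < γ j)
    (heq : ∀ j : ℤ, γ j = (γ j / β + γ j * β + γ (j - 1) + γ (j + 1)) / 4) :
    β = 1 ∧ ∀ j k : ℤ, γ j = γ k := by
  have hβ' : β ≠ 0 := ne_of_gt hβ
  have hinv : β * β⁻¹ = 1 := mul_inv_cancel₀ hβ'
  -- discrete concavity
  have key : ∀ j : ℤ, γ (j + 1) + γ (j - 1) ≤ 2 * γ j := by
    intro j
    have h := heq j
    have h' : γ j * 4 * β = γ j + γ j * β * β + (γ (j - 1) + γ (j + 1)) * β := by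
      field_simp at h
      linarith
    nlinarith [mul_nonneg (le_of_lt (hpos j)) (sq_nonneg (β - 1)), hpos j, hβ]
  have monot : ∀ j : ℤ, γ (j + 1) - γ j ≤ γ j - γ (j - 1) := fun j => by linarith [key j]
  -- the difference is zero everywhere
  have hd0 : ∀ j : ℤ, γ (j + 1) = γ j := by
    intro j0
    by_contra hne
    set ε : ℝ := γ (j0 + 1) - γ j0 with hε
    rcases lt_or_gt_of_ne hne with hlt | hgt
    · -- ε < 0 : go right
      have hεneg : ε < 0 := by simp [hε]; linarith
      have claim : ∀ n : ℕ, γ (j0 + 1 + n) - γ (j0 + n) ≤ ε ∧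
          γ (j0 + 1 + n) ≤ γ (j0 + 1) + n * ε := by
        intro n
        induction n with
        | zero => simp; linarith
        | succ n ih =>
          obtain ⟨h1, h2⟩ := ih
          have hc := monot (j0 + 1 + n)
          have e0 : (j0 + 1 + (n : ℤ)) - 1 = j0 + n := by ring
          rw [e0] at hc
          have e1 : j0 + 1 + ((n : ℤ) + 1) = (j0 + 1 + n) + 1 := by ring
          have e2 : j0 + ((n : ℤ) + 1) = j0 + 1 + n := by ring
          push_cast
          rw [e1, e2]
          constructor
          · linarith
          · linarith
      obtain ⟨n, hn⟩ := exists_nat_gt (γ (j0 + 1) / (-ε))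
      have hn' : γ (j0 + 1) < n * (-ε) := (div_lt_iff₀ (by linarith)).mp hn
      have := (claim n).2
      have := hpos (j0 + 1 + n)
      linarith
    · -- ε > 0 : go left
      have hεpos : 0 < ε := by simp [hε]; linarith
      have claim : ∀ n : ℕ, ε ≤ γ (j0 + 1 - n) - γ (j0 - n) ∧
          γ (j0 + 1 - n) ≤ γ (j0 + 1) - n * ε := by
        intro n
        induction n with
        | zero => simp; linarith
        | succ n ih =>
          obtain ⟨h1, h2⟩ := ih
          have hc := monot (j0 - n)
          have e0 : (j0 - (n : ℤ)) + 1 = j0 + 1 - n := by ring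
          rw [e0] at hc
          have e1 : j0 + 1 - ((n : ℤ) + 1) = j0 - n := by ring
          have e2 : j0 - ((n : ℤ) + 1) = (j0 - n) - 1 := by ring
          push_cast
          rw [e1, e2]
          constructor
          · linarith
          · linarith
      obtain ⟨n, hn⟩ := exists_nat_gt (γ (j0 + 1) / ε)
      have hn' : γ (j0 + 1) < n * ε := (div_lt_iff₀ hεpos).mp hn
      have := (claim n).2
      have := hpos (j0 + 1 - n)
      linarith
  -- γ is constant
  have hconst0 : ∀ j : ℤ, γ j = γ 0 := by
    intro j
    induction j using Int.induction_on with
    | zero => rfl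
    | succ n ih => rw [hd0 n, ih]
    | pred n ih =>
      have := hd0 (-(n : ℤ) - 1)
      rw [show (-(n : ℤ) - 1 + 1) = -(n : ℤ) by ring] at this
      rw [← this]
      exact ih
  have hconst : ∀ j k : ℤ, γ j = γ k := fun j k => by rw [hconst0 j, hconst0 k]
  refine ⟨?_, hconst⟩
  -- β = 1
  have h := heq 0
  rw [hconst (0 - 1) 0, hconst (0 + 1) 0] at h
  have hq : γ 0 * (β - 1) ^ 2 = 0 := by
    field_simp at h
    nlinarith [hpos 0, hβ]
  rcases mul_eq_zero.mp hq with h0 | h0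
  · exact absurd h0 (ne_of_gt (hpos 0))
  · have := pow_eq_zero_iff (n := 2) (by norm_num) |>.mp h0
    linarith [sub_eq_zero.mp this]
end

section
/- There exists a constant a > 0 such that for every continuous positive function f : ℝ² → ℝ with the unit-circle mean value property and every z ∈ ℝ², f(z) ≥ a · ∫_{S(z)} f(w) dw, where S(z) = {w ∈ ℝ² : 1/2 ≤ |w − z| ≤ 3/2} is the closed annulus of inner radius 1/2 and outer radius 3/2 centered at z, and the integral is with respect to two-dimensional Lebesgue measure. -/
open Real MeasureTheory
open Set intervalIntegral


noncomputable def cAvg (f : ℝ × ℝ → ℝ) (z : ℝ × ℝ) (r : ℝ) : ℝ :=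
  ∫ t in (0:ℝ)..(2*π), f (z.1 + r * Real.cos t, z.2 + r * Real.sin t)

lemma polar_annulus (f : ℝ × ℝ → ℝ) (hf : Continuous f) (z : ℝ × ℝ) :
    (∫ w in {w : ℝ × ℝ | (1 / 2 : ℝ) ^ 2 ≤ (w.1 - z.1) ^ 2 + (w.2 - z.2) ^ 2 ∧
        (w.1 - z.1) ^ 2 + (w.2 - z.2) ^ 2 ≤ (3 / 2 : ℝ) ^ 2}, f w)
      = ∫ r in (1/2:ℝ)..(3/2), r * cAvg f z r := by
  set S : Set (ℝ × ℝ) := {w : ℝ × ℝ | (1 / 2 : ℝ) ^ 2 ≤ (w.1 - z.1) ^ 2 + (w.2 - z.2) ^ 2 ∧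
        (w.1 - z.1) ^ 2 + (w.2 - z.2) ^ 2 ≤ (3 / 2 : ℝ) ^ 2} with hSdef
  have hS : MeasurableSet S := by
    have h1 : Measurable fun w : ℝ × ℝ => (w.1 - z.1) ^ 2 + (w.2 - z.2) ^ 2 := by measurability
    exact (measurableSet_le measurable_const h1).inter (measurableSet_le h1 measurable_const)
  set g : ℝ × ℝ → ℝ := fun w => f (z.1 + w.1, z.2 + w.2) with hgdef
  set S₀ : Set (ℝ × ℝ) := {w : ℝ × ℝ | (1 / 2 : ℝ) ^ 2 ≤ w.1 ^ 2 + w.2 ^ 2 ∧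
        w.1 ^ 2 + w.2 ^ 2 ≤ (3 / 2 : ℝ) ^ 2} with hS₀def
  have key : ∀ w : ℝ × ℝ, S.indicator f (z + w) = S₀.indicator g w := by
    intro w
    have hmem : z + w ∈ S ↔ w ∈ S₀ := by
      simp only [hSdef, hS₀def, mem_setOf_eq, Prod.fst_add, Prod.snd_add]
      ring_nf
    by_cases h : w ∈ S₀
    · rw [indicator_of_mem (hmem.mpr h), indicator_of_mem h]
      rfl
    · rw [indicator_of_notMem (fun hc => h (hmem.mp hc)), indicator_of_notMem h]
  have step1 : (∫ w in S, f w) = ∫ w, S₀.indicator g w := by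
    rw [← MeasureTheory.integral_indicator hS]
    rw [← integral_add_left_eq_self (S.indicator f) z]
    exact integral_congr_ae (Filter.Eventually.of_forall key)
  rw [step1]
  -- polar coordinates
  rw [← integral_comp_polarCoord_symm]
  set K : Set (ℝ × ℝ) := Icc (1/2:ℝ) (3/2) ×ˢ Ioo (-π) π with hKdef
  set H : ℝ × ℝ → ℝ := fun p => p.1 * g (p.1 * cos p.2, p.1 * sin p.2) with hHdef
  have htarget : polarCoord.target = Ioi (0:ℝ) ×ˢ Ioo (-π) π := rfl
  have hKsub : K ⊆ polarCoord.target := by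
    rw [htarget]
    intro p hp
    exact ⟨lt_of_lt_of_le (by norm_num) hp.1.1, hp.2⟩
  have hKm : MeasurableSet K := measurableSet_Icc.prod measurableSet_Ioo
  have congr1 : ∀ p ∈ polarCoord.target, p.1 • (S₀.indicator g) (polarCoord.symm p)
      = K.indicator H p := by
    rintro ⟨r, θ⟩ hp
    rw [htarget] at hp
    have hr : (0:ℝ) < r := hp.1
    have hsymm : polarCoord.symm (r, θ) = (r * cos θ, r * sin θ) := rfl
    have hnorm : (r * cos θ)^2 + (r * sin θ)^2 = r^2 := by
      have := sin_sq_add_cos_sq θ; nlinarith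
    by_cases h : r ∈ Icc (1/2:ℝ) (3/2)
    · have h1 : polarCoord.symm (r, θ) ∈ S₀ := by
        rw [hsymm, hS₀def]
        constructor <;> simp only [mem_setOf_eq] <;> rw [hnorm] <;> nlinarith [h.1, h.2]
      have h2 : (r, θ) ∈ K := ⟨h, hp.2⟩
      rw [indicator_of_mem h1, indicator_of_mem h2]
      rfl
    · have h1 : polarCoord.symm (r, θ) ∉ S₀ := by
        rw [hsymm, hS₀def]
        simp only [mem_setOf_eq, mem_Icc, not_and_or, not_le] at h ⊢
        rcases h with h | h
        · left; rw [hnorm]; nlinarith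
        · right; rw [hnorm]; nlinarith
      have h2 : (r, θ) ∉ K := fun hc => h hc.1
      rw [indicator_of_notMem h1, indicator_of_notMem h2, smul_zero]
  rw [setIntegral_congr_fun (polarCoord.open_target.measurableSet) congr1]
  rw [setIntegral_indicator hKm, inter_eq_self_of_subset_right hKsub]
  -- Fubini on the product set
  have hg : Continuous g := by fun_prop
  have hH : Continuous H := by fun_prop
  have hInt : IntegrableOn H (Icc (1/2:ℝ) (3/2) ×ˢ Ioo (-π) π) (volume.prod volume) := by
    have hcomp : IsCompact (Icc (1/2:ℝ) (3/2) ×ˢ Icc (-π) π) :=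
      isCompact_Icc.prod isCompact_Icc
    have : IntegrableOn H (Icc (1/2:ℝ) (3/2) ×ˢ Icc (-π) π) (volume.prod volume) := by
      rw [← Measure.volume_eq_prod]
      exact hH.continuousOn.integrableOn_compact hcomp
    exact this.mono_set (prod_mono_right Ioo_subset_Icc_self)
  rw [hKdef, Measure.volume_eq_prod ℝ ℝ, setIntegral_prod H hInt]
  have inner : ∀ r : ℝ, (∫ θ in Ioo (-π) π, H (r, θ)) = r * cAvg f z r := by
    intro r
    have per : Function.Periodic (fun θ => f (z.1 + r * cos θ, z.2 + r * sin θ)) (2*π) := by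
      intro θ; simp [Real.cos_add_two_pi, Real.sin_add_two_pi]
    have h2 := per.intervalIntegral_add_eq (-π) 0
    rw [show -π + 2*π = π by ring, zero_add] at h2
    have hle : (-π : ℝ) ≤ π := by linarith [pi_pos]
    calc (∫ θ in Ioo (-π) π, H (r, θ))
        = ∫ θ in Ioc (-π) π, H (r, θ) := (integral_Ioc_eq_integral_Ioo).symm
      _ = ∫ θ in (-π)..π, H (r, θ) := (intervalIntegral.integral_of_le hle).symm
      _ = r * ∫ θ in (-π)..π, f (z.1 + r * cos θ, z.2 + r * sin θ) := by
          rw [← intervalIntegral.integral_const_mul]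
      _ = r * cAvg f z r := by rw [h2]; rfl
  simp_rw [inner]
  rw [integral_Icc_eq_integral_Ioc, ← intervalIntegral.integral_of_le (by norm_num : (1/2:ℝ) ≤ 3/2)]


lemma trig1 (t v : ℝ) : Real.cos t + Real.cos (t + 2*v) = 2 * Real.cos v * Real.cos (t + v) := by
  have h1 := Real.cos_add (t+v) v
  have h2 := Real.cos_sub (t+v) v
  have h3 : t + v - v = t := by ring
  rw [h3] at h2
  rw [show t + 2*v = t + v + v by ring, h1, h2]; ring

lemma trig2 (t v : ℝ) : Real.sin t + Real.sin (t + 2*v) = 2 * Real.cos v * Real.sin (t + v) := by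
  have h1 := Real.sin_add (t+v) v
  have h2 := Real.sin_sub (t+v) v
  have h3 : t + v - v = t := by ring
  rw [h3] at h2
  rw [show t + 2*v = t + v + v by ring, h1, h2]; ring

lemma mvp_lower (f : ℝ × ℝ → ℝ) (hf : Continuous f) (hpos : ∀ x, 0 < f x)
    (hmvp : ∀ P : ℝ × ℝ, f P = (1 / (2 * π)) *
      ∫ t in (0 : ℝ)..(2 * π), f (P.1 + Real.cos t, P.2 + Real.sin t))
    (z : ℝ × ℝ) :
    (1/(2*π^2)) * ∫ v in arccos (3/4)..arccos (1/4), cAvg f z (2 * Real.cos v) ≤ f z := by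
  have hπ := Real.pi_pos
  set F : ℝ → ℝ → ℝ := fun t v =>
    f (z.1 + 2 * Real.cos v * Real.cos (t + v), z.2 + 2 * Real.cos v * Real.sin (t + v)) with hFdef
  -- Step C : inner reparametrization
  have stepC : ∀ t : ℝ, (∫ s in (0:ℝ)..(2*π), f (z.1 + Real.cos t + Real.cos s,
      z.2 + Real.sin t + Real.sin s)) = 2 * ∫ v in (0:ℝ)..π, F t v := by
    intro t
    set g : ℝ → ℝ := fun s => f (z.1 + Real.cos t + Real.cos s, z.2 + Real.sin t + Real.sin s)
      with hgdef
    have per : Function.Periodic g (2*π) := by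
      intro s; simp [hgdef, Real.cos_add_two_pi, Real.sin_add_two_pi]
    have h1 := per.intervalIntegral_add_eq 0 t
    rw [zero_add] at h1
    have h2 := intervalIntegral.smul_integral_comp_mul_add (f := g) (a := 0) (b := π) 2 t
    rw [mul_zero, zero_add] at h2
    have h3 : ∀ v, g (2 * v + t) = F t v := by
      intro v
      simp only [hgdef, hFdef]
      have e1 : z.1 + Real.cos t + Real.cos (2*v + t) = z.1 + 2 * Real.cos v * Real.cos (t + v) := by
        rw [show 2*v + t = t + 2*v by ring, ← trig1 t v]; ring
      have e2 : z.2 + Real.sin t + Real.sin (2*v + t) = z.2 + 2 * Real.cos v * Real.sin (t + v) := by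
        rw [show 2*v + t = t + 2*v by ring, ← trig2 t v]; ring
      rw [e1, e2]
    calc (∫ s in (0:ℝ)..(2*π), g s) = ∫ s in t..(t + 2*π), g s := h1
      _ = ∫ s in t..(2*π + t), g s := by rw [add_comm t (2*π)]
      _ = (2:ℝ) • ∫ v in (0:ℝ)..π, g (2 * v + t) := by rw [h2, show 2*π + t = 2*π + t from rfl]
      _ = 2 * ∫ v in (0:ℝ)..π, F t v := by
          rw [smul_eq_mul]
          congr 1
          exact intervalIntegral.integral_congr (fun v _ => h3 v)
  -- Step D : double integral formula
  have stepD : f z = (1/(2*π*π)) * ∫ t in (0:ℝ)..(2*π), ∫ v in (0:ℝ)..π, F t v := by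
    have hA := hmvp z
    have hB : ∀ t : ℝ, f (z.1 + Real.cos t, z.2 + Real.sin t)
        = (1/(2*π)) * (2 * ∫ v in (0:ℝ)..π, F t v) := by
      intro t
      rw [hmvp (z.1 + Real.cos t, z.2 + Real.sin t)]
      simp only
      rw [← stepC t]
    rw [hA, intervalIntegral.integral_congr (fun t _ => hB t),
      intervalIntegral.integral_const_mul]
    field_simp
    ring_nf
    rw [intervalIntegral.integral_mul_const]
  have hFc : Continuous (Function.uncurry F) := by
    simp only [hFdef, Function.uncurry]
    fun_prop
  have h2π : (0:ℝ) ≤ 2*π := by linarith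
  have hIprod : Integrable (Function.uncurry F)
      ((volume.restrict (Ioc (0:ℝ) (2*π))).prod (volume.restrict (Ioc (0:ℝ) π))) := by
    rw [Measure.prod_restrict]
    have hcomp : IsCompact (Icc (0:ℝ) (2*π) ×ˢ Icc (0:ℝ) π) := isCompact_Icc.prod isCompact_Icc
    exact (hFc.continuousOn.integrableOn_compact hcomp).mono_set
      (prod_mono Ioc_subset_Icc_self Ioc_subset_Icc_self)
  have hswap : (∫ t in (0:ℝ)..(2*π), ∫ v in (0:ℝ)..π, F t v)
      = ∫ v in (0:ℝ)..π, ∫ t in (0:ℝ)..(2*π), F t v := by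
    simp_rw [intervalIntegral.integral_of_le h2π, intervalIntegral.integral_of_le hπ.le]
    exact integral_integral_swap hIprod
  have stepG : ∀ v : ℝ, (∫ t in (0:ℝ)..(2*π), F t v) = cAvg f z (2 * Real.cos v) := by
    intro v
    set h : ℝ → ℝ := fun t =>
      f (z.1 + 2 * Real.cos v * Real.cos t, z.2 + 2 * Real.cos v * Real.sin t) with hhdef
    have per : Function.Periodic h (2*π) := by
      intro t; simp [hhdef, Real.cos_add_two_pi, Real.sin_add_two_pi]
    have h1 := intervalIntegral.integral_comp_add_right (a := (0:ℝ)) (b := 2*π) (f := h) v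
    have h2 := per.intervalIntegral_add_eq v 0
    rw [zero_add] at h2
    calc (∫ t in (0:ℝ)..(2*π), F t v) = ∫ t in (0:ℝ)..(2*π), h (t + v) := rfl
      _ = ∫ x in (0:ℝ)+v..(2*π+v), h x := h1
      _ = ∫ x in v..(v+2*π), h x := by rw [zero_add, add_comm (2*π) v]
      _ = ∫ x in (0:ℝ)..(2*π), h x := h2
      _ = cAvg f z (2 * Real.cos v) := rfl
  have hAnn : ∀ r, 0 ≤ cAvg f z r :=
    fun r => intervalIntegral.integral_nonneg h2π (fun t _ => (hpos _).le)
  have hA : Continuous (cAvg f z) := by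
    unfold cAvg
    exact continuous_parametric_intervalIntegral_of_continuous' (by fun_prop) _ _
  have hG : Continuous (fun v : ℝ => cAvg f z (2 * Real.cos v)) := by fun_prop
  have hv1 : 0 ≤ arccos (3/4) := Real.arccos_nonneg _
  have hv2 : arccos (1/4) ≤ π := Real.arccos_le_pi _
  have hv12 : arccos (3/4) ≤ arccos (1/4) :=
    (Real.strictAntiOn_arccos (by constructor <;> norm_num) (by constructor <;> norm_num)
      (by norm_num)).le
  have hrestrict : (∫ v in arccos (3/4)..arccos (1/4), cAvg f z (2 * Real.cos v))
      ≤ ∫ v in (0:ℝ)..π, cAvg f z (2 * Real.cos v) := by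
    rw [intervalIntegral.integral_of_le hv12, intervalIntegral.integral_of_le hπ.le]
    apply setIntegral_mono_set
    · exact hG.integrableOn_Ioc
    · exact Filter.Eventually.of_forall (fun v => hAnn _)
    · exact HasSubset.Subset.eventuallyLE (Ioc_subset_Ioc hv1 hv2)
  have hfz : f z = (1/(2*π^2)) * ∫ v in (0:ℝ)..π, cAvg f z (2 * Real.cos v) := by
    rw [stepD, hswap, intervalIntegral.integral_congr (fun v _ => stepG v),
      show (1:ℝ)/(2*π*π) = 1/(2*π^2) by ring]
  rw [hfz]
  exact mul_le_mul_of_nonneg_left hrestrict (by positivity)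

lemma cAvg_nonneg (f : ℝ × ℝ → ℝ) (hpos : ∀ x, 0 < f x) (z : ℝ × ℝ) (r : ℝ) :
    0 ≤ cAvg f z r :=
  intervalIntegral.integral_nonneg (by linarith [Real.pi_pos]) (fun t _ => (hpos _).le)

lemma cAvg_continuous (f : ℝ × ℝ → ℝ) (hf : Continuous f) (z : ℝ × ℝ) :
    Continuous (cAvg f z) := by
  unfold cAvg
  exact continuous_parametric_intervalIntegral_of_continuous' (by fun_prop) _ _

lemma subst_bound (f : ℝ × ℝ → ℝ) (hf : Continuous f) (hpos : ∀ x, 0 < f x) (z : ℝ × ℝ) :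
    (∫ r in (1/2:ℝ)..(3/2), cAvg f z r)
      ≤ 2 * ∫ v in arccos (3/4)..arccos (1/4), cAvg f z (2 * Real.cos v) := by
  have hπ := Real.pi_pos
  have hA := cAvg_continuous f hf z
  have hAnn := cAvg_nonneg f hpos z
  have hv12 : arccos (3/4) ≤ arccos (1/4) :=
    (Real.strictAntiOn_arccos (by constructor <;> norm_num) (by constructor <;> norm_num)
      (by norm_num)).le
  have hderiv : ∀ x ∈ uIcc (arccos (3/4)) (arccos (1/4)),
      HasDerivAt (fun v : ℝ => 2 * Real.cos v) (-(2 * Real.sin x)) x := by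
    intro x _
    have := (Real.hasDerivAt_cos x).const_mul (2:ℝ)
    rw [show -(2 * Real.sin x) = 2 * -Real.sin x by ring]
    exact this
  have hsub := intervalIntegral.integral_comp_smul_deriv hderiv (by fun_prop) hA
  have e1 : 2 * Real.cos (arccos (3/4)) = (3/2:ℝ) := by
    rw [Real.cos_arccos (by norm_num) (by norm_num)]; norm_num
  have e2 : 2 * Real.cos (arccos (1/4)) = (1/2:ℝ) := by
    rw [Real.cos_arccos (by norm_num) (by norm_num)]; norm_num
  rw [e1, e2] at hsub
  have key : (∫ r in (1/2:ℝ)..(3/2), cAvg f z r)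
      = ∫ v in arccos (3/4)..arccos (1/4), 2 * Real.sin v * cAvg f z (2 * Real.cos v) := by
    have lhs : (∫ v in arccos (3/4)..arccos (1/4),
        (-(2 * Real.sin v)) • (cAvg f z ∘ fun v => 2 * Real.cos v) v)
        = -∫ v in arccos (3/4)..arccos (1/4), 2 * Real.sin v * cAvg f z (2 * Real.cos v) := by
      rw [← intervalIntegral.integral_neg]
      refine intervalIntegral.integral_congr (fun v _ => ?_)
      simp only [Function.comp, smul_eq_mul]
      ring
    rw [lhs] at hsub
    have h5 : (∫ r in (3/2:ℝ)..(1/2), cAvg f z r) = -∫ r in (1/2:ℝ)..(3/2), cAvg f z r :=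
      intervalIntegral.integral_symm _ _
    rw [h5] at hsub
    linarith
  rw [key]
  have ptwise : ∀ v ∈ Icc (arccos (3/4)) (arccos (1/4)),
      2 * Real.sin v * cAvg f z (2 * Real.cos v) ≤ 2 * cAvg f z (2 * Real.cos v) := by
    intro v _
    have h1 : 2 * Real.sin v ≤ 2 := by linarith [Real.sin_le_one v]
    exact mul_le_mul_of_nonneg_right h1 (hAnn _)
  calc (∫ v in arccos (3/4)..arccos (1/4), 2 * Real.sin v * cAvg f z (2 * Real.cos v))
      ≤ ∫ v in arccos (3/4)..arccos (1/4), 2 * cAvg f z (2 * Real.cos v) := by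
        apply intervalIntegral.integral_mono_on hv12 _ _ ptwise
        · exact (by fun_prop : Continuous fun v => 2 * Real.sin v * cAvg f z (2 * Real.cos v)).intervalIntegrable _ _
        · exact (by fun_prop : Continuous fun v => 2 * cAvg f z (2 * Real.cos v)).intervalIntegrable _ _
    _ = 2 * ∫ v in arccos (3/4)..arccos (1/4), cAvg f z (2 * Real.cos v) := by
        rw [intervalIntegral.integral_const_mul]



/-- There is a constant `a > 0` such that every positive continuous function on the
plane with the unit-circle mean value property satisfies
`f z ≥ a ∫_{S(z)} f`, where `S(z)` is the closed (Euclidean) annulus of radii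
`1/2 ≤ |w - z| ≤ 3/2` centered at `z` and the integral is with respect to
two-dimensional Lebesgue measure. -/
theorem mvp_annulus_lower_bound :
    ∃ a : ℝ, 0 < a ∧ ∀ f : ℝ × ℝ → ℝ, Continuous f → (∀ x : ℝ × ℝ, 0 < f x) →
      (∀ P : ℝ × ℝ, f P = (1 / (2 * π)) *
        ∫ t in (0 : ℝ)..(2 * π), f (P.1 + Real.cos t, P.2 + Real.sin t)) →
      ∀ z : ℝ × ℝ,
        a * (∫ w in {w : ℝ × ℝ | (1 / 2 : ℝ) ^ 2 ≤ (w.1 - z.1) ^ 2 + (w.2 - z.2) ^ 2 ∧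
              (w.1 - z.1) ^ 2 + (w.2 - z.2) ^ 2 ≤ (3 / 2 : ℝ) ^ 2}, f w) ≤ f z := by
  have hπ := Real.pi_pos
  refine ⟨1/(6*π^2), by positivity, ?_⟩
  intro f hf hpos hmvp z
  have h1 := polar_annulus f hf z
  have h2 := mvp_lower f hf hpos hmvp z
  have h3 := subst_bound f hf hpos z
  have hAnn := cAvg_nonneg f hpos z
  have hA := cAvg_continuous f hf z
  have h4 : (∫ r in (1/2:ℝ)..(3/2), r * cAvg f z r)
      ≤ (3/2) * ∫ r in (1/2:ℝ)..(3/2), cAvg f z r := by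
    have : (3/2:ℝ) * ∫ r in (1/2:ℝ)..(3/2), cAvg f z r
        = ∫ r in (1/2:ℝ)..(3/2), (3/2) * cAvg f z r := by
      rw [intervalIntegral.integral_const_mul]
    rw [this]
    apply intervalIntegral.integral_mono_on (by norm_num)
    · exact (by fun_prop : Continuous fun r : ℝ => r * cAvg f z r).intervalIntegrable _ _
    · exact (by fun_prop : Continuous fun r : ℝ => (3/2) * cAvg f z r).intervalIntegrable _ _
    · intro r hr
      exact mul_le_mul_of_nonneg_right hr.2 (hAnn _)
  rw [h1]
  set Iv := ∫ v in arccos (3/4)..arccos (1/4), cAvg f z (2 * Real.cos v) with hIv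
  have hc : (0:ℝ) < 1/(6*π^2) := by positivity
  calc (1/(6*π^2)) * ∫ r in (1/2:ℝ)..(3/2), r * cAvg f z r
      ≤ (1/(6*π^2)) * ((3/2) * ∫ r in (1/2:ℝ)..(3/2), cAvg f z r) :=
        mul_le_mul_of_nonneg_left h4 hc.le
    _ ≤ (1/(6*π^2)) * ((3/2) * (2 * Iv)) := by
        apply mul_le_mul_of_nonneg_left _ hc.le
        apply mul_le_mul_of_nonneg_left h3 (by norm_num)
    _ = (1/(2*π^2)) * Iv := by ring
    _ ≤ f z := h2
end
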